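/- arXiv:math/0111188 — 5 statements merged into one kernel-verified Lean document; each statement's English description precedes it below -/
import Mathlib

section
/- Let r ≥ 3 and let d, m_1, …, m_r be non-negative integers with m_1 ≥ m_2 ≥ ⋯ ≥ m_r. If d² − m_1² − ⋯ − m_r² = −1 and −3d + m_1 + ⋯ + m_r = −1, then d < m_1 + m_2 + m_3. -/
/-!
Put `c = m₃`. Every `mᵢ` with `i ≥ 3` lies in `[0, c]`, so `mᵢ (mᵢ - c) ≤ 0` and
`∑ mᵢ (mᵢ - c) ≤ m₁ (m₁ - c) + m₂ (m₂ - c)`. The two equations turn the left side into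
`d² + 1 - c (3d - 1)`, which grows with `d` past `3c / 2`; at `d = m₁ + m₂ + m₃` the
inequality already reads `2 (m₁ m₂ - c²) + c + 1 ≤ 0`, which is impossible.
-/

open Finset

theorem sum_mul_sub_le_sum_filter_lt {ι : Type*} [Fintype ι] [LinearOrder ι] {m : ι → ℕ}
    (hm : Antitone m) (k : ι) :
    ∑ i, (m i : ℤ) * (m i - m k) ≤ ∑ i with i < k, (m i : ℤ) * (m i - m k) := by
  rw [← sum_filter_add_sum_filter_not univ (· < k)]
  refine add_le_of_nonpos_right (sum_nonpos fun i hi => ?_)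
  have hki : m i ≤ m k := hm (not_lt.mp (mem_filter.mp hi).2)
  exact mul_nonpos_of_nonneg_of_nonpos (by positivity) (by omega)

theorem filter_lt_two_eq (n : ℕ) : ({i | i < 2} : Finset (Fin (n + 3))) = {0, 1} := by
  ext ⟨i, hi⟩
  simp [Fin.lt_def, Fin.ext_iff, Nat.mod_eq_of_lt (by omega : 2 < n + 3)]
  omega

theorem lt_add_add_of_sq_add_one_le {a b c d : ℤ} (hc : 0 ≤ c) (hcb : c ≤ b) (hba : b ≤ a)
    (h : d ^ 2 + 1 - c * (3 * d - 1) ≤ a * (a - c) + b * (b - c)) : d < a + b + c := by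
  by_contra! hd
  have hab : c ^ 2 ≤ a * b := by nlinarith
  have hgrowth : (a + b + c) ^ 2 - 3 * c * (a + b + c) ≤ d ^ 2 - 3 * c * d := by
    nlinarith [mul_nonneg (sub_nonneg.mpr hd) (by linarith : 0 ≤ d + (a + b + c) - 3 * c)]
  linarith

/-- **Noether's inequality.** Let `r ≥ 3` and let `d, m_1, …, m_r` be non-negative
integers with `m_1 ≥ m_2 ≥ ⋯ ≥ m_r` (here `m_i` is `m ⟨i-1, _⟩`). If
`d² − m_1² − ⋯ − m_r² = −1` and `−3d + m_1 + ⋯ + m_r = −1`, then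
`d < m_1 + m_2 + m_3`. -/
theorem noether_inequality (r : ℕ) (hr : 3 ≤ r) (d : ℕ) (m : Fin r → ℕ)
    (hmono : ∀ i j : Fin r, i ≤ j → m j ≤ m i)
    (h1 : (d : ℤ) ^ 2 - ∑ i, (m i : ℤ) ^ 2 = -1)
    (h2 : -3 * (d : ℤ) + ∑ i, (m i : ℤ) = -1) :
    (d : ℤ) < (m ⟨0, by omega⟩ : ℤ) + (m ⟨1, by omega⟩ : ℤ) + (m ⟨2, by omega⟩ : ℤ) := by
  obtain ⟨n, rfl⟩ : ∃ n, r = n + 3 := ⟨r - 3, by omega⟩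
  have hanti : Antitone m := hmono
  have key := sum_mul_sub_le_sum_filter_lt hanti 2
  rw [filter_lt_two_eq, sum_pair (by simp)] at key
  have hexpand : ∑ i, (m i : ℤ) * (m i - m 2) = ∑ i, (m i : ℤ) ^ 2 - m 2 * ∑ i, (m i : ℤ) := by
    rw [mul_sum, ← sum_sub_distrib]
    exact sum_congr rfl fun i _ => by ring
  refine lt_add_add_of_sq_add_one_le (by positivity) (mod_cast hanti (by simp [Fin.le_def]))
    (mod_cast hanti (by simp)) ?_
  have hsq : ∑ i, (m i : ℤ) ^ 2 = d ^ 2 + 1 := by linarith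
  have hsum : ∑ i, (m i : ℤ) = 3 * d - 1 := by linarith
  rwa [hexpand, hsq, hsum] at key
end

section
/- A class H = dE_0 − m_1E_1 − ⋯ − m_rE_r in Pic_r is E-standard if and only if there exist non-negative integers a, b, c, α_3, …, α_r such that H = aE_0 + b(E_0 − E_1) + c(2E_0 − E_1 − E_2) + Σ_{i=3}^{r} α_i C_i. -/
open Finset

/-- The intersection form on `Pic_r = ℤ^{r+1}`: the symmetric bilinear form with
`E_0·E_0 = 1`, `E_i·E_i = -1` for `1 ≤ i ≤ r`, and `E_i·E_j = 0` for `i ≠ j`. -/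
def inter {r : ℕ} (x y : Fin (r + 1) → ℤ) : ℤ :=
  2 * (x 0 * y 0) - ∑ i, x i * y i

/-- The standard basis class `E_i` of `Pic_r`. -/
def Eb (r : ℕ) (i : Fin (r + 1)) : Fin (r + 1) → ℤ :=
  fun j => if j = i then 1 else 0

/-- The canonical class `K = -3E_0 + E_1 + ⋯ + E_r`. -/
def Kc (r : ℕ) : Fin (r + 1) → ℤ :=
  fun j => if j = 0 then -3 else 1

/-- The roots `r_0 = E_0 - E_1 - E_2 - E_3` and `r_i = E_i - E_{i+1}` for `1 ≤ i ≤ r-1`. -/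
def root (r : ℕ) (i : Fin r) : Fin (r + 1) → ℤ :=
  if (i : ℕ) = 0 then Eb r 0 - Eb r 1 - Eb r 2 - Eb r 3
  else Eb r i.castSucc - Eb r i.succ

/-- The reflection `σ_v(x) = x + (x·v) v` in the root `v`. -/
def reflect {r : ℕ} (v x : Fin (r + 1) → ℤ) : Fin (r + 1) → ℤ :=
  x + inter x v • v

/-- Membership in the Weyl group `W_r`: the group of transformations of `Pic_r`
generated by the reflections `σ_i(x) = x + (x·r_i) r_i`, `0 ≤ i ≤ r-1` (since each
generator is an involution, the submonoid generated coincides with the subgroup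
generated). -/
def InWeyl (r : ℕ) (f : (Fin (r + 1) → ℤ) → (Fin (r + 1) → ℤ)) : Prop :=
  f ∈ Submonoid.closure
    { g : Function.End (Fin (r + 1) → ℤ) | ∃ i : Fin r, g = reflect (root r i) }

/-- `H = dE_0 - m_1E_1 - ⋯ - m_rE_r` (so `d = H 0`, `m_i = -H i`) is E-standard:
`d ≥ m_1 ≥ ⋯ ≥ m_r ≥ 0`, `d ≥ m_1 + m_2` and `d ≥ m_1 + m_2 + m_3`. -/
def EStandard (r : ℕ) (H : Fin (r + 1) → ℤ) : Prop :=
  -H 1 ≤ H 0 ∧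
  (∀ i j : Fin (r + 1), 1 ≤ (i : ℕ) → i ≤ j → -H j ≤ -H i) ∧
  0 ≤ -H (Fin.last r) ∧
  -H 1 + -H 2 ≤ H 0 ∧
  -H 1 + -H 2 + -H 3 ≤ H 0

/-- `H = dE_0 - m_1E_1 - ⋯ - m_rE_r` is E-semi-standard: `d ≥ 0`,
`d ≥ m_1 ≥ ⋯ ≥ m_r` and `d ≥ m_1 + m_2 + m_3` (the `m_i` may be negative). -/
def ESemiStandard (r : ℕ) (H : Fin (r + 1) → ℤ) : Prop :=
  0 ≤ H 0 ∧
  -H 1 ≤ H 0 ∧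
  (∀ i j : Fin (r + 1), 1 ≤ (i : ℕ) → i ≤ j → -H j ≤ -H i) ∧
  -H 1 + -H 2 + -H 3 ≤ H 0

/-- A class is standard if its image under some element of `W_r` is E-standard. -/
def Standard (r : ℕ) (H : Fin (r + 1) → ℤ) : Prop :=
  ∃ f, InWeyl r f ∧ EStandard r (f H)

/-- A class is semi-standard if its image under some element of `W_r` is
E-semi-standard. -/
def SemiStandard (r : ℕ) (H : Fin (r + 1) → ℤ) : Prop :=
  ∃ f, InWeyl r f ∧ ESemiStandard r (f H)

/-- An exceptional class: an element of the `W_r`-orbit of `E_r`. -/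
def Exceptional (r : ℕ) (x : Fin (r + 1) → ℤ) : Prop :=
  ∃ f, InWeyl r f ∧ x = f (Eb r (Fin.last r))

/-- A line class: an element of the `W_r`-orbit of `E_0`. -/
def LineClass (r : ℕ) (x : Fin (r + 1) → ℤ) : Prop :=
  ∃ f, InWeyl r f ∧ x = f (Eb r 0)

/-- A pencil class: an element of the `W_r`-orbit of `E_0 - E_1`. -/
def PencilClass (r : ℕ) (x : Fin (r + 1) → ℤ) : Prop :=
  ∃ f, InWeyl r f ∧ x = f (Eb r 0 - Eb r 1)

/-- The elliptic generating class `C_i = 3E_0 - E_1 - ⋯ - E_i`. -/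
def Cc (r : ℕ) (i : Fin (r + 1)) : Fin (r + 1) → ℤ :=
  fun j => if j = 0 then 3 else if j ≤ i then -1 else 0

/-- The Euler characteristic `χ(H) = 1 + (H·H - H·K)/2`. -/
def chi (r : ℕ) (H : Fin (r + 1) → ℤ) : ℤ :=
  1 + (inter H H - inter H (Kc r)) / 2

/-!
With `m_j = -H j`, the generators `E_0 - E_1`, `2E_0 - E_1 - E_2` and `C_i` have multiplicity
one at `E_j` (`j ≥ 1`) when `j ≤ 1`, `j ≤ 2` and `j ≤ i` respectively, and zero otherwise. So a
nonnegative combination has nonincreasing nonnegative multiplicities, and the inequalities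
involving `d = a + b + 2c + 3 Σ α_i` are immediate. Conversely, an E-standard class is the
combination with `b = m_1 - m_2`, `c = m_2 - m_3`, `α_i = m_i - m_{i+1}` (where `m_{r+1} = 0`)
and `a = d - m_1 - m_2 - m_3`: all are nonnegative and the sums of the `α_i` telescope.
-/

namespace Pic

variable {r : ℕ}

lemma val_one_two_three (hr : 3 ≤ r) :
    ((1 : Fin (r + 1)) : ℕ) = 1 ∧ ((2 : Fin (r + 1)) : ℕ) = 2 ∧
      ((3 : Fin (r + 1)) : ℕ) = 3 := by
  simp only [Fin.coe_ofNat_eq_mod]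
  exact ⟨Nat.mod_eq_of_lt (by omega), Nat.mod_eq_of_lt (by omega), Nat.mod_eq_of_lt (by omega)⟩

lemma zero_lt_one_lt_two_lt_three (hr : 3 ≤ r) :
    (0 : Fin (r + 1)) < 1 ∧ (1 : Fin (r + 1)) < 2 ∧ (2 : Fin (r + 1)) < 3 := by
  obtain ⟨h1, h2, h3⟩ := val_one_two_three hr
  simp only [Fin.lt_def, Fin.val_zero, h1, h2, h3]
  omega

lemma eq_one_or_eq_two_or_three_le (hr : 3 ≤ r) {j : Fin (r + 1)} (hj : j ≠ 0) :
    j = 1 ∨ j = 2 ∨ 3 ≤ j := by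
  obtain ⟨h1, h2, h3⟩ := val_one_two_three hr
  have hj : (j : ℕ) ≠ 0 := fun h => hj (Fin.ext h)
  simp only [Fin.ext_iff, Fin.le_def, h1, h2, h3]
  omega

lemma sum_Icc_val {M : Type*} [AddCommMonoid M] {n : ℕ} (a b : Fin n) (g : ℕ → M) :
    ∑ i ∈ Icc a b, g i = ∑ k ∈ Icc (a : ℕ) b, g k := by
  rw [← Fin.map_valEmbedding_Icc, sum_map]
  rfl

lemma filter_le_Icc_three {j : Fin (r + 1)} (hj : j ≤ 3) :
    (Icc 3 (Fin.last r)).filter (j ≤ ·) = Icc 3 (Fin.last r) :=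
  filter_true_of_mem fun _ hi => hj.trans (mem_Icc.1 hi).1

lemma sum_smul_Cc_apply_zero (s : Finset (Fin (r + 1))) (α : Fin (r + 1) → ℤ) :
    (∑ i ∈ s, α i • Cc r i) 0 = 3 * ∑ i ∈ s, α i := by
  simp [Finset.sum_apply, Cc, Finset.mul_sum, mul_comm]

lemma sum_smul_Cc_apply_of_ne_zero (s : Finset (Fin (r + 1))) (α : Fin (r + 1) → ℤ)
    {j : Fin (r + 1)} (hj : j ≠ 0) :
    (∑ i ∈ s, α i • Cc r i) j = -∑ i ∈ s.filter (j ≤ ·), α i := by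
  rw [sum_filter, ← sum_neg_distrib, Finset.sum_apply]
  refine sum_congr rfl fun i _ => ?_
  by_cases hji : j ≤ i <;> simp [Cc, hj, hji]

lemma ite_le_ite_of_le {ι M : Type*} [Preorder ι] [DecidableLE ι] [Preorder M] [Zero M]
    {i j k : ι} (hij : i ≤ j) {x : M} (hx : 0 ≤ x) :
    (if j ≤ k then x else 0) ≤ if i ≤ k then x else 0 := by
  split_ifs with hj hi hi
  exacts [le_rfl, absurd (hij.trans hj) hi, hx, le_rfl]

def generatingCombination (r a b c : ℕ) (α : Fin (r + 1) → ℕ) : Fin (r + 1) → ℤ :=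
  (a : ℤ) • Eb r 0 + (b : ℤ) • (Eb r 0 - Eb r 1)
    + (c : ℤ) • ((2 : ℤ) • Eb r 0 - Eb r 1 - Eb r 2)
    + ∑ i ∈ Finset.Icc (3 : Fin (r + 1)) (Fin.last r), (α i : ℤ) • Cc r i

section generatingCombination

variable (a b c : ℕ) (α : Fin (r + 1) → ℕ)

lemma generatingCombination_apply_zero (hr : 3 ≤ r) :
    generatingCombination r a b c α 0
      = a + b + 2 * c + 3 * ∑ i ∈ Icc 3 (Fin.last r), (α i : ℤ) := by
  obtain ⟨h01, h12, -⟩ := zero_lt_one_lt_two_lt_three hr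
  rw [generatingCombination, Pi.add_apply, sum_smul_Cc_apply_zero]
  simp [Eb, h01.ne, (h01.trans h12).ne]
  ring

lemma neg_generatingCombination_apply (hr : 3 ≤ r) {j : Fin (r + 1)} (hj : j ≠ 0) :
    -generatingCombination r a b c α j
      = (if j ≤ 1 then (b : ℤ) else 0) + (if j ≤ 2 then (c : ℤ) else 0)
        + ∑ i ∈ (Icc 3 (Fin.last r)).filter (j ≤ ·), (α i : ℤ) := by
  obtain ⟨-, h12, h23⟩ := zero_lt_one_lt_two_lt_three hr
  rw [generatingCombination, Pi.add_apply, sum_smul_Cc_apply_of_ne_zero _ _ hj]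
  simp only [Pi.add_apply, Pi.smul_apply, Pi.sub_apply, smul_eq_mul, Eb, if_neg hj]
  rcases eq_one_or_eq_two_or_three_le hr hj with rfl | rfl | h3j
  · simp [h12.ne, h12.le]
    ring
  · simp [h12.ne', not_le.2 h12]
    ring
  · have h1j := (h12.trans h23).trans_le h3j
    simp [h1j.ne', (h23.trans_le h3j).ne', not_le.2 h1j, not_le.2 (h23.trans_le h3j)]

lemma estandard_generatingCombination (hr : 3 ≤ r) :
    EStandard r (generatingCombination r a b c α) := by
  obtain ⟨h01, h12, h23⟩ := zero_lt_one_lt_two_lt_three hr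
  set G := generatingCombination r a b c α
  set S := ∑ i ∈ Icc 3 (Fin.last r), (α i : ℤ)
  have hS : 0 ≤ S := sum_nonneg fun i _ => Int.natCast_nonneg (α i)
  have hG0 : G 0 = a + b + 2 * c + 3 * S := generatingCombination_apply_zero a b c α hr
  have hG := fun (j : Fin (r + 1)) (hj : j ≠ 0) => neg_generatingCombination_apply a b c α hr hj
  have hlast : (3 : Fin (r + 1)) ≤ Fin.last r := Fin.le_last 3
  have h03 : (0 : Fin (r + 1)) < 3 := (h01.trans h12).trans h23
  have hG1 : -G 1 = b + c + S := by
    rw [hG 1 h01.ne', filter_le_Icc_three (h12.trans h23).le, if_pos le_rfl, if_pos h12.le]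
  have hG2 : -G 2 = c + S := by
    rw [hG 2 (h01.trans h12).ne', filter_le_Icc_three h23.le, if_neg (not_le.2 h12), if_pos le_rfl,
      zero_add]
  have hG3 : -G 3 = S := by
    rw [hG 3 h03.ne', filter_le_Icc_three le_rfl, if_neg (not_le.2 (h12.trans h23)),
      if_neg (not_le.2 h23), zero_add, zero_add]
  refine ⟨by linarith, fun i j hi hij => ?_, ?_, by linarith, by linarith⟩
  · have hi0 : i ≠ 0 := by rintro rfl; simp at hi
    rw [hG i hi0, hG j (ne_bot_of_le_ne_bot hi0 hij)]
    gcongr ?_ + ?_ + ?_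
    · exact ite_le_ite_of_le hij (Int.natCast_nonneg b)
    · exact ite_le_ite_of_le hij (Int.natCast_nonneg c)
    · exact sum_le_sum_of_subset_of_nonneg (monotone_filter_right _ fun k _ hjk => hij.trans hjk)
        fun k _ _ => Int.natCast_nonneg (α k)
  · rw [hG _ (h03.trans_le hlast).ne', if_neg (not_le.2 ((h12.trans h23).trans_le hlast)),
      if_neg (not_le.2 (h23.trans_le hlast)), zero_add, zero_add]
    exact sum_nonneg fun k _ => Int.natCast_nonneg (α k)

end generatingCombination

/-- The multiplicities `m_n = -H n`, extended by `m_{r+1} = 0` so that the coefficient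
`m_i - m_{i+1}` of `C_i` needs no special case at `i = r`. -/
def mult (H : Fin (r + 1) → ℤ) (n : ℕ) : ℤ :=
  if h : n < r + 1 then -H ⟨n, h⟩ else 0

lemma mult_val (H : Fin (r + 1) → ℤ) (i : Fin (r + 1)) : mult H i = -H i :=
  dif_pos i.isLt

lemma mult_succ_le {H : Fin (r + 1) → ℤ} (hH : EStandard r H) {n : ℕ} (hn : 1 ≤ n) :
    mult H (n + 1) ≤ mult H n := by
  obtain ⟨-, hmono, hlast, -⟩ := hH
  rcases lt_trichotomy n r with hnr | rfl | hrn
  · rw [mult, dif_pos (by omega), mult, dif_pos (by omega)]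
    exact hmono ⟨n, by omega⟩ ⟨n + 1, by omega⟩ hn (Fin.le_def.2 n.le_succ)
  · rw [mult, dif_neg (lt_irrefl _)]
    exact (mult_val H (Fin.last n)).symm ▸ hlast
  · rw [mult, dif_neg (by omega), mult, dif_neg (by omega)]

lemma sum_filter_mult_sub (hr : 3 ≤ r) {H : Fin (r + 1) → ℤ} (hH : EStandard r H)
    (j : Fin (r + 1)) :
    ∑ i ∈ (Icc 3 (Fin.last r)).filter (j ≤ ·), ((mult H i - mult H (i + 1)).toNat : ℤ)
      = -H (max 3 j) := by
  have h3 : ((3 : Fin (r + 1)) : ℕ) = 3 := (val_one_two_three hr).2.2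
  have hfilter : (Icc 3 (Fin.last r)).filter (j ≤ ·) = Icc (max 3 j) (Fin.last r) := by
    ext i
    simp only [mem_filter, mem_Icc, max_le_iff]
    tauto
  rw [hfilter, sum_Icc_val _ _ fun n => ((mult H n - mult H (n + 1)).toNat : ℤ), Fin.val_last]
  calc ∑ n ∈ Icc ((max 3 j : Fin (r + 1)) : ℕ) r, ((mult H n - mult H (n + 1)).toNat : ℤ)
      = -∑ n ∈ Icc ((max 3 j : Fin (r + 1)) : ℕ) r, (mult H (n + 1) - mult H n) := by
        rw [← sum_neg_distrib]
        refine sum_congr rfl fun n hn => ?_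
        have h3n : 3 ≤ n := by
          have := (mem_Icc.1 hn).1
          rw [Fin.coe_max, h3] at this
          omega
        rw [Int.toNat_of_nonneg (sub_nonneg.2 (mult_succ_le hH (by omega))), neg_sub]
    _ = -H (max 3 j) := by
        rw [sum_Icc_sub (Fin.is_le _), mult, dif_neg (lt_irrefl _), mult_val]
        ring

lemma exists_generatingCombination_of_estandard (hr : 3 ≤ r) {H : Fin (r + 1) → ℤ}
    (hH : EStandard r H) : ∃ a b c α, H = generatingCombination r a b c α := by
  obtain ⟨h1, h2, h3⟩ := val_one_two_three hr
  obtain ⟨-, h12, h23⟩ := zero_lt_one_lt_two_lt_three hr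
  have hS := sum_filter_mult_sub hr hH
  obtain ⟨-, hmono, hlast, -, hd⟩ := hH
  have hm12 : -H 2 ≤ -H 1 := hmono 1 2 h1.ge h12.le
  have hm23 : -H 3 ≤ -H 2 := hmono 2 3 (by omega) h23.le
  have hm3 : 0 ≤ -H 3 := hlast.trans (hmono 3 (Fin.last r) (by omega) (Fin.le_last 3))
  refine ⟨(H 0 + H 1 + H 2 + H 3).toNat, (H 2 - H 1).toNat, (H 3 - H 2).toNat,
    fun i => (mult H i - mult H (i + 1)).toNat, funext fun j => ?_⟩
  rcases eq_or_ne j 0 with rfl | hj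
  · rw [generatingCombination_apply_zero _ _ _ _ hr, ← filter_le_Icc_three le_rfl, hS, max_self,
      Int.toNat_of_nonneg (by linarith), Int.toNat_of_nonneg (by linarith),
      Int.toNat_of_nonneg (by linarith)]
    ring
  rw [← neg_inj, neg_generatingCombination_apply _ _ _ _ hr hj, hS]
  rcases eq_one_or_eq_two_or_three_le hr hj with rfl | rfl | h3j
  · rw [if_pos le_rfl, if_pos h12.le, max_eq_left (h12.trans h23).le,
      Int.toNat_of_nonneg (by linarith), Int.toNat_of_nonneg (by linarith)]
    ring
  · rw [if_neg (not_le.2 h12), if_pos le_rfl, max_eq_left h23.le,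
      Int.toNat_of_nonneg (by linarith)]
    ring
  · rw [if_neg (not_le.2 ((h12.trans h23).trans_le h3j)), if_neg (not_le.2 (h23.trans_le h3j)),
      max_eq_right h3j]
    ring

end Pic

/-- A class `H = dE_0 − m_1E_1 − ⋯ − m_rE_r` in `Pic_r` is E-standard if and only if
there exist non-negative integers `a, b, c, α_3, …, α_r` such that
`H = aE_0 + b(E_0 − E_1) + c(2E_0 − E_1 − E_2) + Σ_{i=3}^{r} α_i C_i`. -/
theorem estandard_iff_generating (r : ℕ) (hr : 3 ≤ r) (H : Fin (r + 1) → ℤ) :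
    EStandard r H ↔
      ∃ (a b c : ℕ) (α : Fin (r + 1) → ℕ),
        H = (a : ℤ) • Eb r 0 + (b : ℤ) • (Eb r 0 - Eb r 1)
          + (c : ℤ) • ((2 : ℤ) • Eb r 0 - Eb r 1 - Eb r 2)
          + ∑ i ∈ Finset.Icc (3 : Fin (r + 1)) (Fin.last r), (α i : ℤ) • Cc r i := by
  refine ⟨Pic.exists_generatingCombination_of_estandard hr, ?_⟩
  rintro ⟨a, b, c, α, rfl⟩
  exact Pic.estandard_generatingCombination a b c α hr
end

section
/- Let C = dE_0 − m_1E_1 − ⋯ − m_rE_r be an E-standard class in Pic_r satisfying C·C = 0 and C·K = 0 (equivalently d² = m_1² + ⋯ + m_r² and m_1 + ⋯ + m_r = 3d). Then either C = 0, or r ≥ 9 and C = α·C_9 for some integer α ≥ 1, i.e. d = 3α, m_1 = ⋯ = m_9 = α and m_i = 0 for i > 9. -/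
open Finset

open Fin.NatCast in
lemma fin_vals (r : ℕ) (hr : 3 ≤ r) :
    (1 : Fin (r+1)) = ⟨1, by omega⟩ ∧ (2 : Fin (r+1)) = ⟨2, by omega⟩ ∧
    (3 : Fin (r+1)) = ⟨3, by omega⟩ := by
  refine ⟨?_, ?_, ?_⟩
  · have : (1 : Fin (r+1)) = ((1:ℕ) : Fin (r+1)) := by norm_cast
    rw [this]; ext; rw [Fin.val_natCast, Nat.mod_eq_of_lt (by omega)]
  · have : (2 : Fin (r+1)) = ((2:ℕ) : Fin (r+1)) := by norm_cast
    rw [this]; ext; rw [Fin.val_natCast, Nat.mod_eq_of_lt (by omega)]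
  · have : (3 : Fin (r+1)) = ((3:ℕ) : Fin (r+1)) := by norm_cast
    rw [this]; ext; rw [Fin.val_natCast, Nat.mod_eq_of_lt (by omega)]


/-- **(Bossini.)** Let `C = dE_0 − m_1E_1 − ⋯ − m_rE_r` be an E-standard class in
`Pic_r` with `C·C = 0` and `C·K = 0`. Then either `C = 0`, or `r ≥ 9` and
`C = α·C_9` for some integer `α ≥ 1`, i.e. `d = 3α`, `m_1 = ⋯ = m_9 = α` and
`m_i = 0` for `i > 9`. -/
theorem bossini_lemma (r : ℕ) (hr : 3 ≤ r) (C : Fin (r + 1) → ℤ)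
    (hst : EStandard r C) (h1 : inter C C = 0) (h2 : inter C (Kc r) = 0) :
    C = 0 ∨
      (9 ≤ r ∧ ∃ α : ℤ, 1 ≤ α ∧ C 0 = 3 * α ∧
        (∀ i : Fin (r + 1), 1 ≤ (i : ℕ) → (i : ℕ) ≤ 9 → C i = -α) ∧
        (∀ i : Fin (r + 1), 9 < (i : ℕ) → C i = 0)) := by
  obtain ⟨hm1, hmono, hlast, hsum2, hsum3⟩ := hst
  obtain ⟨f1, f2, f3⟩ := fin_vals r hr
  have f0 : (0 : Fin (r+1)) = ⟨0, by omega⟩ := rfl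
  set d : ℤ := C 0 with hd
  set M : ℕ → ℤ := fun n => if h : n < r + 1 then -C ⟨n, h⟩ else 0 with hM
  have hMval : ∀ i : Fin (r+1), M i.val = -C i := fun i => dif_pos i.isLt
  have hM0 : M 0 = -d := by rw [hd, f0]; exact dif_pos (by omega)
  have hMa : M 1 = -C 1 := by rw [f1]; exact dif_pos (by omega)
  have hMb : M 2 = -C 2 := by rw [f2]; exact dif_pos (by omega)
  have hMc : M 3 = -C 3 := by rw [f3]; exact dif_pos (by omega)
  -- nonnegativity and monotonicity
  have hMnn : ∀ n, 1 ≤ n → 0 ≤ M n := by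
    intro n hn
    by_cases h : n < r + 1
    · rw [show M n = -C ⟨n, h⟩ from dif_pos h]
      refine le_trans hlast (hmono ⟨n, h⟩ (Fin.last r) hn ?_)
      rw [Fin.le_def]; simp; omega
    · rw [show M n = 0 from dif_neg h]
  have hMmono : ∀ m n, 1 ≤ m → m ≤ n → M n ≤ M m := by
    intro m n h1m hmn
    by_cases hn : n < r + 1
    · have hm : m < r + 1 := by omega
      rw [show M n = -C ⟨n, hn⟩ from dif_pos hn, show M m = -C ⟨m, hm⟩ from dif_pos hm]
      exact hmono ⟨m, hm⟩ ⟨n, hn⟩ h1m hmn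
    · rw [show M n = 0 from dif_neg hn]
      exact hMnn m h1m
  -- sum conversion
  have hconv : ∀ (f : Fin (r+1) → ℤ) (F : ℕ → ℤ), (∀ i : Fin (r+1), f i = F i.val) →
      ∑ i : Fin (r+1), f i = F 0 + ∑ n ∈ Ico 1 (r+1), F n := by
    intro f F hfF
    rw [Finset.sum_congr rfl (fun i _ => hfF i)]
    rw [Fin.sum_univ_eq_sum_range, Finset.range_eq_Ico,
      ← Finset.sum_Ico_consecutive _ (by omega : 0 ≤ 1) (by omega : 1 ≤ r+1)]
    norm_num
  have hsplit4 : ∀ F : ℕ → ℤ, ∑ n ∈ Ico 1 (r+1), F n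
      = F 1 + F 2 + F 3 + ∑ n ∈ Ico 4 (r+1), F n := by
    intro F
    rw [← Finset.sum_Ico_consecutive F (by omega : 1 ≤ 4) (by omega : 4 ≤ r+1),
      Finset.sum_Ico_eq_sum_range]
    norm_num [Finset.sum_range_succ]
  -- extract the two numerical equations
  simp only [inter] at h1 h2
  rw [hconv (fun i => C i * C i) (fun n => M n * M n)
      (fun i => by show C i * C i = M i.val * M i.val; rw [hMval i]; ring)] at h1
  rw [hsplit4 (fun n => M n * M n)] at h1
  rw [hconv (fun i => C i * Kc r i) (fun n => if n = 0 then -(3 * d) else -M n)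
      (fun i => by
        show C i * Kc r i = if (i:ℕ) = 0 then -(3*d) else -M i.val
        by_cases h0 : i = 0
        · subst h0; simp [Kc, hd]; ring
        · have hv : (i : ℕ) ≠ 0 := by
            intro h; exact h0 (by rw [f0]; exact Fin.ext h)
          simp only [Kc, if_neg h0, if_neg hv, mul_one]
          rw [hMval i]; ring)] at h2
  rw [hsplit4 (fun n => if n = 0 then -(3 * d) else -M n)] at h2
  simp only [hM0] at h1
  norm_num at h2
  set T := ∑ n ∈ Ico 4 (r+1), M n with hT_def
  set S := ∑ n ∈ Ico 4 (r+1), M n * M n with hS_def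
  rw [← hd] at h1 h2
  rw [show Kc r 0 = -3 by simp [Kc]] at h2
  rw [show (∑ n ∈ Ico 4 (r+1), if n = 0 then -(3*d) else -M n) = -T by
    rw [hT_def, ← Finset.sum_neg_distrib]
    refine Finset.sum_congr rfl fun n hn => ?_
    rw [Finset.mem_Ico] at hn
    rw [if_neg (by omega)]] at h2
  have hSum : M 1 + M 2 + M 3 + T = 3 * d := by linarith
  have hSq : M 1 * M 1 + M 2 * M 2 + M 3 * M 3 + S = d * d := by linarith
  -- basic inequalities
  have had : M 1 ≤ d := by rw [hMa]; exact hm1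
  have hba : M 2 ≤ M 1 := hMmono 1 2 (by omega) (by omega)
  have hcb : M 3 ≤ M 2 := hMmono 2 3 (by omega) (by omega)
  have hc0 : 0 ≤ M 3 := hMnn 3 (by omega)
  have habc : M 1 + M 2 + M 3 ≤ d := by rw [hMa, hMb, hMc]; exact hsum3
  -- the slack quantities
  have hP1 : 0 ≤ M 3 * T - S := by
    have h := Finset.sum_nonneg (f := fun n => M n * (M 3 - M n)) (s := Ico 4 (r+1))
      (fun n hn => by
        rw [Finset.mem_Ico] at hn
        exact mul_nonneg (hMnn n (by omega))
          (by linarith [hMmono 3 n (by omega) (by omega)]))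
    calc (0:ℤ) ≤ ∑ n ∈ Ico 4 (r+1), M n * (M 3 - M n) := h
      _ = ∑ n ∈ Ico 4 (r+1), (M 3 * M n - M n * M n) :=
          Finset.sum_congr rfl (fun n _ => by ring)
      _ = M 3 * T - S := by
          rw [Finset.sum_sub_distrib, ← Finset.mul_sum, hT_def, hS_def]
  have hkey : M 3 * T - S =
      -((M 2 + M 3) * (M 1 - M 3) + (M 1 + M 3) * (M 2 - M 3)
        + (d - (M 1 + M 2 + M 3)) * (M 1 + M 2 - 2 * M 3 + d)) := by
    have hT' : T = 3*d - M 1 - M 2 - M 3 := by linarith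
    have hS' : S = d*d - M 1*M 1 - M 2*M 2 - M 3*M 3 := by linarith
    rw [hT', hS']; ring
  have q2 : 0 ≤ (M 2 + M 3) * (M 1 - M 3) := mul_nonneg (by linarith) (by linarith)
  have q3 : 0 ≤ (M 1 + M 3) * (M 2 - M 3) := mul_nonneg (by linarith) (by linarith)
  have q4 : 0 ≤ (d - (M 1 + M 2 + M 3)) * (M 1 + M 2 - 2 * M 3 + d) :=
    mul_nonneg (by linarith) (by linarith)
  have hz2 : (M 2 + M 3) * (M 1 - M 3) = 0 := by linarith
  have hz4 : (d - (M 1 + M 2 + M 3)) * (M 1 + M 2 - 2 * M 3 + d) = 0 := by linarith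
  have hg0 : M 3 * T - S = 0 := by linarith
  have he : d = M 1 + M 2 + M 3 := by
    by_contra hne
    have hp : 0 < (d - (M 1 + M 2 + M 3)) * (M 1 + M 2 - 2 * M 3 + d) :=
      mul_pos (by omega) (by omega)
    exact ne_of_gt hp hz4
  by_cases hd0 : d = 0
  · -- C = 0
    left
    have hM1z : M 1 = 0 := by have := hMnn 1 le_rfl; linarith
    funext i
    simp only [Pi.zero_apply]
    by_cases h0 : i = 0
    · subst h0; rw [← hd, hd0]
    · have hv : 1 ≤ (i:ℕ) := by
        rcases Nat.eq_zero_or_pos (i:ℕ) with h | h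
        · exact absurd (by rw [f0]; exact Fin.ext h) h0
        · omega
      have h1i : M i.val ≤ M 1 := hMmono 1 i.val le_rfl hv
      have h2i : 0 ≤ M i.val := hMnn i.val hv
      have hMi : M i.val = -C i := hMval i
      linarith
  · right
    have hd1 : 1 ≤ d := by have := hMnn 1 le_rfl; omega
    have hac : M 1 = M 3 := by
      rcases mul_eq_zero.mp hz2 with h | h
      · exfalso
        have hb0 : M 2 = 0 := by linarith
        have hc0' : M 3 = 0 := by linarith
        have hT0 : T = 0 := by
          rw [hT_def]
          refine Finset.sum_eq_zero fun n hn => ?_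
          rw [Finset.mem_Ico] at hn
          have hu := hMmono 3 n (by omega) (by omega)
          have hl := hMnn n (by omega)
          linarith
        linarith
      · linarith
    set α := M 3 with hα
    have ha : M 1 = α := hac
    have hb : M 2 = α := by linarith
    have hdα : d = 3 * α := by linarith
    have hα1 : 1 ≤ α := by omega
    have hT6 : T = 6 * α := by linarith
    -- dichotomy on the tail
    have hz : ∑ n ∈ Ico 4 (r+1), M n * (M 3 - M n) = 0 := by
      have heq : ∑ n ∈ Ico 4 (r+1), M n * (M 3 - M n) = M 3 * T - S := by
        calc ∑ n ∈ Ico 4 (r+1), M n * (M 3 - M n)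
            = ∑ n ∈ Ico 4 (r+1), (M 3 * M n - M n * M n) :=
              Finset.sum_congr rfl (fun n _ => by ring)
          _ = M 3 * T - S := by
              rw [Finset.sum_sub_distrib, ← Finset.mul_sum, hT_def, hS_def]
      rw [heq, hg0]
    have hnn : ∀ x ∈ Ico 4 (r+1), 0 ≤ M x * (M 3 - M x) := fun x hx => by
      rw [Finset.mem_Ico] at hx
      exact mul_nonneg (hMnn x (by omega))
        (by linarith [hMmono 3 x (by omega) (by omega)])
    have hdich : ∀ n, 4 ≤ n → n ≤ r → M n = 0 ∨ M n = α := by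
      intro n h4 hrn
      have hmem : n ∈ Ico 4 (r+1) := Finset.mem_Ico.mpr ⟨h4, by omega⟩
      have h0 := (Finset.sum_eq_zero_iff_of_nonneg hnn).mp hz n hmem
      rcases mul_eq_zero.mp h0 with h | h
      · exact Or.inl h
      · exact Or.inr (by linarith)
    -- r ≥ 9
    have hcard : (Ico 4 (r+1)).card = r - 3 := by rw [Nat.card_Ico]; omega
    have hTle : T ≤ ((r - 3 : ℕ) : ℤ) * α := by
      rw [hT_def]
      calc ∑ n ∈ Ico 4 (r+1), M n ≤ ∑ n ∈ Ico 4 (r+1), α :=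
          Finset.sum_le_sum fun n hn => by
            rw [Finset.mem_Ico] at hn
            linarith [hMmono 3 n (by omega) (by omega)]
        _ = ((r - 3 : ℕ) : ℤ) * α := by rw [Finset.sum_const, hcard, nsmul_eq_mul]
    have hr9 : 9 ≤ r := by
      by_contra hcon
      have hle5 : ((r - 3 : ℕ) : ℤ) ≤ 5 := by
        have : r - 3 ≤ 5 := by omega
        exact_mod_cast this
      have hmul : ((r - 3 : ℕ) : ℤ) * α ≤ 5 * α :=
        mul_le_mul_of_nonneg_right hle5 (by linarith)
      linarith
    have hM9 : M 9 = α := by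
      rcases hdich 9 (by omega) (by omega) with h | h
      · exfalso
        have hsplit9 : T = ∑ n ∈ Ico 4 9, M n + ∑ n ∈ Ico 9 (r+1), M n := by
          rw [hT_def]
          exact (Finset.sum_Ico_consecutive _ (by omega) (by omega)).symm
        have hz9 : ∑ n ∈ Ico 9 (r+1), M n = 0 :=
          Finset.sum_eq_zero fun n hn => by
            rw [Finset.mem_Ico] at hn
            have hu := hMmono 9 n (by omega) (by omega)
            have hl := hMnn n (by omega)
            linarith
        have hle5' : ∑ n ∈ Ico 4 9, M n ≤ 5 * α := by
          calc ∑ n ∈ Ico 4 9, M n ≤ ∑ n ∈ Ico 4 9, α :=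
              Finset.sum_le_sum fun n hn => by
                rw [Finset.mem_Ico] at hn
                linarith [hMmono 3 n (by omega) (by omega)]
            _ = 5 * α := by rw [Finset.sum_const, Nat.card_Ico]; norm_num
        linarith
      · exact h
    refine ⟨hr9, α, hα1, hdα, ?_, ?_⟩
    · intro i h1i h9i
      have hup : M i.val ≤ M 1 := hMmono 1 i.val le_rfl h1i
      have hlo : M 9 ≤ M i.val := hMmono i.val 9 h1i h9i
      have hMi : M i.val = -C i := hMval i
      linarith
    · intro i h9i
      have hsplit10 : T = ∑ n ∈ Ico 4 10, M n + ∑ n ∈ Ico 10 (r+1), M n := by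
        rw [hT_def]
        exact (Finset.sum_Ico_consecutive _ (by omega) (by omega)).symm
      have h410 : ∑ n ∈ Ico 4 10, M n = 6 * α := by
        calc ∑ n ∈ Ico 4 10, M n = ∑ n ∈ Ico 4 10, α :=
            Finset.sum_congr rfl fun n hn => by
              rw [Finset.mem_Ico] at hn
              have hu := hMmono 3 n (by omega) (by omega)
              have hl := hMmono n 9 (by omega) (by omega)
              linarith
          _ = 6 * α := by rw [Finset.sum_const, Nat.card_Ico]; norm_num
      have hz10 : ∑ n ∈ Ico 10 (r+1), M n = 0 := by linarith
      have hnn10 : ∀ x ∈ Ico 10 (r+1), 0 ≤ M x := fun x hx =>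
        hMnn x (by rw [Finset.mem_Ico] at hx; omega)
      have hiz := (Finset.sum_eq_zero_iff_of_nonneg hnn10).mp hz10 i.val
        (Finset.mem_Ico.mpr ⟨by omega, i.isLt⟩)
      have hMi : M i.val = -C i := hMval i
      linarith
end

section
/- A class H in Pic_r is standard if and only if H·E ≥ 0 for every exceptional class E. -/
open Finset

namespace Aux
variable {r : ℕ}

lemma inter_comm (x y : Fin (r+1) → ℤ) : inter x y = inter y x := by
  unfold inter
  congr 1
  · ring
  · exact Finset.sum_congr rfl (fun i _ => mul_comm _ _)

lemma inter_add_right (x y z : Fin (r+1) → ℤ) :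
    inter x (y + z) = inter x y + inter x z := by
  unfold inter
  simp only [Pi.add_apply, mul_add, Finset.sum_add_distrib]
  ring

lemma inter_sub_right (x y z : Fin (r+1) → ℤ) :
    inter x (y - z) = inter x y - inter x z := by
  unfold inter
  simp only [Pi.sub_apply, mul_sub, Finset.sum_sub_distrib]
  ring

lemma inter_smul_right (x y : Fin (r+1) → ℤ) (c : ℤ) :
    inter x (c • y) = c * inter x y := by
  unfold inter
  simp only [Pi.smul_apply, smul_eq_mul]
  rw [show (∑ i, x i * (c * y i)) = c * ∑ i, x i * y i by
    rw [Finset.mul_sum]; exact Finset.sum_congr rfl (fun i _ => by ring)]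
  ring

lemma inter_add_left (x y z : Fin (r+1) → ℤ) :
    inter (x + y) z = inter x z + inter y z := by
  rw [inter_comm, inter_add_right, inter_comm z x, inter_comm z y]

lemma inter_smul_left (x y : Fin (r+1) → ℤ) (c : ℤ) :
    inter (c • x) y = c * inter x y := by
  rw [inter_comm, inter_smul_right, inter_comm]

lemma Eb_apply (i j : Fin (r+1)) : Eb r i j = if j = i then 1 else 0 := rfl

lemma sum_mul_Eb (x : Fin (r+1) → ℤ) (i : Fin (r+1)) :
    ∑ j, x j * Eb r i j = x i := by
  have : ∀ j : Fin (r+1), x j * Eb r i j = if j = i then x j else 0 := by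
    intro j; rw [Eb_apply]; split_ifs <;> ring
  rw [Finset.sum_congr rfl (fun j _ => this j), Finset.sum_ite_eq' Finset.univ i x]
  simp

lemma inter_Eb0 (x : Fin (r+1) → ℤ) : inter x (Eb r 0) = x 0 := by
  unfold inter
  rw [sum_mul_Eb, Eb_apply, if_pos rfl]
  ring

lemma inter_Eb (x : Fin (r+1) → ℤ) (i : Fin (r+1)) (hi : i ≠ 0) :
    inter x (Eb r i) = - x i := by
  unfold inter
  rw [sum_mul_Eb, Eb_apply, if_neg (by exact fun h => hi h.symm)]
  ring

lemma val1 (hr : 3 ≤ r) : ((1 : Fin (r+1)) : ℕ) = 1 := by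
  have h : ((1 : Fin (r+1)) : ℕ) = 1 % (r+1) := rfl
  rw [h, Nat.mod_eq_of_lt (by omega)]

lemma val2 (hr : 3 ≤ r) : ((2 : Fin (r+1)) : ℕ) = 2 := by
  have h : ((2 : Fin (r+1)) : ℕ) = 2 % (r+1) := rfl
  rw [h, Nat.mod_eq_of_lt (by omega)]

lemma val3 (hr : 3 ≤ r) : ((3 : Fin (r+1)) : ℕ) = 3 := by
  have h : ((3 : Fin (r+1)) : ℕ) = 3 % (r+1) := rfl
  rw [h, Nat.mod_eq_of_lt (by omega)]

lemma val0 : ((0 : Fin (r+1)) : ℕ) = 0 := rfl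

end Aux
namespace Aux
variable {r : ℕ}

lemma fin_ne_of_val_ne {n : ℕ} {a b : Fin n} (h : (a:ℕ) ≠ (b:ℕ)) : a ≠ b :=
  fun e => h (congrArg Fin.val e)

lemma fin1_ne0 (hr : 3 ≤ r) : (1 : Fin (r+1)) ≠ 0 :=
  fin_ne_of_val_ne (by rw [val1 hr, val0]; omega)
lemma fin2_ne0 (hr : 3 ≤ r) : (2 : Fin (r+1)) ≠ 0 :=
  fin_ne_of_val_ne (by rw [val2 hr, val0]; omega)
lemma fin3_ne0 (hr : 3 ≤ r) : (3 : Fin (r+1)) ≠ 0 :=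
  fin_ne_of_val_ne (by rw [val3 hr, val0]; omega)

lemma inter_root_zero (hr : 3 ≤ r) (x : Fin (r+1) → ℤ) (k : Fin r) (hk : (k:ℕ) = 0) :
    inter x (root r k) = x 0 + x 1 + x 2 + x 3 := by
  rw [root, if_pos hk, inter_sub_right, inter_sub_right, inter_sub_right,
    inter_Eb0, inter_Eb x 1 (fin1_ne0 hr), inter_Eb x 2 (fin2_ne0 hr),
    inter_Eb x 3 (fin3_ne0 hr)]
  ring

lemma inter_root_pos (x : Fin (r+1) → ℤ) (k : Fin r) (hk : (k:ℕ) ≠ 0) :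
    inter x (root r k) = x k.succ - x k.castSucc := by
  rw [root, if_neg hk, inter_sub_right,
    inter_Eb x k.castSucc (fin_ne_of_val_ne (by rw [Fin.coe_castSucc, val0]; omega)),
    inter_Eb x k.succ (fin_ne_of_val_ne (by rw [Fin.val_succ, val0]; omega))]
  ring

lemma reflect_apply (v x : Fin (r+1) → ℤ) (j : Fin (r+1)) :
    reflect v x j = x j + inter x v * v j := by
  simp [reflect]

lemma reflect_root_swap (x : Fin (r+1) → ℤ) (k : Fin r) (hk : (k:ℕ) ≠ 0) :
    reflect (root r k) x = x ∘ (Equiv.swap k.castSucc k.succ) := by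
  have hne : k.castSucc ≠ k.succ :=
    fin_ne_of_val_ne (by rw [Fin.coe_castSucc, Fin.val_succ]; omega)
  funext j
  rw [reflect_apply, inter_root_pos x k hk, Function.comp_apply]
  have hroot : root r k j = (if j = k.castSucc then 1 else 0) - (if j = k.succ then 1 else 0) := by
    rw [root, if_neg hk]; rfl
  rcases eq_or_ne j k.castSucc with h | h
  · subst h
    rw [Equiv.swap_apply_left, hroot, if_pos rfl, if_neg hne]
    ring
  · rcases eq_or_ne j k.succ with h2 | h2
    · subst h2
      rw [Equiv.swap_apply_right, hroot, if_neg h, if_pos rfl]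
      ring
    · rw [Equiv.swap_apply_of_ne_of_ne h h2, hroot, if_neg h, if_neg h2]
      ring

/-- the quantity `x·r₀`. -/
def T (x : Fin (r+1) → ℤ) : ℤ := x 0 + x 1 + x 2 + x 3

lemma reflect_root0_apply (hr : 3 ≤ r) (x : Fin (r+1) → ℤ) (k : Fin r) (hk : (k:ℕ) = 0)
    (j : Fin (r+1)) :
    reflect (root r k) x j =
      if j = 0 then x 0 + T x else if j = 1 ∨ j = 2 ∨ j = 3 then x j - T x else x j := by
  have hT : inter x (root r k) = T x := inter_root_zero hr x k hk
  have hroot : root r k j = (if j = 0 then 1 else 0) - (if j = 1 then 1 else 0)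
      - (if j = 2 then 1 else 0) - (if j = 3 then 1 else 0) := by
    rw [root, if_pos hk]; rfl
  have v1 := val1 hr; have v2 := val2 hr; have v3 := val3 hr
  rw [reflect_apply, hT, hroot]
  rcases eq_or_ne j 0 with h0 | h0
  · subst h0
    rw [if_pos rfl, if_neg (fin1_ne0 hr).symm, if_neg (fin2_ne0 hr).symm,
      if_neg (fin3_ne0 hr).symm, if_pos rfl]
    ring
  · rw [if_neg h0, if_neg h0]
    rcases eq_or_ne j 1 with h1 | h1
    · subst h1
      rw [if_pos rfl, if_pos (Or.inl rfl),
        if_neg (fin_ne_of_val_ne (by rw [v1, v2]; omega)),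
        if_neg (fin_ne_of_val_ne (by rw [v1, v3]; omega))]
      ring
    · rw [if_neg h1]
      rcases eq_or_ne j 2 with h2 | h2
      · subst h2
        rw [if_pos rfl, if_neg (fin_ne_of_val_ne (by rw [v2, v3]; omega)),
          if_pos (Or.inr (Or.inl rfl))]
        ring
      · rw [if_neg h2]
        rcases eq_or_ne j 3 with h3 | h3
        · subst h3
          rw [if_pos rfl, if_pos (Or.inr (Or.inr rfl))]
          ring
        · rw [if_neg h3, if_neg (by tauto)]
          ring

lemma reflect_eq_of_inter_zero (v x : Fin (r+1) → ℤ) (h : inter x v = 0) :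
    reflect v x = x := by
  funext j; rw [reflect_apply, h]; ring

end Aux
namespace Aux
variable {r : ℕ}

lemma fin12 (hr : 3 ≤ r) : (1 : Fin (r+1)) ≠ 2 :=
  fin_ne_of_val_ne (by rw [val1 hr, val2 hr]; omega)
lemma fin13 (hr : 3 ≤ r) : (1 : Fin (r+1)) ≠ 3 :=
  fin_ne_of_val_ne (by rw [val1 hr, val3 hr]; omega)
lemma fin23 (hr : 3 ≤ r) : (2 : Fin (r+1)) ≠ 3 :=
  fin_ne_of_val_ne (by rw [val2 hr, val3 hr]; omega)

lemma root0_apply (k : Fin r) (hk : (k:ℕ) = 0) (j : Fin (r+1)) :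
    root r k j = (if j = 0 then 1 else 0) - (if j = 1 then 1 else 0)
      - (if j = 2 then 1 else 0) - (if j = 3 then 1 else 0) := by
  rw [root, if_pos hk]; rfl

lemma rootp_apply (k : Fin r) (hk : (k:ℕ) ≠ 0) (j : Fin (r+1)) :
    root r k j = (if j = k.castSucc then 1 else 0) - (if j = k.succ then 1 else 0) := by
  rw [root, if_neg hk]; rfl

lemma root_self (hr : 3 ≤ r) (k : Fin r) : inter (root r k) (root r k) = -2 := by
  rcases eq_or_ne (k:ℕ) 0 with hk | hk
  · rw [inter_root_zero hr _ k hk, root0_apply k hk 0, root0_apply k hk 1,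
      root0_apply k hk 2, root0_apply k hk 3]
    rw [if_pos rfl, if_neg (fin1_ne0 hr).symm, if_neg (fin2_ne0 hr).symm,
      if_neg (fin3_ne0 hr).symm,
      if_neg (fin1_ne0 hr), if_pos rfl, if_neg (fin12 hr), if_neg (fin13 hr),
      if_neg (fin2_ne0 hr), if_neg (fin12 hr).symm, if_pos rfl, if_neg (fin23 hr),
      if_neg (fin3_ne0 hr), if_neg (fin13 hr).symm, if_neg (fin23 hr).symm, if_pos rfl]
    ring
  · have hne : k.castSucc ≠ k.succ :=
      fin_ne_of_val_ne (by rw [Fin.coe_castSucc, Fin.val_succ]; omega)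
    rw [inter_root_pos _ k hk, rootp_apply k hk k.succ, rootp_apply k hk k.castSucc]
    rw [if_neg hne.symm, if_pos rfl, if_pos rfl, if_neg hne]
    ring

lemma reflect_reflect (v x : Fin (r+1) → ℤ) (hv : inter v v = -2) :
    reflect v (reflect v x) = x := by
  have h : inter (reflect v x) v = - inter x v := by
    unfold reflect
    rw [inter_add_left, inter_smul_left, hv]
    ring
  funext j
  rw [reflect_apply, h, reflect_apply]
  ring

lemma inter_reflect_reflect (v x y : Fin (r+1) → ℤ) (hv : inter v v = -2) :
    inter (reflect v x) (reflect v y) = inter x y := by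
  unfold reflect
  simp only [inter_add_left, inter_add_right, inter_smul_left, inter_smul_right]
  rw [hv, inter_comm v y]
  ring

lemma inter_invariant (hr : 3 ≤ r) (k : Fin r) (x y : Fin (r+1) → ℤ) :
    inter (reflect (root r k) x) (reflect (root r k) y) = inter x y :=
  inter_reflect_reflect _ _ _ (root_self hr k)

lemma reflect_involution (hr : 3 ≤ r) (k : Fin r) (x : Fin (r+1) → ℤ) :
    reflect (root r k) (reflect (root r k) x) = x :=
  reflect_reflect _ _ (root_self hr k)

lemma reflect_K (hr : 3 ≤ r) (k : Fin r) : reflect (root r k) (Kc r) = Kc r := by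
  apply reflect_eq_of_inter_zero
  rcases eq_or_ne (k:ℕ) 0 with hk | hk
  · rw [inter_root_zero hr _ k hk]
    show (if (0:Fin (r+1)) = 0 then (-3:ℤ) else 1) + (if (1:Fin (r+1)) = 0 then -3 else 1)
      + (if (2:Fin (r+1)) = 0 then -3 else 1) + (if (3:Fin (r+1)) = 0 then -3 else 1) = 0
    rw [if_pos rfl, if_neg (fin1_ne0 hr), if_neg (fin2_ne0 hr), if_neg (fin3_ne0 hr)]
    ring
  · rw [inter_root_pos _ k hk]
    show (if k.succ = 0 then (-3:ℤ) else 1) - (if k.castSucc = 0 then -3 else 1) = 0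
    rw [if_neg (fin_ne_of_val_ne (by rw [Fin.val_succ, val0]; omega)),
      if_neg (fin_ne_of_val_ne (by rw [Fin.coe_castSucc, val0]; omega))]
    ring

lemma inter_K_invariant (hr : 3 ≤ r) (k : Fin r) (x : Fin (r+1) → ℤ) :
    inter (reflect (root r k) x) (Kc r) = inter x (Kc r) := by
  conv_lhs => rw [← reflect_K hr k]
  exact inter_invariant hr k x (Kc r)

lemma InWeyl_id : InWeyl r id := by
  show _ ∈ Submonoid.closure
    { g : Function.End (Fin (r + 1) → ℤ) | ∃ i : Fin r, g = reflect (root r i) }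
  exact Submonoid.one_mem _

lemma InWeyl_refl (k : Fin r) : InWeyl r (reflect (root r k)) :=
  Submonoid.subset_closure ⟨k, rfl⟩

lemma InWeyl_comp {f g : (Fin (r+1) → ℤ) → (Fin (r+1) → ℤ)} (hf : InWeyl r f)
    (hg : InWeyl r g) : InWeyl r (f ∘ g) := by
  show _ ∈ Submonoid.closure
    { g : Function.End (Fin (r + 1) → ℤ) | ∃ i : Fin r, g = reflect (root r i) }
  exact Submonoid.mul_mem _ hf hg

lemma inter_W (hr : 3 ≤ r) {f : (Fin (r+1) → ℤ) → (Fin (r+1) → ℤ)} (hf : InWeyl r f) :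
    ∀ x y : Fin (r+1) → ℤ, inter (f x) (f y) = inter x y := by
  induction hf using Submonoid.closure_induction with
  | mem g hg =>
      obtain ⟨k, rfl⟩ := hg
      exact fun x y => inter_invariant hr k x y
  | one => exact fun x y => rfl
  | mul a b ha hb iha ihb =>
      exact fun x y => (iha (b x) (b y)).trans (ihb x y)

lemma Exceptional_W {f : (Fin (r+1) → ℤ) → (Fin (r+1) → ℤ)} (hf : InWeyl r f)
    {x : Fin (r+1) → ℤ} (hx : Exceptional r x) : Exceptional r (f x) := by
  obtain ⟨g, hg, rfl⟩ := hx
  exact ⟨f ∘ g, InWeyl_comp hf hg, rfl⟩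

end Aux
namespace Aux
variable {r : ℕ}

/-- One step of the descent: reflect in a root pairing negatively. -/
def Move (E F : Fin (r+1) → ℤ) : Prop :=
  ∃ i : Fin r, inter E (root r i) < 0 ∧ F = reflect (root r i) E

/-- Reflexive-transitive closure of `Move`. -/
def Star : (Fin (r+1) → ℤ) → (Fin (r+1) → ℤ) → Prop := Relation.ReflTransGen Move

/-- In the chamber: all simple roots pair nonnegatively. -/
def Chamber (E : Fin (r+1) → ℤ) : Prop := ∀ i : Fin r, 0 ≤ inter E (root r i)

lemma star_refl (x : Fin (r+1) → ℤ) : Star x x := Relation.ReflTransGen.refl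

lemma star_trans {x y z : Fin (r+1) → ℤ} (h1 : Star x y) (h2 : Star y z) : Star x z :=
  Relation.ReflTransGen.trans h1 h2

lemma star_single {x y : Fin (r+1) → ℤ} (h : Move x y) : Star x y :=
  Relation.ReflTransGen.single h

lemma star_exists_weyl {x y : Fin (r+1) → ℤ} (h : Star x y) :
    ∃ f, InWeyl r f ∧ y = f x := by
  induction h with
  | refl => exact ⟨id, InWeyl_id, rfl⟩
  | tail hab hbc ih =>
      obtain ⟨f, hf, rfl⟩ := ih
      obtain ⟨k, _, rfl⟩ := hbc
      exact ⟨reflect (root r k) ∘ f, InWeyl_comp (InWeyl_refl k) hf, rfl⟩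

/-- Nonnegative pairing with all exceptional classes. -/
def NN (x : Fin (r+1) → ℤ) : Prop := ∀ E, Exceptional r E → 0 ≤ inter x E

lemma NN_reflect (hr : 3 ≤ r) (k : Fin r) {x : Fin (r+1) → ℤ} (h : NN x) :
    NN (reflect (root r k) x) := by
  intro E hE
  have h1 : inter (reflect (root r k) x) E = inter x (reflect (root r k) E) := by
    conv_lhs => rw [show E = reflect (root r k) (reflect (root r k) E) from
      (reflect_involution hr k E).symm]
    exact inter_invariant hr k x (reflect (root r k) E)
  rw [h1]
  exact h _ (Exceptional_W (InWeyl_refl k) hE)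

/-- Quadric conditions satisfied by exceptional classes, plus nonnegative degree. -/
def SQ (x : Fin (r+1) → ℤ) : Prop :=
  inter x x = -1 ∧ inter x (Kc r) = -1 ∧ 0 ≤ x 0

lemma int_nonneg_of_sq_eq_self {z : ℤ} (h : z * z = z) : 0 ≤ z := by
  nlinarith [mul_self_nonneg z]

lemma quad_sums (hr : 3 ≤ r) {x : Fin (r+1) → ℤ}
    (h1 : inter x x = -1) (h2 : inter x (Kc r) = -1) :
    (∑ j, x j * x j) = 2 * (x 0 * x 0) + 1 ∧ (∑ j, x j) = 1 - 2 * x 0 := by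
  constructor
  · unfold inter at h1; linarith
  · unfold inter at h2
    have hK0 : Kc r 0 = -3 := if_pos rfl
    have hterm : ∀ j : Fin (r+1), x j * Kc r j = x j + (if j = 0 then (-4) * x j else 0) := by
      intro j
      unfold Kc
      split_ifs with hj
      · ring
      · ring
    rw [Finset.sum_congr rfl (fun j _ => hterm j), Finset.sum_add_distrib,
      Finset.sum_ite_eq' Finset.univ 0 (fun j => (-4) * x j), if_pos (Finset.mem_univ 0), hK0] at h2
    linarith

lemma sq_subsum (hr : 3 ≤ r) (x : Fin (r+1) → ℤ) :
    x 0 * x 0 + x 1 * x 1 + x 2 * x 2 + x 3 * x 3 ≤ ∑ j, x j * x j := by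
  have hsub : ({0, 1, 2, 3} : Finset (Fin (r+1))) ⊆ Finset.univ := Finset.subset_univ _
  have hcalc : ∑ j ∈ ({0, 1, 2, 3} : Finset (Fin (r+1))), x j * x j
      = x 0 * x 0 + (x 1 * x 1 + (x 2 * x 2 + x 3 * x 3)) := by
    rw [Finset.sum_insert (by
        simp only [Finset.mem_insert, Finset.mem_singleton]
        push_neg
        exact ⟨(fin1_ne0 hr).symm, (fin2_ne0 hr).symm, (fin3_ne0 hr).symm⟩),
      Finset.sum_insert (by
        simp only [Finset.mem_insert, Finset.mem_singleton]
        push_neg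
        exact ⟨fin12 hr, fin13 hr⟩),
      Finset.sum_insert (by
        simp only [Finset.mem_singleton]
        exact fin23 hr),
      Finset.sum_singleton]
  have := Finset.sum_le_sum_of_subset_of_nonneg hsub
    (fun j _ _ => mul_self_nonneg (x j))
  rw [hcalc] at this
  linarith

lemma erase_sums (x : Fin (r+1) → ℤ) (f : Fin (r+1) → ℤ) :
    ∑ j ∈ Finset.univ.erase 0, f j = (∑ j, f j) - f 0 := by
  have := Finset.add_sum_erase Finset.univ f (Finset.mem_univ (0 : Fin (r+1)))
  linarith

lemma d_nonneg_step (hr : 3 ≤ r) {x : Fin (r+1) → ℤ}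
    (h1 : inter x x = -1) (h2 : inter x (Kc r) = -1) (h3 : 0 ≤ x 0) :
    0 ≤ x 0 + T x := by
  obtain ⟨hQ, hL⟩ := quad_sums hr h1 h2
  rcases eq_or_lt_of_le h3 with h0 | h0
  · -- x 0 = 0 : all other coordinates are 0 or 1
    have hs : ∑ j ∈ Finset.univ.erase 0, (x j * x j - x j) = x 0 * x 0 + 3 * x 0 := by
      rw [Finset.sum_sub_distrib, erase_sums x (fun j => x j * x j), erase_sums x x, hQ, hL]
      ring
    have hzero : ∑ j ∈ Finset.univ.erase 0, (x j * x j - x j) = 0 := by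
      rw [hs, ← h0]; ring
    have hpt : ∀ j ∈ Finset.univ.erase 0, x j * x j - x j = 0 := by
      rw [← Finset.sum_eq_zero_iff_of_nonneg]
      · exact hzero
      · intro j _
        nlinarith [mul_self_nonneg (x j), mul_self_nonneg (x j - 1)]
    have hmem : ∀ j : Fin (r+1), j ≠ 0 → 0 ≤ x j := by
      intro j hj
      have := hpt j (Finset.mem_erase.2 ⟨hj, Finset.mem_univ j⟩)
      exact int_nonneg_of_sq_eq_self (by linarith)
    have t1 := hmem 1 (fin1_ne0 hr)
    have t2 := hmem 2 (fin2_ne0 hr)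
    have t3 := hmem 3 (fin3_ne0 hr)
    unfold T
    linarith
  · -- 1 ≤ x 0
    by_contra hc
    push_neg at hc
    unfold T at hc
    have hsub := sq_subsum hr x
    rw [hQ] at hsub
    -- x1²+x2²+x3² ≤ x0² + 1
    have hS : x 1 + x 2 + x 3 ≤ -(2 * x 0) - 1 := by linarith
    nlinarith [sq_nonneg (x 1 - x 2), sq_nonneg (x 1 - x 3), sq_nonneg (x 2 - x 3),
      mul_nonneg (by linarith : (0:ℤ) ≤ -(x 1 + x 2 + x 3) - (2 * x 0 + 1))
        (by linarith : (0:ℤ) ≤ -(x 1 + x 2 + x 3) + (2 * x 0 + 1)), h0]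

lemma SQ_reflect (hr : 3 ≤ r) (k : Fin r) {x : Fin (r+1) → ℤ} (h : SQ x) :
    SQ (reflect (root r k) x) := by
  obtain ⟨h1, h2, h3⟩ := h
  refine ⟨by rw [inter_invariant hr k]; exact h1, by rw [inter_K_invariant hr k]; exact h2, ?_⟩
  rcases eq_or_ne (k:ℕ) 0 with hk | hk
  · have := reflect_root0_apply hr x k hk 0
    rw [if_pos rfl] at this
    rw [this]
    exact d_nonneg_step hr h1 h2 h3
  · rw [reflect_root_swap x k hk]
    have h0a : (0 : Fin (r+1)) ≠ k.castSucc :=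
      fin_ne_of_val_ne (by rw [val0, Fin.coe_castSucc]; omega)
    have h0b : (0 : Fin (r+1)) ≠ k.succ :=
      fin_ne_of_val_ne (by rw [val0, Fin.val_succ]; omega)
    show 0 ≤ x (Equiv.swap k.castSucc k.succ 0)
    rw [Equiv.swap_apply_of_ne_of_ne h0a h0b]
    exact h3

end Aux
namespace Aux
variable {r : ℕ}

/-- Number of "inversions" among coordinates `1..r`. -/
def inv (x : Fin (r+1) → ℤ) : ℕ :=
  ((Finset.univ ×ˢ Finset.univ).filter
    (fun p : Fin (r+1) × Fin (r+1) => p.1 < p.2 ∧ 1 ≤ (p.1:ℕ) ∧ x p.2 < x p.1)).card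

lemma inv_lt (x : Fin (r+1) → ℤ) : inv x < (r+1) * (r+1) + 1 := by
  have h1 : inv x ≤ ((Finset.univ ×ˢ Finset.univ :
      Finset (Fin (r+1) × Fin (r+1)))).card := Finset.card_filter_le _ _
  rw [Finset.card_product, Finset.card_univ, Fintype.card_fin] at h1
  omega

/-- The termination measure. -/
def meas (x : Fin (r+1) → ℤ) : ℕ := (x 0).toNat * ((r+1) * (r+1) + 1) + inv x

lemma inv_swap_decrease (x : Fin (r+1) → ℤ) (k : Fin r) (hk : (k:ℕ) ≠ 0)
    (hx : x k.succ < x k.castSucc) :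
    inv (x ∘ Equiv.swap k.castSucc k.succ) < inv x := by
  classical
  set a := k.castSucc with ha
  set b := k.succ with hb
  have hva : (a:ℕ) = (k:ℕ) := Fin.coe_castSucc k
  have hvb : (b:ℕ) = (k:ℕ) + 1 := Fin.val_succ k
  have hab : a < b := by rw [Fin.lt_def]; omega
  have habne : a ≠ b := ne_of_lt hab
  set F := x ∘ Equiv.swap a b with hF
  set filtx := ((Finset.univ ×ˢ Finset.univ).filter
    (fun p : Fin (r+1) × Fin (r+1) => p.1 < p.2 ∧ 1 ≤ (p.1:ℕ) ∧ x p.2 < x p.1)) with hfx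
  set filtF := ((Finset.univ ×ˢ Finset.univ).filter
    (fun p : Fin (r+1) × Fin (r+1) => p.1 < p.2 ∧ 1 ≤ (p.1:ℕ) ∧ F p.2 < F p.1)) with hfF
  have hmemab : (a, b) ∈ filtx := by
    rw [hfx, Finset.mem_filter]
    exact ⟨Finset.mem_product.2 ⟨Finset.mem_univ _, Finset.mem_univ _⟩, hab,
      by rw [hva]; omega, hx⟩
  have hcard : filtF.card ≤ (filtx.erase (a, b)).card := by
    apply Finset.card_le_card_of_injOn (fun p => (Equiv.swap a b p.1, Equiv.swap a b p.2))
    · intro p hp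
      rw [Finset.mem_coe, hfF, Finset.mem_filter] at hp
      obtain ⟨-, hlt, h1p, hval⟩ := hp
      have hvalx : x (Equiv.swap a b p.2) < x (Equiv.swap a b p.1) := hval
      rw [Finset.mem_coe, Finset.mem_erase, hfx, Finset.mem_filter]
      have hswap_lt : Equiv.swap a b p.1 < Equiv.swap a b p.2 ∧
          (Equiv.swap a b p.1, Equiv.swap a b p.2) ≠ (a, b) ∧
          1 ≤ (Equiv.swap a b p.1 : ℕ) := by
        rcases eq_or_ne p.1 a with e1 | e1
        · rcases eq_or_ne p.2 b with e2 | e2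
          · exfalso
            rw [e1, e2, Equiv.swap_apply_left, Equiv.swap_apply_right] at hvalx
            exact absurd hvalx (not_lt.2 (le_of_lt hx))
          · have e2a : p.2 ≠ a := by
              intro h'; rw [e1, h'] at hlt; exact lt_irrefl _ hlt
            rw [e1, Equiv.swap_apply_left, Equiv.swap_apply_of_ne_of_ne e2a e2]
            have : (b:ℕ) < (p.2:ℕ) := by
              have h1 : (p.1:ℕ) < (p.2:ℕ) := Fin.lt_def.1 hlt
              have h2 : (p.2:ℕ) ≠ (b:ℕ) := fun h => e2 (Fin.ext h)
              have e1v : (p.1:ℕ) = (a:ℕ) := congrArg Fin.val e1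
              omega
            refine ⟨Fin.lt_def.2 this, ?_, by rw [hvb]; omega⟩
            intro hcontra
            have := congrArg Prod.fst hcontra
            simp only at this
            exact habne this.symm
        · rcases eq_or_ne p.1 b with e1b | e1b
          · have e2a : p.2 ≠ a := fun h' => by
              rw [e1b, h'] at hlt
              exact absurd (hab.trans hlt) (lt_irrefl a)
            have e2b : p.2 ≠ b := fun h' => by rw [e1b, h'] at hlt; exact lt_irrefl _ hlt
            rw [e1b, Equiv.swap_apply_right, Equiv.swap_apply_of_ne_of_ne e2a e2b]
            have hblt : (b:ℕ) < (p.2:ℕ) := by rw [← e1b]; exact Fin.lt_def.1 hlt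
            refine ⟨Fin.lt_def.2 (by omega), ?_, by omega⟩
            intro hcontra
            have := congrArg Prod.snd hcontra
            simp only at this
            exact (by omega : ((p.2):ℕ) ≠ (b:ℕ)) (congrArg Fin.val this)
          · -- p.1 ∉ {a, b}
            rw [Equiv.swap_apply_of_ne_of_ne e1 e1b]
            have h1a : 1 ≤ (p.1:ℕ) := h1p
            rcases eq_or_ne p.2 a with e2 | e2
            · rw [e2, Equiv.swap_apply_left]
              have : (p.1:ℕ) < (a:ℕ) := by
                have hv := Fin.lt_def.1 hlt
                have e2v : (p.2:ℕ) = (a:ℕ) := congrArg Fin.val e2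
                omega
              refine ⟨Fin.lt_def.2 (by omega), ?_, h1a⟩
              intro hcontra
              have := congrArg Prod.fst hcontra
              simp only at this
              exact e1 this
            · rcases eq_or_ne p.2 b with e2b | e2b
              · rw [e2b, Equiv.swap_apply_right]
                have hp2 : (p.1:ℕ) < (b:ℕ) := by
                  have hv := Fin.lt_def.1 hlt
                  have e2v : (p.2:ℕ) = (b:ℕ) := congrArg Fin.val e2b
                  omega
                have hp1a : (p.1:ℕ) ≠ (a:ℕ) := fun h => e1 (Fin.ext h)
                refine ⟨Fin.lt_def.2 (by omega), ?_, h1a⟩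
                intro hcontra
                have := congrArg Prod.fst hcontra
                simp only at this
                exact e1 this
              · rw [Equiv.swap_apply_of_ne_of_ne e2 e2b]
                refine ⟨hlt, ?_, h1a⟩
                intro hcontra
                have := congrArg Prod.fst hcontra
                simp only at this
                exact e1 this
      exact ⟨hswap_lt.2.1, Finset.mem_product.2 ⟨Finset.mem_univ _, Finset.mem_univ _⟩,
        hswap_lt.1, hswap_lt.2.2, hvalx⟩
    · intro p _ q _ hpq
      have h1 := congrArg Prod.fst hpq
      have h2 := congrArg Prod.snd hpq
      simp only at h1 h2
      exact Prod.ext ((Equiv.swap a b).injective h1) ((Equiv.swap a b).injective h2)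
  have hcard2 : (filtx.erase (a, b)).card < filtx.card :=
    Finset.card_erase_lt_of_mem hmemab
  calc inv (x ∘ Equiv.swap a b) = filtF.card := rfl
    _ ≤ (filtx.erase (a,b)).card := hcard
    _ < filtx.card := hcard2

lemma meas_decrease (hr : 3 ≤ r) {x y : Fin (r+1) → ℤ} (h : Move x y)
    (hx0 : 0 ≤ x 0) (hy0 : 0 ≤ y 0) : meas y < meas x := by
  obtain ⟨k, hneg, rfl⟩ := h
  rcases eq_or_ne (k:ℕ) 0 with hk | hk
  · -- degree strictly decreases
    have h0 : reflect (root r k) x 0 = x 0 + T x := by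
      rw [reflect_root0_apply hr x k hk 0, if_pos rfl]
    have hT : T x < 0 := by
      have := inter_root_zero hr x k hk
      rw [this] at hneg
      unfold T
      linarith [hneg, hx0]
    have hlt : (reflect (root r k) x 0).toNat < (x 0).toNat := by
      rw [h0]
      rw [h0] at hy0
      omega
    have hinv := inv_lt (reflect (root r k) x)
    have hmul : (reflect (root r k) x 0).toNat * ((r+1)*(r+1)+1) + ((r+1)*(r+1)+1)
        ≤ (x 0).toNat * ((r+1)*(r+1)+1) := by
      have h1 : (reflect (root r k) x 0).toNat * ((r+1)*(r+1)+1) + ((r+1)*(r+1)+1)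
          = ((reflect (root r k) x 0).toNat + 1) * ((r+1)*(r+1)+1) := by ring
      rw [h1]
      exact Nat.mul_le_mul_right _ hlt
    unfold meas
    omega
  · -- inversion count strictly decreases, degree fixed
    have hswap := reflect_root_swap x k hk
    have hxval : x k.succ < x k.castSucc := by
      rw [inter_root_pos x k hk] at hneg
      linarith
    have h0 : reflect (root r k) x 0 = x 0 := by
      rw [hswap]
      show x (Equiv.swap k.castSucc k.succ 0) = x 0
      rw [Equiv.swap_apply_of_ne_of_ne
        (fin_ne_of_val_ne (by rw [val0, Fin.coe_castSucc]; omega))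
        (fin_ne_of_val_ne (by rw [val0, Fin.val_succ]; omega))]
    have hinv : inv (reflect (root r k) x) < inv x := by
      rw [hswap]
      exact inv_swap_decrease x k hk hxval
    unfold meas
    rw [h0]
    omega

end Aux
namespace Aux
variable {r : ℕ}

lemma swap_comm_pointwise {α : Type*} [DecidableEq α] {a b c d : α}
    (hac : a ≠ c) (had : a ≠ d) (hbc : b ≠ c) (hbd : b ≠ d) (m : α) :
    Equiv.swap a b (Equiv.swap c d m) = Equiv.swap c d (Equiv.swap a b m) := by
  have hab_a : Equiv.swap a b a = b := Equiv.swap_apply_left _ _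
  have hab_b : Equiv.swap a b b = a := Equiv.swap_apply_right _ _
  have hab_c : Equiv.swap a b c = c := Equiv.swap_apply_of_ne_of_ne hac.symm hbc.symm
  have hab_d : Equiv.swap a b d = d := Equiv.swap_apply_of_ne_of_ne had.symm hbd.symm
  have hcd_c : Equiv.swap c d c = d := Equiv.swap_apply_left _ _
  have hcd_d : Equiv.swap c d d = c := Equiv.swap_apply_right _ _
  have hcd_a : Equiv.swap c d a = a := Equiv.swap_apply_of_ne_of_ne hac had
  have hcd_b : Equiv.swap c d b = b := Equiv.swap_apply_of_ne_of_ne hbc hbd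
  rcases eq_or_ne m c with hc | mc
  · rw [hc, hcd_c, hab_d, hab_c, hcd_c]
  rcases eq_or_ne m d with hd | md
  · rw [hd, hcd_d, hab_c, hab_d, hcd_d]
  rcases eq_or_ne m a with ha | ma
  · rw [ha, hcd_a, hab_a, hcd_b]
  rcases eq_or_ne m b with hb | mb
  · rw [hb, hcd_b, hab_b, hcd_a]
  · have hab_m : Equiv.swap a b m = m := Equiv.swap_apply_of_ne_of_ne ma mb
    have hcd_m : Equiv.swap c d m = m := Equiv.swap_apply_of_ne_of_ne mc md
    rw [hcd_m, hab_m, hcd_m]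

lemma swap_braid_pointwise {α : Type*} [DecidableEq α] {a b c : α}
    (hab : a ≠ b) (hac : a ≠ c) (hbc : b ≠ c) (m : α) :
    Equiv.swap a b (Equiv.swap b c (Equiv.swap a b m)) =
      Equiv.swap b c (Equiv.swap a b (Equiv.swap b c m)) := by
  have hab_a : Equiv.swap a b a = b := Equiv.swap_apply_left _ _
  have hab_b : Equiv.swap a b b = a := Equiv.swap_apply_right _ _
  have hab_c : Equiv.swap a b c = c := Equiv.swap_apply_of_ne_of_ne hac.symm hbc.symm
  have hbc_b : Equiv.swap b c b = c := Equiv.swap_apply_left _ _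
  have hbc_c : Equiv.swap b c c = b := Equiv.swap_apply_right _ _
  have hbc_a : Equiv.swap b c a = a := Equiv.swap_apply_of_ne_of_ne hab hac
  rcases eq_or_ne m a with ha | ma
  · rw [ha, hab_a, hbc_b, hab_c, hbc_a, hab_a, hbc_b]
  rcases eq_or_ne m b with hb | mb
  · rw [hb, hab_b, hbc_a, hab_a, hbc_b, hab_c, hbc_c]
  rcases eq_or_ne m c with hcc | mc
  · rw [hcc, hab_c, hbc_c, hab_b, hbc_a]
  · have hab_m : Equiv.swap a b m = m := Equiv.swap_apply_of_ne_of_ne ma mb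
    have hbc_m : Equiv.swap b c m = m := Equiv.swap_apply_of_ne_of_ne mb mc
    rw [hab_m, hbc_m, hab_m, hbc_m]

lemma join_far_swaps (x : Fin (r+1) → ℤ) (i j : Fin r)
    (hi0 : (i:ℕ) ≠ 0) (hj0 : (j:ℕ) ≠ 0) (hfar : (i:ℕ) + 1 < (j:ℕ))
    (hi : inter x (root r i) < 0) (hj : inter x (root r j) < 0) :
    ∃ G, Star (reflect (root r i) x) G ∧ Star (reflect (root r j) x) G := by
  have hva : (i.castSucc:ℕ) = (i:ℕ) := Fin.coe_castSucc i
  have hvb : (i.succ:ℕ) = (i:ℕ) + 1 := Fin.val_succ i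
  have hvc : (j.castSucc:ℕ) = (j:ℕ) := Fin.coe_castSucc j
  have hvd : (j.succ:ℕ) = (j:ℕ) + 1 := Fin.val_succ j
  have hca : j.castSucc ≠ i.castSucc := fin_ne_of_val_ne (by omega)
  have hcb : j.castSucc ≠ i.succ := fin_ne_of_val_ne (by omega)
  have hda : j.succ ≠ i.castSucc := fin_ne_of_val_ne (by omega)
  have hdb : j.succ ≠ i.succ := fin_ne_of_val_ne (by omega)
  have hxi : x i.succ < x i.castSucc := by rw [inter_root_pos x i hi0] at hi; linarith
  have hxj : x j.succ < x j.castSucc := by rw [inter_root_pos x j hj0] at hj; linarith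
  have hF1 : reflect (root r i) x = x ∘ Equiv.swap i.castSucc i.succ :=
    reflect_root_swap x i hi0
  have hF2 : reflect (root r j) x = x ∘ Equiv.swap j.castSucc j.succ :=
    reflect_root_swap x j hj0
  have hleg1 : inter (reflect (root r i) x) (root r j) < 0 := by
    rw [inter_root_pos _ j hj0, hF1]
    show x (Equiv.swap i.castSucc i.succ j.succ) - x (Equiv.swap i.castSucc i.succ j.castSucc) < 0
    rw [Equiv.swap_apply_of_ne_of_ne hda hdb, Equiv.swap_apply_of_ne_of_ne hca hcb]
    linarith
  have hleg2 : inter (reflect (root r j) x) (root r i) < 0 := by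
    rw [inter_root_pos _ i hi0, hF2]
    show x (Equiv.swap j.castSucc j.succ i.succ) - x (Equiv.swap j.castSucc j.succ i.castSucc) < 0
    rw [Equiv.swap_apply_of_ne_of_ne hcb.symm hdb.symm,
      Equiv.swap_apply_of_ne_of_ne hca.symm hda.symm]
    linarith
  have hEq : reflect (root r j) (reflect (root r i) x)
      = reflect (root r i) (reflect (root r j) x) := by
    rw [reflect_root_swap (reflect (root r i) x) j hj0,
      reflect_root_swap (reflect (root r j) x) i hi0, hF1, hF2]
    funext m
    show x (Equiv.swap i.castSucc i.succ (Equiv.swap j.castSucc j.succ m))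
      = x (Equiv.swap j.castSucc j.succ (Equiv.swap i.castSucc i.succ m))
    exact congrArg x (swap_comm_pointwise hca.symm hda.symm hcb.symm hdb.symm m)
  exact ⟨reflect (root r j) (reflect (root r i) x),
    star_single ⟨j, hleg1, rfl⟩, star_single ⟨i, hleg2, hEq⟩⟩

lemma join_adj_swaps (x : Fin (r+1) → ℤ) (i j : Fin r)
    (hi0 : (i:ℕ) ≠ 0) (hadj : (j:ℕ) = (i:ℕ) + 1)
    (hi : inter x (root r i) < 0) (hj : inter x (root r j) < 0) :
    ∃ G, Star (reflect (root r i) x) G ∧ Star (reflect (root r j) x) G := by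
  have hj0 : (j:ℕ) ≠ 0 := by omega
  have hva : (i.castSucc:ℕ) = (i:ℕ) := Fin.coe_castSucc i
  have hvb : (i.succ:ℕ) = (i:ℕ) + 1 := Fin.val_succ i
  have hvc : (j.succ:ℕ) = (i:ℕ) + 2 := by rw [Fin.val_succ, hadj]
  have hjc : j.castSucc = i.succ := Fin.ext (by rw [Fin.coe_castSucc, hadj, hvb])
  have hab : i.castSucc ≠ i.succ := fin_ne_of_val_ne (by omega)
  have hbc : i.succ ≠ j.succ := fin_ne_of_val_ne (by omega)
  have hac : i.castSucc ≠ j.succ := fin_ne_of_val_ne (by omega)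
  have hxi : x i.succ < x i.castSucc := by rw [inter_root_pos x i hi0] at hi; linarith
  have hxj : x j.succ < x i.succ := by rw [inter_root_pos x j hj0, hjc] at hj; linarith
  have hF1 : reflect (root r i) x = x ∘ Equiv.swap i.castSucc i.succ :=
    reflect_root_swap x i hi0
  have hF2 : reflect (root r j) x = x ∘ Equiv.swap i.succ j.succ := by
    rw [reflect_root_swap x j hj0, hjc]
  have e1 : Equiv.swap i.castSucc i.succ j.succ = j.succ :=
    Equiv.swap_apply_of_ne_of_ne hac.symm hbc.symm
  have e2 : Equiv.swap i.castSucc i.succ i.succ = i.castSucc := Equiv.swap_apply_right _ _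
  have e3 : Equiv.swap i.succ j.succ i.succ = j.succ := Equiv.swap_apply_left _ _
  have e4 : Equiv.swap i.succ j.succ i.castSucc = i.castSucc :=
    Equiv.swap_apply_of_ne_of_ne hab hac
  have e5 : Equiv.swap i.castSucc i.succ i.castSucc = i.succ := Equiv.swap_apply_left _ _
  have e6 : Equiv.swap i.succ j.succ j.succ = i.succ := Equiv.swap_apply_right _ _
  have hleg11 : inter (reflect (root r i) x) (root r j) < 0 := by
    rw [inter_root_pos _ j hj0, hjc, hF1]
    show x (Equiv.swap i.castSucc i.succ j.succ) - x (Equiv.swap i.castSucc i.succ i.succ) < 0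
    rw [e1, e2]; linarith
  have hleg12 : inter (reflect (root r j) (reflect (root r i) x)) (root r i) < 0 := by
    rw [inter_root_pos _ i hi0, reflect_root_swap (reflect (root r i) x) j hj0, hjc, hF1]
    show x (Equiv.swap i.castSucc i.succ (Equiv.swap i.succ j.succ i.succ))
      - x (Equiv.swap i.castSucc i.succ (Equiv.swap i.succ j.succ i.castSucc)) < 0
    rw [e3, e1, e4, e5]; linarith
  have hleg21 : inter (reflect (root r j) x) (root r i) < 0 := by
    rw [inter_root_pos _ i hi0, hF2]
    show x (Equiv.swap i.succ j.succ i.succ) - x (Equiv.swap i.succ j.succ i.castSucc) < 0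
    rw [e3, e4]; linarith
  have hleg22 : inter (reflect (root r i) (reflect (root r j) x)) (root r j) < 0 := by
    rw [inter_root_pos _ j hj0, hjc, reflect_root_swap (reflect (root r j) x) i hi0, hF2]
    show x (Equiv.swap i.succ j.succ (Equiv.swap i.castSucc i.succ j.succ))
      - x (Equiv.swap i.succ j.succ (Equiv.swap i.castSucc i.succ i.succ)) < 0
    rw [e1, e6, e2, e4]; linarith
  have hEq : reflect (root r i) (reflect (root r j) (reflect (root r i) x))
      = reflect (root r j) (reflect (root r i) (reflect (root r j) x)) := by
    rw [reflect_root_swap (reflect (root r j) (reflect (root r i) x)) i hi0,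
      reflect_root_swap (reflect (root r i) x) j hj0, hjc,
      reflect_root_swap (reflect (root r i) (reflect (root r j) x)) j hj0, hjc,
      reflect_root_swap (reflect (root r j) x) i hi0, hF1, hF2]
    funext m
    show x (Equiv.swap i.castSucc i.succ (Equiv.swap i.succ j.succ
        (Equiv.swap i.castSucc i.succ m)))
      = x (Equiv.swap i.succ j.succ (Equiv.swap i.castSucc i.succ
        (Equiv.swap i.succ j.succ m)))
    exact congrArg x (swap_braid_pointwise hab hac hbc m)
  exact ⟨reflect (root r i) (reflect (root r j) (reflect (root r i) x)),
    star_trans (star_single ⟨j, hleg11, rfl⟩) (star_single ⟨i, hleg12, rfl⟩),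
    star_trans (star_single ⟨i, hleg21, rfl⟩) (star_single ⟨j, hleg22, hEq⟩)⟩
end Aux
namespace Aux
variable {r : ℕ}

lemma refl0_at0 (hr : 3 ≤ r) (x : Fin (r+1) → ℤ) (i : Fin r) (hi : (i:ℕ) = 0) :
    reflect (root r i) x 0 = x 0 + T x := by
  rw [reflect_root0_apply hr x i hi 0, if_pos rfl]

lemma refl0_at123 (hr : 3 ≤ r) (x : Fin (r+1) → ℤ) (i : Fin r) (hi : (i:ℕ) = 0)
    (j : Fin (r+1)) (hj : j = 1 ∨ j = 2 ∨ j = 3) :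
    reflect (root r i) x j = x j - T x := by
  have hj0 : j ≠ 0 := by
    rcases hj with h | h | h <;> rw [h]
    exacts [fin1_ne0 hr, fin2_ne0 hr, fin3_ne0 hr]
  rw [reflect_root0_apply hr x i hi j, if_neg hj0, if_pos hj]

lemma refl0_other (hr : 3 ≤ r) (x : Fin (r+1) → ℤ) (i : Fin r) (hi : (i:ℕ) = 0)
    (j : Fin (r+1)) (h0 : j ≠ 0) (h123 : ¬(j = 1 ∨ j = 2 ∨ j = 3)) :
    reflect (root r i) x j = x j := by
  rw [reflect_root0_apply hr x i hi j, if_neg h0, if_neg h123]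

lemma join_zero_perm (hr : 3 ≤ r) (x : Fin (r+1) → ℤ) (i j : Fin r)
    (hi0 : (i:ℕ) = 0) (hj0 : (j:ℕ) ≠ 0) (p q t : Fin (r+1))
    (hjc : j.castSucc = p) (hjs : j.succ = q)
    (hP : ∀ y : Fin (r+1) → ℤ, y 1 + y 2 + y 3 = y p + y q + y t)
    (hcov : ∀ m : Fin (r+1), (m = 1 ∨ m = 2 ∨ m = 3) ↔ (m = p ∨ m = q ∨ m = t))
    (hpq : p ≠ q) (hpt : p ≠ t) (hqt : q ≠ t)
    (hi : inter x (root r i) < 0) (hj : inter x (root r j) < 0) :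
    ∃ G, Star (reflect (root r i) x) G ∧ Star (reflect (root r j) x) G := by
  have hplit : p = 1 ∨ p = 2 ∨ p = 3 := (hcov p).2 (Or.inl rfl)
  have hqlit : q = 1 ∨ q = 2 ∨ q = 3 := (hcov q).2 (Or.inr (Or.inl rfl))
  have htlit : t = 1 ∨ t = 2 ∨ t = 3 := (hcov t).2 (Or.inr (Or.inr rfl))
  have hlit_ne0 : ∀ m : Fin (r+1), (m = 1 ∨ m = 2 ∨ m = 3) → m ≠ 0 := by
    intro m hm
    rcases hm with h | h | h <;> rw [h]
    exacts [fin1_ne0 hr, fin2_ne0 hr, fin3_ne0 hr]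
  have hp0 : p ≠ 0 := hlit_ne0 p hplit
  have hq0 : q ≠ 0 := hlit_ne0 q hqlit
  have ht0 : t ≠ 0 := hlit_ne0 t htlit
  have hTneg : T x < 0 := by rw [inter_root_zero hr x i hi0] at hi; unfold T; linarith
  have hxj : x q < x p := by rw [inter_root_pos x j hj0, hjc, hjs] at hj; linarith
  have hs0 : Equiv.swap p q 0 = 0 := Equiv.swap_apply_of_ne_of_ne hp0.symm hq0.symm
  have hsp : Equiv.swap p q p = q := Equiv.swap_apply_left _ _
  have hsq : Equiv.swap p q q = p := Equiv.swap_apply_right _ _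
  have hst : Equiv.swap p q t = t := Equiv.swap_apply_of_ne_of_ne hpt.symm hqt.symm
  have hF2 : reflect (root r j) x = x ∘ Equiv.swap p q := by
    rw [reflect_root_swap x j hj0, hjc, hjs]
  have hTs : T (x ∘ Equiv.swap p q) = T x := by
    unfold T
    have h1 : (x ∘ Equiv.swap p q) 1 + (x ∘ Equiv.swap p q) 2 + (x ∘ Equiv.swap p q) 3
        = (x ∘ Equiv.swap p q) p + (x ∘ Equiv.swap p q) q + (x ∘ Equiv.swap p q) t :=
      hP (x ∘ Equiv.swap p q)
    have h2 : x 1 + x 2 + x 3 = x p + x q + x t := hP x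
    have e0 : (x ∘ Equiv.swap p q) 0 = x 0 := congrArg x hs0
    have ep : (x ∘ Equiv.swap p q) p = x q := congrArg x hsp
    have eq' : (x ∘ Equiv.swap p q) q = x p := congrArg x hsq
    have et : (x ∘ Equiv.swap p q) t = x t := congrArg x hst
    linarith [h1, h2, e0, ep, eq', et]
  have hleg1 : inter (reflect (root r i) x) (root r j) < 0 := by
    rw [inter_root_pos _ j hj0, hjc, hjs,
      refl0_at123 hr x i hi0 q hqlit, refl0_at123 hr x i hi0 p hplit]
    linarith
  have hleg2 : inter (reflect (root r j) x) (root r i) < 0 := by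
    rw [inter_root_zero hr _ i hi0, hF2]
    show (x ∘ Equiv.swap p q) 0 + (x ∘ Equiv.swap p q) 1 + (x ∘ Equiv.swap p q) 2
      + (x ∘ Equiv.swap p q) 3 < 0
    have : (x ∘ Equiv.swap p q) 0 + ((x ∘ Equiv.swap p q) 1 + (x ∘ Equiv.swap p q) 2
        + (x ∘ Equiv.swap p q) 3) = T (x ∘ Equiv.swap p q) := by unfold T; ring
    have h2 := hTs
    unfold T at h2
    linarith [hTneg, this]
  have hEq : reflect (root r j) (reflect (root r i) x)
      = reflect (root r i) (reflect (root r j) x) := by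
    rw [reflect_root_swap (reflect (root r i) x) j hj0, hjc, hjs, hF2]
    funext m
    show reflect (root r i) x (Equiv.swap p q m)
      = reflect (root r i) (x ∘ Equiv.swap p q) m
    rcases eq_or_ne m 0 with h0 | h0
    · rw [h0, hs0, refl0_at0 hr x i hi0, refl0_at0 hr _ i hi0, hTs]
      show x 0 + T x = (x ∘ Equiv.swap p q) 0 + T x
      rw [show (x ∘ Equiv.swap p q) 0 = x 0 from congrArg x hs0]
    rcases eq_or_ne m p with hp' | mp
    · rw [hp', hsp, refl0_at123 hr x i hi0 q hqlit,
        refl0_at123 hr _ i hi0 p hplit, hTs]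
      show x q - T x = (x ∘ Equiv.swap p q) p - T x
      rw [show (x ∘ Equiv.swap p q) p = x q from congrArg x hsp]
    rcases eq_or_ne m q with hq' | mq
    · rw [hq', hsq, refl0_at123 hr x i hi0 p hplit,
        refl0_at123 hr _ i hi0 q hqlit, hTs]
      show x p - T x = (x ∘ Equiv.swap p q) q - T x
      rw [show (x ∘ Equiv.swap p q) q = x p from congrArg x hsq]
    rcases eq_or_ne m t with ht' | mt
    · rw [ht', hst, refl0_at123 hr x i hi0 t htlit,
        refl0_at123 hr _ i hi0 t htlit, hTs]
      show x t - T x = (x ∘ Equiv.swap p q) t - T x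
      rw [show (x ∘ Equiv.swap p q) t = x t from congrArg x hst]
    · have hm : Equiv.swap p q m = m := Equiv.swap_apply_of_ne_of_ne mp mq
      have hnotlit : ¬(m = 1 ∨ m = 2 ∨ m = 3) := by
        rw [hcov m]; push_neg; exact ⟨mp, mq, mt⟩
      rw [hm, refl0_other hr x i hi0 m h0 hnotlit,
        refl0_other hr _ i hi0 m h0 hnotlit]
      show x m = (x ∘ Equiv.swap p q) m
      rw [show (x ∘ Equiv.swap p q) m = x m from congrArg x hm]
  exact ⟨reflect (root r j) (reflect (root r i) x),
    star_single ⟨j, hleg1, rfl⟩, star_single ⟨i, hleg2, hEq⟩⟩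

lemma join_zero_far (hr : 3 ≤ r) (x : Fin (r+1) → ℤ) (i j : Fin r)
    (hi0 : (i:ℕ) = 0) (hj4 : 4 ≤ (j:ℕ))
    (hi : inter x (root r i) < 0) (hj : inter x (root r j) < 0) :
    ∃ G, Star (reflect (root r i) x) G ∧ Star (reflect (root r j) x) G := by
  have hj0 : (j:ℕ) ≠ 0 := by omega
  have v1 := val1 hr; have v2 := val2 hr; have v3 := val3 hr
  have hvc : (j.castSucc:ℕ) = (j:ℕ) := Fin.coe_castSucc j
  have hvd : (j.succ:ℕ) = (j:ℕ) + 1 := Fin.val_succ j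
  have hc0 : j.castSucc ≠ 0 := fin_ne_of_val_ne (by rw [val0]; omega)
  have hd0 : j.succ ≠ 0 := fin_ne_of_val_ne (by rw [val0]; omega)
  have hcnl : ¬(j.castSucc = 1 ∨ j.castSucc = 2 ∨ j.castSucc = 3) := by
    push_neg
    exact ⟨fin_ne_of_val_ne (by omega), fin_ne_of_val_ne (by omega),
      fin_ne_of_val_ne (by omega)⟩
  have hdnl : ¬(j.succ = 1 ∨ j.succ = 2 ∨ j.succ = 3) := by
    push_neg
    exact ⟨fin_ne_of_val_ne (by omega), fin_ne_of_val_ne (by omega),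
      fin_ne_of_val_ne (by omega)⟩
  have hTneg : T x < 0 := by rw [inter_root_zero hr x i hi0] at hi; unfold T; linarith
  have hxj : x j.succ < x j.castSucc := by rw [inter_root_pos x j hj0] at hj; linarith
  have hF2 : reflect (root r j) x = x ∘ Equiv.swap j.castSucc j.succ :=
    reflect_root_swap x j hj0
  have hs0 : Equiv.swap j.castSucc j.succ 0 = 0 :=
    Equiv.swap_apply_of_ne_of_ne hc0.symm hd0.symm
  have hslit : ∀ m : Fin (r+1), (m = 1 ∨ m = 2 ∨ m = 3) →
      Equiv.swap j.castSucc j.succ m = m := by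
    intro m hm
    apply Equiv.swap_apply_of_ne_of_ne
    · rcases hm with h | h | h <;> rw [h] <;> exact fin_ne_of_val_ne (by omega)
    · rcases hm with h | h | h <;> rw [h] <;> exact fin_ne_of_val_ne (by omega)
  have hTs : T (x ∘ Equiv.swap j.castSucc j.succ) = T x := by
    unfold T
    rw [show (x ∘ Equiv.swap j.castSucc j.succ) 0 = x 0 from congrArg x hs0,
      show (x ∘ Equiv.swap j.castSucc j.succ) 1 = x 1 from
        congrArg x (hslit 1 (Or.inl rfl)),
      show (x ∘ Equiv.swap j.castSucc j.succ) 2 = x 2 from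
        congrArg x (hslit 2 (Or.inr (Or.inl rfl))),
      show (x ∘ Equiv.swap j.castSucc j.succ) 3 = x 3 from
        congrArg x (hslit 3 (Or.inr (Or.inr rfl)))]
  have hleg1 : inter (reflect (root r i) x) (root r j) < 0 := by
    rw [inter_root_pos _ j hj0,
      refl0_other hr x i hi0 j.succ hd0 hdnl,
      refl0_other hr x i hi0 j.castSucc hc0 hcnl]
    linarith
  have hleg2 : inter (reflect (root r j) x) (root r i) < 0 := by
    rw [inter_root_zero hr _ i hi0, hF2]
    have h2 := hTs
    unfold T at h2
    show (x ∘ Equiv.swap j.castSucc j.succ) 0 + (x ∘ Equiv.swap j.castSucc j.succ) 1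
      + (x ∘ Equiv.swap j.castSucc j.succ) 2 + (x ∘ Equiv.swap j.castSucc j.succ) 3 < 0
    unfold T at hTneg
    linarith
  have hEq : reflect (root r j) (reflect (root r i) x)
      = reflect (root r i) (reflect (root r j) x) := by
    rw [reflect_root_swap (reflect (root r i) x) j hj0, hF2]
    funext m
    show reflect (root r i) x (Equiv.swap j.castSucc j.succ m)
      = reflect (root r i) (x ∘ Equiv.swap j.castSucc j.succ) m
    rcases eq_or_ne m 0 with h0 | h0
    · rw [h0, hs0, refl0_at0 hr x i hi0, refl0_at0 hr _ i hi0, hTs]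
      show x 0 + T x = (x ∘ Equiv.swap j.castSucc j.succ) 0 + T x
      rw [show (x ∘ Equiv.swap j.castSucc j.succ) 0 = x 0 from congrArg x hs0]
    by_cases hlit : m = 1 ∨ m = 2 ∨ m = 3
    · rw [hslit m hlit, refl0_at123 hr x i hi0 m hlit, refl0_at123 hr _ i hi0 m hlit, hTs]
      show x m - T x = (x ∘ Equiv.swap j.castSucc j.succ) m - T x
      rw [show (x ∘ Equiv.swap j.castSucc j.succ) m = x m from congrArg x (hslit m hlit)]
    · -- m not a literal 0..3 : swap may move it among {castSucc, succ}
      have hval : ∀ k : Fin (r+1), k ≠ 0 → ¬(k = 1 ∨ k = 2 ∨ k = 3) → 4 ≤ (k:ℕ) := by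
        intro k hk0 hkl
        push_neg at hkl
        obtain ⟨k1, k2, k3⟩ := hkl
        have n0 : (k:ℕ) ≠ 0 := fun h => hk0 (Fin.ext (by rw [h, val0]))
        have n1 : (k:ℕ) ≠ 1 := fun h => k1 (Fin.ext (by rw [h, v1]))
        have n2 : (k:ℕ) ≠ 2 := fun h => k2 (Fin.ext (by rw [h, v2]))
        have n3 : (k:ℕ) ≠ 3 := fun h => k3 (Fin.ext (by rw [h, v3]))
        omega
      have hm4 : 4 ≤ (m:ℕ) := hval m h0 hlit
      have hsm0 : Equiv.swap j.castSucc j.succ m ≠ 0 := by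
        rcases eq_or_ne m j.castSucc with h | h
        · rw [h, Equiv.swap_apply_left]; exact hd0
        rcases eq_or_ne m j.succ with h2 | h2
        · rw [h2, Equiv.swap_apply_right]; exact hc0
        · rw [Equiv.swap_apply_of_ne_of_ne h h2]; exact h0
      have hsmnl : ¬(Equiv.swap j.castSucc j.succ m = 1 ∨ Equiv.swap j.castSucc j.succ m = 2
          ∨ Equiv.swap j.castSucc j.succ m = 3) := by
        rcases eq_or_ne m j.castSucc with h | h
        · rw [h, Equiv.swap_apply_left]; exact hdnl
        rcases eq_or_ne m j.succ with h2 | h2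
        · rw [h2, Equiv.swap_apply_right]; exact hcnl
        · rw [Equiv.swap_apply_of_ne_of_ne h h2]; exact hlit
      rw [refl0_other hr x i hi0 _ hsm0 hsmnl, refl0_other hr _ i hi0 m h0 hlit]
      rfl
  exact ⟨reflect (root r j) (reflect (root r i) x),
    star_single ⟨j, hleg1, rfl⟩, star_single ⟨i, hleg2, hEq⟩⟩

end Aux
namespace Aux
variable {r : ℕ}

lemma join_zero_three (hr : 3 ≤ r) (x : Fin (r+1) → ℤ) (i j : Fin r)
    (hi0 : (i:ℕ) = 0) (hj3 : (j:ℕ) = 3)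
    (hi : inter x (root r i) < 0) (hj : inter x (root r j) < 0) :
    ∃ G, Star (reflect (root r i) x) G ∧ Star (reflect (root r j) x) G := by
  have hj0 : (j:ℕ) ≠ 0 := by omega
  have v1 := val1 hr; have v2 := val2 hr; have v3 := val3 hr
  have hjc : j.castSucc = (3 : Fin (r+1)) :=
    Fin.ext (by rw [Fin.coe_castSucc, hj3, v3])
  have hvq : (j.succ : ℕ) = 4 := by rw [Fin.val_succ, hj3]
  have hq0 : j.succ ≠ 0 := fin_ne_of_val_ne (by rw [val0]; omega)
  have hqnl : ¬(j.succ = 1 ∨ j.succ = 2 ∨ j.succ = 3) := by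
    push_neg
    exact ⟨fin_ne_of_val_ne (by omega), fin_ne_of_val_ne (by omega),
      fin_ne_of_val_ne (by omega)⟩
  have h30 : (3 : Fin (r+1)) ≠ 0 := fin3_ne0 hr
  have h3q : (3 : Fin (r+1)) ≠ j.succ := fin_ne_of_val_ne (by omega)
  have h1q : (1 : Fin (r+1)) ≠ j.succ := fin_ne_of_val_ne (by omega)
  have h2q : (2 : Fin (r+1)) ≠ j.succ := fin_ne_of_val_ne (by omega)
  have h0q : (0 : Fin (r+1)) ≠ j.succ := fin_ne_of_val_ne (by rw [val0]; omega)
  set sw := Equiv.swap (3 : Fin (r+1)) j.succ with hswdef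
  have hsw3 : sw 3 = j.succ := Equiv.swap_apply_left _ _
  have hswq : sw j.succ = 3 := Equiv.swap_apply_right _ _
  have hsw0 : sw 0 = 0 := Equiv.swap_apply_of_ne_of_ne h30.symm h0q
  have hsw1 : sw 1 = 1 := Equiv.swap_apply_of_ne_of_ne (fin13 hr) h1q
  have hsw2 : sw 2 = 2 := Equiv.swap_apply_of_ne_of_ne (fin23 hr) h2q
  have hT : T x < 0 := by rw [inter_root_zero hr x i hi0] at hi; unfold T; linarith
  have hA : x j.succ - x 3 < 0 := by rw [inter_root_pos x j hj0, hjc] at hj; linarith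
  -- side 1 : σ₀ then σⱼ then σ₀
  set F1 := reflect (root r i) x with hF1def
  have hF1_0 : F1 0 = x 0 + T x := refl0_at0 hr x i hi0
  have hF1_1 : F1 1 = x 1 - T x := refl0_at123 hr x i hi0 1 (Or.inl rfl)
  have hF1_2 : F1 2 = x 2 - T x := refl0_at123 hr x i hi0 2 (Or.inr (Or.inl rfl))
  have hF1_3 : F1 3 = x 3 - T x := refl0_at123 hr x i hi0 3 (Or.inr (Or.inr rfl))
  have hF1_q : F1 j.succ = x j.succ := refl0_other hr x i hi0 j.succ hq0 hqnl
  have hleg11 : inter F1 (root r j) < 0 := by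
    rw [inter_root_pos _ j hj0, hjc, hF1_q, hF1_3]
    linarith
  set F1' := reflect (root r j) F1 with hF1'def
  have hF1'c : F1' = F1 ∘ sw := by rw [hF1'def, reflect_root_swap F1 j hj0, hjc]
  have hF1'_0 : F1' 0 = x 0 + T x := by
    rw [hF1'c]; show F1 (sw 0) = _; rw [hsw0, hF1_0]
  have hF1'_1 : F1' 1 = x 1 - T x := by
    rw [hF1'c]; show F1 (sw 1) = _; rw [hsw1, hF1_1]
  have hF1'_2 : F1' 2 = x 2 - T x := by
    rw [hF1'c]; show F1 (sw 2) = _; rw [hsw2, hF1_2]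
  have hF1'_3 : F1' 3 = x j.succ := by
    rw [hF1'c]; show F1 (sw 3) = _; rw [hsw3, hF1_q]
  have hF1'_q : F1' j.succ = x 3 - T x := by
    rw [hF1'c]; show F1 (sw j.succ) = _; rw [hswq, hF1_3]
  have hTF1' : T F1' = x j.succ - x 3 := by
    unfold T
    rw [hF1'_0, hF1'_1, hF1'_2, hF1'_3]
    unfold T
    ring
  have hleg12 : inter F1' (root r i) < 0 := by
    rw [inter_root_zero hr _ i hi0]
    have := hTF1'
    unfold T at this
    linarith
  -- side 2 : σⱼ then σ₀ then σⱼ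
  set F2 := reflect (root r j) x with hF2def
  have hF2c : F2 = x ∘ sw := by rw [hF2def, reflect_root_swap x j hj0, hjc]
  have hF2_0 : F2 0 = x 0 := by rw [hF2c]; show x (sw 0) = _; rw [hsw0]
  have hF2_1 : F2 1 = x 1 := by rw [hF2c]; show x (sw 1) = _; rw [hsw1]
  have hF2_2 : F2 2 = x 2 := by rw [hF2c]; show x (sw 2) = _; rw [hsw2]
  have hF2_3 : F2 3 = x j.succ := by rw [hF2c]; show x (sw 3) = _; rw [hsw3]
  have hF2_q : F2 j.succ = x 3 := by rw [hF2c]; show x (sw j.succ) = _; rw [hswq]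
  have hTF2 : T F2 = T x + (x j.succ - x 3) := by
    unfold T
    rw [hF2_0, hF2_1, hF2_2, hF2_3]
    ring
  have hleg21 : inter F2 (root r i) < 0 := by
    rw [inter_root_zero hr _ i hi0]
    have h' := hTF2
    have hT' := hT
    unfold T at h' hT'
    linarith
  set F2' := reflect (root r i) F2 with hF2'def
  have hF2'_0 : F2' 0 = F2 0 + T F2 := refl0_at0 hr F2 i hi0
  have hF2'_1 : F2' 1 = F2 1 - T F2 := refl0_at123 hr F2 i hi0 1 (Or.inl rfl)
  have hF2'_2 : F2' 2 = F2 2 - T F2 := refl0_at123 hr F2 i hi0 2 (Or.inr (Or.inl rfl))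
  have hF2'_3 : F2' 3 = F2 3 - T F2 := refl0_at123 hr F2 i hi0 3 (Or.inr (Or.inr rfl))
  have hF2'_q : F2' j.succ = F2 j.succ := refl0_other hr F2 i hi0 j.succ hq0 hqnl
  have hleg22 : inter F2' (root r j) < 0 := by
    rw [inter_root_pos _ j hj0, hjc, hF2'_q, hF2'_3, hF2_q, hF2_3, hTF2]
    linarith
  -- the two results agree
  have hEq : reflect (root r i) F1' = reflect (root r j) F2' := by
    rw [reflect_root_swap F2' j hj0, hjc]
    funext m
    show reflect (root r i) F1' m = F2' (sw m)
    rcases eq_or_ne m 0 with h0 | h0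
    · rw [h0, hsw0, refl0_at0 hr F1' i hi0, hF1'_0, hTF1', hF2'_0, hF2_0, hTF2]
      ring
    rcases eq_or_ne m 1 with h1 | h1
    · rw [h1, hsw1, refl0_at123 hr F1' i hi0 1 (Or.inl rfl), hF1'_1, hTF1',
        hF2'_1, hF2_1, hTF2]
      ring
    rcases eq_or_ne m 2 with h2 | h2
    · rw [h2, hsw2, refl0_at123 hr F1' i hi0 2 (Or.inr (Or.inl rfl)), hF1'_2, hTF1',
        hF2'_2, hF2_2, hTF2]
      ring
    rcases eq_or_ne m 3 with h3 | h3
    · rw [h3, hsw3, refl0_at123 hr F1' i hi0 3 (Or.inr (Or.inr rfl)), hF1'_3, hTF1',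
        hF2'_q, hF2_q]
      ring
    rcases eq_or_ne m j.succ with hq | hq
    · rw [hq, hswq,
        refl0_other hr F1' i hi0 j.succ hq0 hqnl, hF1'_q, hF2'_3, hF2_3, hTF2]
      ring
    · have hmnl : ¬(m = 1 ∨ m = 2 ∨ m = 3) := by push_neg; exact ⟨h1, h2, h3⟩
      have hswm : sw m = m := Equiv.swap_apply_of_ne_of_ne h3 hq
      rw [hswm, refl0_other hr F1' i hi0 m h0 hmnl, hF2'def,
        refl0_other hr F2 i hi0 m h0 hmnl, hF1'c, hF2c]
      show F1 (sw m) = x (sw m)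
      rw [hswm]
      exact refl0_other hr x i hi0 m h0 hmnl
  exact ⟨reflect (root r i) F1',
    star_trans (star_single ⟨j, hleg11, rfl⟩) (star_single ⟨i, hleg12, rfl⟩),
    star_trans (star_single ⟨i, hleg21, rfl⟩) (star_single ⟨j, hleg22, hEq⟩)⟩

end Aux
namespace Aux
variable {r : ℕ}

lemma joinAux (hr : 3 ≤ r) (x : Fin (r+1) → ℤ) (i j : Fin r)
    (hi : inter x (root r i) < 0) (hj : inter x (root r j) < 0) (hij : (i:ℕ) < (j:ℕ)) :
    ∃ G, Star (reflect (root r i) x) G ∧ Star (reflect (root r j) x) G := by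
  have v1 := val1 hr; have v2 := val2 hr; have v3 := val3 hr
  rcases eq_or_ne (i:ℕ) 0 with hi0 | hi0
  · have hj0 : (j:ℕ) ≠ 0 := by omega
    rcases eq_or_ne (j:ℕ) 1 with hj1 | hj1
    · refine join_zero_perm hr x i j hi0 hj0 1 2 3
        (Fin.ext (by rw [Fin.coe_castSucc, hj1, v1]))
        (Fin.ext (by rw [Fin.val_succ, hj1, v2]))
        (fun y => rfl) (fun m => Iff.rfl) (fin12 hr) (fin13 hr) (fin23 hr) hi hj
    rcases eq_or_ne (j:ℕ) 2 with hj2 | hj2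
    · refine join_zero_perm hr x i j hi0 hj0 2 3 1
        (Fin.ext (by rw [Fin.coe_castSucc, hj2, v2]))
        (Fin.ext (by rw [Fin.val_succ, hj2, v3]))
        (fun y => by ring) (fun m => by tauto) (fin23 hr) (fin12 hr).symm
        (fin13 hr).symm hi hj
    rcases eq_or_ne (j:ℕ) 3 with hj3 | hj3
    · exact join_zero_three hr x i j hi0 hj3 hi hj
    · exact join_zero_far hr x i j hi0 (by omega) hi hj
  · rcases eq_or_ne (j:ℕ) ((i:ℕ) + 1) with hadj | hadj
    · exact join_adj_swaps x i j hi0 hadj hi hj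
    · exact join_far_swaps x i j hi0 (by omega) (by omega) hi hj

lemma diamond (hr : 3 ≤ r) {E F1 F2 : Fin (r+1) → ℤ} (h1 : Move E F1) (h2 : Move E F2) :
    ∃ G, Star F1 G ∧ Star F2 G := by
  obtain ⟨i, hi, rfl⟩ := h1
  obtain ⟨j, hj, rfl⟩ := h2
  rcases lt_trichotomy (i:ℕ) (j:ℕ) with h | h | h
  · exact joinAux hr E i j hi hj h
  · have hij : i = j := Fin.ext h
    subst hij
    exact ⟨reflect (root r i) E, star_refl _, star_refl _⟩
  · obtain ⟨G, g1, g2⟩ := joinAux hr E j i hj hi h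
    exact ⟨G, g2, g1⟩

/-- A predicate stable under all the reflections and forcing nonnegative degree. -/
def SClosed (S : (Fin (r+1) → ℤ) → Prop) : Prop :=
  (∀ (k : Fin r) (x : Fin (r+1) → ℤ), S x → S (reflect (root r k) x)) ∧
  (∀ x, S x → 0 ≤ x 0)

lemma S_star {S : (Fin (r+1) → ℤ) → Prop} (hS : SClosed S) {x y : Fin (r+1) → ℤ}
    (h : Star x y) (hx : S x) : S y := by
  induction h with
  | refl => exact hx
  | tail hab hbc ih =>
      obtain ⟨k, _, rfl⟩ := hbc
      exact hS.1 k _ ih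

lemma S_move {S : (Fin (r+1) → ℤ) → Prop} (hS : SClosed S) {x y : Fin (r+1) → ℤ}
    (h : Move x y) (hx : S x) : S y := by
  obtain ⟨k, _, rfl⟩ := h
  exact hS.1 k _ hx

lemma confluence (hr : 3 ≤ r) {S : (Fin (r+1) → ℤ) → Prop} (hS : SClosed S) :
    ∀ n (x : Fin (r+1) → ℤ), meas x = n → S x →
      ∀ y z, Star x y → Star x z → ∃ w, Star y w ∧ Star z w := by
  intro n
  induction n using Nat.strong_induction_on with
  | _ n IH =>
    intro x hn hSx y z hxy hxz
    rcases Relation.ReflTransGen.cases_head hxy with rfl | ⟨b, hb, hby⟩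
    · exact ⟨z, hxz, star_refl z⟩
    rcases Relation.ReflTransGen.cases_head hxz with rfl | ⟨c, hc, hcz⟩
    · exact ⟨y, star_refl y, Relation.ReflTransGen.head hb hby⟩
    have hSb : S b := S_move hS hb hSx
    have hSc : S c := S_move hS hc hSx
    have hmb : meas b < n := hn ▸ meas_decrease hr hb (hS.2 x hSx) (hS.2 b hSb)
    have hmc : meas c < n := hn ▸ meas_decrease hr hc (hS.2 x hSx) (hS.2 c hSc)
    obtain ⟨d, hbd, hcd⟩ := diamond hr hb hc
    obtain ⟨e, hye, hde⟩ := IH (meas b) hmb b rfl hSb y d hby hbd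
    obtain ⟨w, hzw, hew⟩ := IH (meas c) hmc c rfl hSc z e hcz (star_trans hcd hde)
    exact ⟨w, star_trans hye hew, hzw⟩

lemma chamber_star_eq {t y : Fin (r+1) → ℤ} (ht : Chamber t) (h : Star t y) : y = t := by
  rcases Relation.ReflTransGen.cases_head h with rfl | ⟨b, hb, _⟩
  · rfl
  · obtain ⟨k, hneg, _⟩ := hb
    exact absurd (ht k) (not_le.2 hneg)

lemma exists_chamber (hr : 3 ≤ r) {S : (Fin (r+1) → ℤ) → Prop} (hS : SClosed S) :
    ∀ n (x : Fin (r+1) → ℤ), meas x = n → S x → ∃ t, Star x t ∧ Chamber t := by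
  intro n
  induction n using Nat.strong_induction_on with
  | _ n IH =>
    intro x hn hSx
    by_cases hch : Chamber x
    · exact ⟨x, star_refl x, hch⟩
    · unfold Chamber at hch
      push_neg at hch
      obtain ⟨k, hk⟩ := hch
      have hmove : Move x (reflect (root r k) x) := ⟨k, hk, rfl⟩
      have hSb : S (reflect (root r k) x) := hS.1 k x hSx
      have hm : meas (reflect (root r k) x) < n :=
        hn ▸ meas_decrease hr hmove (hS.2 x hSx) (hS.2 _ hSb)
      obtain ⟨t, h1, h2⟩ := IH _ hm _ rfl hSb
      exact ⟨t, Relation.ReflTransGen.head hmove h1, h2⟩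

lemma star_to_chamber_unique (hr : 3 ≤ r) {S : (Fin (r+1) → ℤ) → Prop} (hS : SClosed S)
    {x t1 t2 : Fin (r+1) → ℤ} (hSx : S x) (h1 : Star x t1) (hc1 : Chamber t1)
    (h2 : Star x t2) (hc2 : Chamber t2) : t1 = t2 := by
  obtain ⟨w, hw1, hw2⟩ := confluence hr hS (meas x) x rfl hSx t1 t2 h1 h2
  rw [← chamber_star_eq hc1 hw1, ← chamber_star_eq hc2 hw2]

lemma reflect_to_chamber (hr : 3 ≤ r) {S : (Fin (r+1) → ℤ) → Prop} (hS : SClosed S)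
    {x t : Fin (r+1) → ℤ} (hSx : S x) (k : Fin r) (hxt : Star x t) (hc : Chamber t) :
    Star (reflect (root r k) x) t := by
  rcases lt_trichotomy (inter x (root r k)) 0 with h | h | h
  · have hmove : Move x (reflect (root r k) x) := ⟨k, h, rfl⟩
    obtain ⟨w, hw1, hw2⟩ := confluence hr hS (meas x) x rfl hSx
      (reflect (root r k) x) t (star_single hmove) hxt
    rw [chamber_star_eq hc hw2] at hw1
    exact hw1
  · rw [reflect_eq_of_inter_zero _ _ h]
    exact hxt
  · have hinv : reflect (root r k) (reflect (root r k) x) = x := reflect_involution hr k x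
    have hneg : inter (reflect (root r k) x) (root r k) < 0 := by
      have : inter (reflect (root r k) x) (root r k) = - inter x (root r k) := by
        unfold reflect
        rw [inter_add_left, inter_smul_left, root_self hr k]
        ring
      rw [this]
      linarith
    exact Relation.ReflTransGen.head ⟨k, hneg, hinv.symm⟩ hxt

lemma weyl_to_chamber (hr : 3 ≤ r) {S : (Fin (r+1) → ℤ) → Prop} (hS : SClosed S)
    {f : (Fin (r+1) → ℤ) → (Fin (r+1) → ℤ)} (hf : InWeyl r f) :
    ∀ x t, S x → Star x t → Chamber t → S (f x) ∧ Star (f x) t := by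
  induction hf using Submonoid.closure_induction with
  | mem g hg =>
      obtain ⟨k, rfl⟩ := hg
      intro x t hSx hxt hc
      exact ⟨hS.1 k x hSx, reflect_to_chamber hr hS hSx k hxt hc⟩
  | one => exact fun x t hSx hxt hc => ⟨hSx, hxt⟩
  | mul a b ha hb iha ihb =>
      intro x t hSx hxt hc
      obtain ⟨hSb, hb'⟩ := ihb x t hSx hxt hc
      exact iha (b x) t hSb hb' hc

lemma star_inter_mono (hr : 3 ≤ r) {H : Fin (r+1) → ℤ} (hcham : Chamber H)
    {x y : Fin (r+1) → ℤ} (h : Star x y) : inter H y ≤ inter H x := by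
  induction h with
  | refl => exact le_refl _
  | @tail b c hab hbc ih =>
      obtain ⟨k, hneg, rfl⟩ := hbc
      have heq : inter H (reflect (root r k) b) = inter H b
          + inter b (root r k) * inter H (root r k) := by
        unfold reflect
        rw [inter_add_right, inter_smul_right]
      rw [heq]
      have := mul_nonpos_of_nonpos_of_nonneg (le_of_lt hneg) (hcham k)
      linarith

end Aux
namespace Aux
variable {r : ℕ}

lemma last_ne0 (hr : 3 ≤ r) : (Fin.last r) ≠ (0 : Fin (r+1)) :=
  fin_ne_of_val_ne (by rw [Fin.val_last, val0]; omega)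

lemma Eb_nonneg (i j : Fin (r+1)) : 0 ≤ Eb r i j := by
  rw [Eb_apply]; split_ifs <;> norm_num

lemma SQ_Er (hr : 3 ≤ r) : SQ (Eb r (Fin.last r)) := by
  refine ⟨?_, ?_, ?_⟩
  · rw [inter_Eb _ _ (last_ne0 hr), Eb_apply, if_pos rfl]
  · rw [inter_comm, inter_Eb _ _ (last_ne0 hr)]
    show -Kc r (Fin.last r) = -1
    unfold Kc
    rw [if_neg (last_ne0 hr)]
  · rw [Eb_apply, if_neg (last_ne0 hr).symm]

lemma chamber_Er (hr : 3 ≤ r) : Chamber (Eb r (Fin.last r)) := by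
  intro k
  rcases eq_or_ne (k:ℕ) 0 with hk | hk
  · rw [inter_root_zero hr _ k hk]
    have h0 := Eb_nonneg (r := r) (Fin.last r) 0
    have h1 := Eb_nonneg (r := r) (Fin.last r) 1
    have h2 := Eb_nonneg (r := r) (Fin.last r) 2
    have h3 := Eb_nonneg (r := r) (Fin.last r) 3
    linarith
  · rw [inter_root_pos _ k hk]
    have hcast : Eb r (Fin.last r) k.castSucc = 0 := by
      rw [Eb_apply, if_neg (fin_ne_of_val_ne
        (by rw [Fin.coe_castSucc, Fin.val_last]; exact Nat.ne_of_lt k.isLt))]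
    rw [hcast]
    have := Eb_nonneg (r := r) (Fin.last r) k.succ
    linarith

lemma exceptional_Eb_aux (hr : 3 ≤ r) :
    ∀ n (i : Fin (r+1)), (i:ℕ) + n = r → 1 ≤ (i:ℕ) → Exceptional r (Eb r i) := by
  intro n
  induction n with
  | zero =>
      intro i hi h1
      have : i = Fin.last r := Fin.ext (by rw [Fin.val_last]; omega)
      rw [this]
      exact ⟨id, InWeyl_id, rfl⟩
  | succ n ih =>
      intro i hi h1
      have hbound : (i:ℕ) < r := by omega
      set k : Fin r := ⟨(i:ℕ), hbound⟩ with hkdef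
      have hk0 : (k:ℕ) ≠ 0 := by show (i:ℕ) ≠ 0; omega
      have hkc : k.castSucc = i := Fin.ext (by rw [Fin.coe_castSucc])
      set i' : Fin (r+1) := k.succ with hi'def
      have hvi' : (i':ℕ) = (i:ℕ) + 1 := Fin.val_succ k
      have hexc' : Exceptional r (Eb r i') := ih i' (by omega) (by omega)
      have hii' : i ≠ i' := fin_ne_of_val_ne (by omega)
      have heq : reflect (root r k) (Eb r i') = Eb r i := by
        rw [reflect_root_swap _ k hk0, hkc]
        funext j
        show Eb r i' (Equiv.swap i i' j) = Eb r i j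
        rcases eq_or_ne j i with hj | hj
        · rw [hj, Equiv.swap_apply_left]
          show Eb r i' i' = Eb r i i
          rw [Eb_apply, if_pos rfl, Eb_apply, if_pos rfl]
        rcases eq_or_ne j i' with hj' | hj'
        · rw [hj', Equiv.swap_apply_right]
          show Eb r i' i = Eb r i i'
          rw [Eb_apply, if_neg hii', Eb_apply, if_neg (fun h => hii' h.symm)]
        · rw [Equiv.swap_apply_of_ne_of_ne hj hj']
          show Eb r i' j = Eb r i j
          rw [Eb_apply, if_neg hj', Eb_apply, if_neg hj]
      rw [← heq]
      exact Exceptional_W (InWeyl_refl k) hexc'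

lemma exceptional_Eb (hr : 3 ≤ r) (i : Fin (r+1)) (h1 : 1 ≤ (i:ℕ)) :
    Exceptional r (Eb r i) :=
  exceptional_Eb_aux hr (r - (i:ℕ)) i (by have := i.isLt; omega) h1

/-- The root index 0. -/
def k0 (hr : 3 ≤ r) : Fin r := ⟨0, by omega⟩

lemma k0_val (hr : 3 ≤ r) : ((k0 hr : Fin r):ℕ) = 0 := rfl

/-- The class `E₀ - E₁ - E₂`, as the reflection of `E₃` in `r₀`. -/
lemma exceptional_cls012 (hr : 3 ≤ r) :
    Exceptional r (reflect (root r (k0 hr)) (Eb r 3)) :=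
  Exceptional_W (InWeyl_refl (k0 hr))
    (exceptional_Eb hr 3 (by rw [val3 hr]; omega))

lemma inter_cls012 (hr : 3 ≤ r) (H : Fin (r+1) → ℤ) :
    inter H (reflect (root r (k0 hr)) (Eb r 3)) = H 0 + H 1 + H 2 := by
  unfold reflect
  rw [inter_add_right, inter_smul_right, inter_Eb _ _ (fin3_ne0 hr),
    inter_root_zero hr _ _ (k0_val hr), inter_root_zero hr _ _ (k0_val hr)]
  have e0 : Eb r 3 0 = 0 := by rw [Eb_apply, if_neg (fin3_ne0 hr).symm]
  have e1 : Eb r 3 1 = 0 := by rw [Eb_apply, if_neg (fin13 hr)]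
  have e2 : Eb r 3 2 = 0 := by rw [Eb_apply, if_neg (fin23 hr)]
  have e3 : Eb r 3 3 = 1 := by rw [Eb_apply, if_pos rfl]
  rw [e0, e1, e2, e3]
  ring

lemma inter_Er (H : Fin (r+1) → ℤ) (hr : 3 ≤ r) :
    inter H (Eb r (Fin.last r)) = - H (Fin.last r) :=
  inter_Eb H _ (last_ne0 hr)

lemma NN_d_nonneg (hr : 3 ≤ r) {x : Fin (r+1) → ℤ} (h : NN x) : 0 ≤ x 0 := by
  have h1 := h _ (exceptional_Eb hr 1 (by rw [val1 hr]))
  have h2 := h _ (exceptional_Eb hr 2 (by rw [val2 hr]; omega))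
  have h3 := h _ (exceptional_cls012 hr)
  rw [inter_Eb _ _ (fin1_ne0 hr)] at h1
  rw [inter_Eb _ _ (fin2_ne0 hr)] at h2
  rw [inter_cls012 hr] at h3
  linarith

lemma NN_SClosed (hr : 3 ≤ r) : SClosed (fun x : Fin (r+1) → ℤ => NN x) :=
  ⟨fun k x h => NN_reflect hr k h, fun x h => NN_d_nonneg hr h⟩

lemma SQ_SClosed (hr : 3 ≤ r) : SClosed (fun x : Fin (r+1) → ℤ => SQ x) :=
  ⟨fun k x h => SQ_reflect hr k h, fun x h => h.2.2⟩

lemma mono_of_adjacent (f : Fin (r+1) → ℤ)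
    (hadj : ∀ k : Fin r, (k:ℕ) ≠ 0 → f k.castSucc ≤ f k.succ) :
    ∀ d (i j : Fin (r+1)), 1 ≤ (i:ℕ) → (j:ℕ) = (i:ℕ) + d → f i ≤ f j := by
  intro d
  induction d with
  | zero =>
      intro i j h1 hj
      have : i = j := Fin.ext (by omega)
      rw [this]
  | succ d ihd =>
      intro i j h1 hj
      have hbound : (i:ℕ) + d < r := by have := j.isLt; omega
      set k : Fin r := ⟨(i:ℕ) + d, hbound⟩ with hkdef
      have hkc : (k.castSucc:ℕ) = (i:ℕ) + d := Fin.coe_castSucc k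
      have hks : k.succ = j := Fin.ext (by rw [Fin.val_succ]; show (i:ℕ) + d + 1 = (j:ℕ); omega)
      have step1 : f i ≤ f k.castSucc := ihd i k.castSucc h1 (by rw [hkc])
      have step2 : f k.castSucc ≤ f k.succ := hadj k (by show (i:ℕ) + d ≠ 0; omega)
      rw [← hks]
      linarith

lemma EStandard_to_chamber (hr : 3 ≤ r) {H : Fin (r+1) → ℤ} (h : EStandard r H) :
    Chamber H := by
  obtain ⟨h1, h2, h3, h4, h5⟩ := h
  intro k
  rcases eq_or_ne (k:ℕ) 0 with hk | hk
  · rw [inter_root_zero hr _ k hk]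
    linarith
  · rw [inter_root_pos _ k hk]
    have := h2 k.castSucc k.succ (by rw [Fin.coe_castSucc]; omega)
      (by rw [Fin.le_def, Fin.coe_castSucc, Fin.val_succ]; omega)
    linarith

lemma chamber_NN_EStandard (hr : 3 ≤ r) {H : Fin (r+1) → ℤ}
    (hch : Chamber H) (hnn : NN H) : EStandard r H := by
  have hadj : ∀ k : Fin r, (k:ℕ) ≠ 0 → H k.castSucc ≤ H k.succ := by
    intro k hk
    have := hch k
    rw [inter_root_pos _ k hk] at this
    linarith
  have hmono : ∀ i j : Fin (r+1), 1 ≤ (i:ℕ) → i ≤ j → -H j ≤ -H i := by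
    intro i j h1 hij
    have hij' : (i:ℕ) ≤ (j:ℕ) := Fin.le_def.1 hij
    have := mono_of_adjacent H hadj ((j:ℕ) - (i:ℕ)) i j h1 (by omega)
    linarith
  have hlast : 0 ≤ -H (Fin.last r) := by
    have := hnn _ (⟨id, InWeyl_id, rfl⟩ : Exceptional r (Eb r (Fin.last r)))
    rw [inter_Er H hr] at this
    linarith
  have h012 : 0 ≤ H 0 + H 1 + H 2 := by
    have := hnn _ (exceptional_cls012 hr)
    rw [inter_cls012 hr] at this
    linarith
  have hroot0 : 0 ≤ H 0 + H 1 + H 2 + H 3 := by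
    have := hch (k0 hr)
    rw [inter_root_zero hr _ _ (k0_val hr)] at this
    linarith
  have h2last : -H (Fin.last r) ≤ -H 2 := by
    apply hmono 2 (Fin.last r) (by rw [val2 hr]; omega)
    rw [Fin.le_def, val2 hr, Fin.val_last]
    omega
  refine ⟨by linarith, hmono, hlast, by linarith, by linarith⟩

end Aux
/-- A class `H` in `Pic_r` is standard if and only if `H·E ≥ 0` for every
exceptional class `E`. -/
theorem standard_iff_nonneg_on_exceptional (r : ℕ) (hr : 3 ≤ r)
    (H : Fin (r + 1) → ℤ) :
    Standard r H ↔ ∀ Ex : Fin (r + 1) → ℤ, Exceptional r Ex → 0 ≤ inter H Ex := by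
  constructor
  · rintro ⟨f, hf, hstd⟩ Ex ⟨g, hg, rfl⟩
    have hiw : InWeyl r (f ∘ g) := Aux.InWeyl_comp hf hg
    have h1 : inter H (g (Eb r (Fin.last r)))
        = inter (f H) ((f ∘ g) (Eb r (Fin.last r))) := by
      rw [← Aux.inter_W hr hf H (g (Eb r (Fin.last r)))]
      rfl
    have hstar : Aux.Star ((f ∘ g) (Eb r (Fin.last r))) (Eb r (Fin.last r)) :=
      (Aux.weyl_to_chamber hr (Aux.SQ_SClosed hr) hiw (Eb r (Fin.last r))
        (Eb r (Fin.last r)) (Aux.SQ_Er hr) (Aux.star_refl _) (Aux.chamber_Er hr)).2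
    have hmono := Aux.star_inter_mono hr (Aux.EStandard_to_chamber hr hstd) hstar
    have hlast : 0 ≤ inter (f H) (Eb r (Fin.last r)) := by
      rw [Aux.inter_Er (f H) hr]
      exact hstd.2.2.1
    rw [h1]
    linarith [hmono, hlast]
  · intro hnn
    have hNN : Aux.NN H := hnn
    obtain ⟨t, hstar, hcham⟩ :=
      Aux.exists_chamber hr (Aux.NN_SClosed hr) (Aux.meas H) H rfl hNN
    obtain ⟨f, hf, hft⟩ := Aux.star_exists_weyl hstar
    have hNNt : Aux.NN t := Aux.S_star (Aux.NN_SClosed hr) hstar hNN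
    exact ⟨f, hf, by rw [← hft]; exact Aux.chamber_NN_EStandard hr hcham hNNt⟩
end

section
/- A class H in Pic_r is semi-standard if and only if H·E ≥ 0 for every line class E and every pencil class E. -/
open Finset

/-! ### Toolkit -/

section Toolkit

variable {r : ℕ}

lemma inter_comm (x y : Fin (r+1) → ℤ) : inter x y = inter y x := by
  unfold inter
  rw [mul_comm (x 0) (y 0)]
  congr 1
  exact Finset.sum_congr rfl fun i _ => mul_comm _ _

lemma inter_add_left (x y z : Fin (r+1) → ℤ) :
    inter (x + y) z = inter x z + inter y z := by
  unfold inter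
  simp only [Pi.add_apply, add_mul]
  rw [Finset.sum_add_distrib]
  ring

lemma inter_sub_left (x y z : Fin (r+1) → ℤ) :
    inter (x - y) z = inter x z - inter y z := by
  unfold inter
  simp only [Pi.sub_apply, sub_mul]
  rw [Finset.sum_sub_distrib]
  ring

lemma inter_smul_left (c : ℤ) (x z : Fin (r+1) → ℤ) :
    inter (c • x) z = c * inter x z := by
  unfold inter
  simp only [Pi.smul_apply, smul_eq_mul]
  rw [mul_sub, Finset.mul_sum]
  congr 1
  · ring
  · exact Finset.sum_congr rfl fun i _ => by ring

lemma inter_add_right (x y z : Fin (r+1) → ℤ) :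
    inter x (y + z) = inter x y + inter x z := by
  rw [inter_comm, inter_add_left, inter_comm y x, inter_comm z x]

lemma inter_sub_right (x y z : Fin (r+1) → ℤ) :
    inter x (y - z) = inter x y - inter x z := by
  rw [inter_comm, inter_sub_left, inter_comm y x, inter_comm z x]

lemma inter_smul_right (c : ℤ) (x z : Fin (r+1) → ℤ) :
    inter x (c • z) = c * inter x z := by
  rw [inter_comm, inter_smul_left, inter_comm z x]

lemma inter_Eb_right (x : Fin (r+1) → ℤ) (t : Fin (r+1)) :
    inter x (Eb r t) = (if t = 0 then x 0 else - x t) := by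
  unfold inter Eb
  have : ∀ i : Fin (r+1), x i * (if i = t then 1 else 0) = if i = t then x i else 0 := by
    intro i; split <;> simp
  rw [Finset.sum_congr rfl fun i _ => this i, Finset.sum_ite_eq' Finset.univ t x]
  simp only [Finset.mem_univ, if_true]
  by_cases h : t = 0
  · subst h; simp; ring
  · rw [if_neg h, if_neg (Ne.symm h)]
    ring

/-! ### Fin literals -/

lemma fv1 (hr : 3 ≤ r) : ((1 : Fin (r+1)) : ℕ) = 1 := by
  have h : ((1 : Fin (r+1)) : ℕ) = 1 % (r+1) := rfl
  rw [h, Nat.mod_eq_of_lt (by omega)]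

lemma fv2 (hr : 3 ≤ r) : ((2 : Fin (r+1)) : ℕ) = 2 := by
  have h : ((2 : Fin (r+1)) : ℕ) = 2 % (r+1) := rfl
  rw [h, Nat.mod_eq_of_lt (by omega)]

lemma fv3 (hr : 3 ≤ r) : ((3 : Fin (r+1)) : ℕ) = 3 := by
  have h : ((3 : Fin (r+1)) : ℕ) = 3 % (r+1) := rfl
  rw [h, Nat.mod_eq_of_lt (by omega)]

lemma fne1 (hr : 3 ≤ r) : (1 : Fin (r+1)) ≠ 0 := by
  apply Fin.ne_of_val_ne; rw [fv1 hr, Fin.val_zero]; omega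

lemma fne2 (hr : 3 ≤ r) : (2 : Fin (r+1)) ≠ 0 := by
  apply Fin.ne_of_val_ne; rw [fv2 hr, Fin.val_zero]; omega

lemma fne3 (hr : 3 ≤ r) : (3 : Fin (r+1)) ≠ 0 := by
  apply Fin.ne_of_val_ne; rw [fv3 hr, Fin.val_zero]; omega

lemma fne12 (hr : 3 ≤ r) : (1 : Fin (r+1)) ≠ 2 := by
  apply Fin.ne_of_val_ne; rw [fv1 hr, fv2 hr]; omega

lemma fne13 (hr : 3 ≤ r) : (1 : Fin (r+1)) ≠ 3 := by
  apply Fin.ne_of_val_ne; rw [fv1 hr, fv3 hr]; omega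

lemma fne23 (hr : 3 ≤ r) : (2 : Fin (r+1)) ≠ 3 := by
  apply Fin.ne_of_val_ne; rw [fv2 hr, fv3 hr]; omega

/-! ### ev3 and roots -/

/-- `E_0 - E_i - E_j - E_k`. -/
def ev3 {r : ℕ} (i j k : Fin (r+1)) : Fin (r+1) → ℤ :=
  Eb r 0 - Eb r i - Eb r j - Eb r k

lemma ev3_apply (i j k u : Fin (r+1)) :
    ev3 i j k u = (if u = 0 then (1:ℤ) else 0) - (if u = i then 1 else 0)
      - (if u = j then 1 else 0) - (if u = k then 1 else 0) := by
  simp [ev3, Eb]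

lemma inter_ev3 {i j k : Fin (r+1)} (hi : i ≠ 0) (hj : j ≠ 0) (hk : k ≠ 0)
    (x : Fin (r+1) → ℤ) :
    inter x (ev3 i j k) = x 0 + x i + x j + x k := by
  unfold ev3
  rw [inter_sub_right, inter_sub_right, inter_sub_right,
    inter_Eb_right, inter_Eb_right, inter_Eb_right, inter_Eb_right]
  rw [if_pos rfl, if_neg hi, if_neg hj, if_neg hk]
  ring

lemma ev3_self {i j k : Fin (r+1)} (hi : i ≠ 0) (hj : j ≠ 0) (hk : k ≠ 0)
    (hij : i ≠ j) (hik : i ≠ k) (hjk : j ≠ k) :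
    inter (ev3 i j k) (ev3 i j k) = -2 := by
  rw [inter_ev3 hi hj hk]
  rw [ev3_apply, ev3_apply, ev3_apply, ev3_apply]
  rw [if_pos rfl, if_neg (Ne.symm hi), if_neg (Ne.symm hj), if_neg (Ne.symm hk),
    if_neg hi, if_pos rfl, if_neg hij, if_neg hik,
    if_neg hj, if_neg (Ne.symm hij), if_pos rfl, if_neg hjk,
    if_neg hk, if_neg (Ne.symm hik), if_neg (Ne.symm hjk), if_pos rfl]
  ring

lemma root_zero_eq (hr : 3 ≤ r) {i : Fin r} (h : (i : ℕ) = 0) :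
    root r i = ev3 1 2 3 := by
  rw [root, if_pos h]; rfl

lemma castSucc_ne_zero {i : Fin r} (h : (i : ℕ) ≠ 0) : (i.castSucc : Fin (r+1)) ≠ 0 := by
  apply Fin.ne_of_val_ne; simpa using h

lemma inter_root_zero (hr : 3 ≤ r) {i : Fin r} (h : (i : ℕ) = 0) (x : Fin (r+1) → ℤ) :
    inter x (root r i) = x 0 + x 1 + x 2 + x 3 := by
  rw [root_zero_eq hr h, inter_ev3 (fne1 hr) (fne2 hr) (fne3 hr)]

lemma inter_root_pos {i : Fin r} (h : (i : ℕ) ≠ 0) (x : Fin (r+1) → ℤ) :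
    inter x (root r i) = x i.succ - x i.castSucc := by
  rw [root, if_neg h, inter_sub_right, inter_Eb_right, inter_Eb_right,
    if_neg (castSucc_ne_zero h), if_neg (Fin.succ_ne_zero i)]
  ring

lemma root_self (hr : 3 ≤ r) (i : Fin r) : inter (root r i) (root r i) = -2 := by
  by_cases h : (i : ℕ) = 0
  · rw [root_zero_eq hr h]
    exact ev3_self (fne1 hr) (fne2 hr) (fne3 hr) (fne12 hr) (fne13 hr) (fne23 hr)
  · rw [inter_root_pos h]
    have hne : (i.castSucc : Fin (r+1)) ≠ i.succ := by
      apply Fin.ne_of_val_ne; simp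
    rw [root, if_neg h]
    simp only [Pi.sub_apply, Eb]
    rw [if_neg (Ne.symm hne), if_neg hne]
    simp

/-! ### reflect -/

lemma reflect_apply (v x : Fin (r+1) → ℤ) (u : Fin (r+1)) :
    reflect v x u = x u + inter x v * v u := by
  simp [reflect]

lemma inter_reflect (v x y : Fin (r+1) → ℤ) (hv : inter v v = -2)
    : inter (reflect v x) (reflect v y) = inter x y := by
  unfold reflect
  simp only [inter_add_left, inter_add_right, inter_smul_left, inter_smul_right]
  rw [hv, inter_comm v y]
  ring

lemma reflect_reflect (v x : Fin (r+1) → ℤ) (hv : inter v v = -2) :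
    reflect v (reflect v x) = x := by
  have h1 : inter (reflect v x) v = - inter x v := by
    unfold reflect
    rw [inter_add_left, inter_smul_left, hv]; ring
  show reflect v x + inter (reflect v x) v • v = x
  rw [h1]
  show x + inter x v • v + -inter x v • v = x
  rw [neg_smul, add_neg_cancel_right]

lemma reflect_linear (v x w : Fin (r+1) → ℤ) (c : ℤ) :
    reflect v (x + c • w) = reflect v x + c • reflect v w := by
  unfold reflect
  rw [inter_add_left, inter_smul_left]
  funext u
  simp only [Pi.add_apply, Pi.smul_apply, smul_eq_mul]
  ring

/-! ### Weyl group machinery -/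

/-- the Weyl submonoid, with matching instances -/
def Wsub (r : ℕ) : Submonoid (Function.End (Fin (r + 1) → ℤ)) :=
  Submonoid.closure
    { g : Function.End (Fin (r + 1) → ℤ) | ∃ i : Fin r, g = reflect (root r i) }

lemma inweyl_iff (f : Function.End (Fin (r+1) → ℤ)) : InWeyl r f ↔ f ∈ Wsub r := Iff.rfl

lemma W_one : InWeyl r (id : Function.End (Fin (r+1) → ℤ)) := (Wsub r).one_mem

lemma W_mul {f g : Function.End (Fin (r+1) → ℤ)} (hf : InWeyl r f) (hg : InWeyl r g) :
    InWeyl r (f * g) := (Wsub r).mul_mem hf hg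

lemma W_gen (i : Fin r) : InWeyl r (reflect (root r i)) :=
  Submonoid.subset_closure ⟨i, rfl⟩

lemma end_mul_apply (f g : Function.End (Fin (r+1) → ℤ)) (x : Fin (r+1) → ℤ) :
    (f * g) x = f (g x) := rfl

lemma W_orth (hr : 3 ≤ r) {f : Function.End (Fin (r+1) → ℤ)} (hf : InWeyl r f) :
    ∀ x y, inter (f x) (f y) = inter x y := by
  induction hf using Submonoid.closure_induction with
  | mem g hg =>
    obtain ⟨i, rfl⟩ := hg
    exact fun x y => inter_reflect _ x y (root_self hr i)
  | one => exact fun x y => rfl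
  | mul g h hg hh ihg ihh =>
    intro x y
    rw [end_mul_apply, end_mul_apply, ihg, ihh]

lemma W_inv (hr : 3 ≤ r) {f : Function.End (Fin (r+1) → ℤ)} (hf : InWeyl r f) :
    ∃ g : Function.End (Fin (r+1) → ℤ),
      InWeyl r g ∧ (∀ x, g (f x) = x) ∧ (∀ x, f (g x) = x) := by
  induction hf using Submonoid.closure_induction with
  | mem g hg =>
    obtain ⟨i, rfl⟩ := hg
    exact ⟨reflect (root r i), W_gen i,
      fun x => reflect_reflect _ x (root_self hr i),
      fun x => reflect_reflect _ x (root_self hr i)⟩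
  | one => exact ⟨id, W_one, fun x => rfl, fun x => rfl⟩
  | mul g h hg hh ihg ihh =>
    obtain ⟨g', hg', hg'1, hg'2⟩ := ihg
    obtain ⟨h', hh', hh'1, hh'2⟩ := ihh
    refine ⟨h' * g', W_mul hh' hg', fun x => ?_, fun x => ?_⟩
    · rw [end_mul_apply, end_mul_apply, hg'1, hh'1]
    · rw [end_mul_apply, end_mul_apply, hh'2, hg'2]

lemma W_lin {f : Function.End (Fin (r+1) → ℤ)} (hf : InWeyl r f) :
    ∀ (x w : Fin (r+1) → ℤ) (c : ℤ), f (x + c • w) = f x + c • f w := by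
  induction hf using Submonoid.closure_induction with
  | mem g hg =>
    obtain ⟨i, rfl⟩ := hg
    exact fun x w c => reflect_linear _ x w c
  | one => exact fun x w c => rfl
  | mul g h hg hh ihg ihh =>
    intro x w c
    show g (h (x + c • w)) = g (h x) + c • g (h w)
    rw [ihh, ihg]

lemma Kc_zero : Kc r 0 = -3 := if_pos rfl

lemma Kc_ne {u : Fin (r+1)} (h : u ≠ 0) : Kc r u = 1 := if_neg h

lemma inter_K_root (hr : 3 ≤ r) (i : Fin r) : inter (Kc r) (root r i) = 0 := by
  by_cases h : (i : ℕ) = 0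
  · rw [inter_root_zero hr h, Kc_zero, Kc_ne (fne1 hr), Kc_ne (fne2 hr), Kc_ne (fne3 hr)]
    ring
  · rw [inter_root_pos h, Kc_ne (Fin.succ_ne_zero i), Kc_ne (castSucc_ne_zero h)]
    ring

lemma W_K (hr : 3 ≤ r) {f : Function.End (Fin (r+1) → ℤ)} (hf : InWeyl r f) :
    f (Kc r) = Kc r := by
  induction hf using Submonoid.closure_induction with
  | mem g hg =>
    obtain ⟨i, rfl⟩ := hg
    show Kc r + inter (Kc r) (root r i) • root r i = Kc r
    rw [inter_K_root hr i, zero_smul, add_zero]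
  | one => rfl
  | mul g h hg hh ihg ihh =>
    show g (h (Kc r)) = Kc r
    rw [ihh, ihg]

/-- transport of `inter` along an element of the Weyl group and its inverse -/
lemma W_transport (hr : 3 ≤ r) {f g : Function.End (Fin (r+1) → ℤ)}
    (hf : InWeyl r f) (hg : InWeyl r g) (hfg : ∀ x, f (g x) = x)
    (x w : Fin (r+1) → ℤ) : inter (f x) w = inter x (g w) := by
  conv_lhs => rw [← hfg w]
  rw [W_orth hr hf]

/-! ### Permutations -/

/-- action of a permutation of coordinates -/
def gperm {r : ℕ} (π : Equiv.Perm (Fin (r+1))) : Function.End (Fin (r+1) → ℤ) :=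
  fun x => x ∘ π

lemma gperm_apply (π : Equiv.Perm (Fin (r+1))) (x : Fin (r+1) → ℤ) (u : Fin (r+1)) :
    gperm π x u = x (π u) := rfl

lemma gperm_mul (π τ : Equiv.Perm (Fin (r+1))) :
    (gperm π) * (gperm τ) = gperm (π.trans τ) := rfl

lemma gperm_refl : gperm (Equiv.refl (Fin (r+1))) = (id : Function.End (Fin (r+1) → ℤ)) := rfl

lemma cs_ne_succ (i : Fin r) : (i.castSucc : Fin (r+1)) ≠ i.succ := by
  apply Fin.ne_of_val_ne; simp

lemma swap_reflect {i : Fin r} (h : (i : ℕ) ≠ 0) :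
    reflect (root r i) = gperm (Equiv.swap i.castSucc i.succ) := by
  funext x u
  rw [reflect_apply, inter_root_pos h, gperm_apply, root, if_neg h]
  simp only [Pi.sub_apply, Eb]
  rcases eq_or_ne u i.castSucc with rfl|hu1
  · rw [Equiv.swap_apply_left, if_pos rfl, if_neg (cs_ne_succ i)]
    ring
  rcases eq_or_ne u i.succ with rfl|hu2
  · rw [Equiv.swap_apply_right, if_pos rfl, if_neg (Ne.symm (cs_ne_succ i))]
    ring
  · rw [Equiv.swap_apply_of_ne_of_ne hu1 hu2, if_neg hu1, if_neg hu2]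
    ring

lemma swap_ne_zero {a b u : Fin (r+1)} (ha : a ≠ 0) (hb : b ≠ 0) (hu : u ≠ 0) :
    Equiv.swap a b u ≠ 0 := by
  rcases eq_or_ne u a with rfl|h1
  · rw [Equiv.swap_apply_left]; exact hb
  rcases eq_or_ne u b with rfl|h2
  · rw [Equiv.swap_apply_right]; exact ha
  · rw [Equiv.swap_apply_of_ne_of_ne h1 h2]; exact hu

lemma swap_zero {a b : Fin (r+1)} (ha : a ≠ 0) (hb : b ≠ 0) :
    Equiv.swap a b 0 = 0 :=
  Equiv.swap_apply_of_ne_of_ne (Ne.symm ha) (Ne.symm hb)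

lemma gperm_swap_mem_aux (hr : 3 ≤ r) :
    ∀ (n : ℕ) (a b : Fin (r+1)), a ≠ 0 → b ≠ 0 → (a : ℕ) + n = (b : ℕ) →
      InWeyl r (gperm (Equiv.swap a b)) := by
  intro n
  induction n using Nat.strong_induction_on with
  | _ n IH =>
    intro a b ha hb hab
    match n, hab with
    | 0, hab =>
      have : a = b := Fin.ext (by omega)
      subst this
      rw [Equiv.swap_self]
      rw [show (Equiv.refl (Fin (r+1)) : Equiv.Perm (Fin (r+1))) = Equiv.refl _ from rfl,
        gperm_refl]
      exact W_one
    | 1, hab =>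
      have hbr : (b : ℕ) < r + 1 := b.isLt
      have hir : (a : ℕ) < r := by omega
      set i : Fin r := ⟨(a : ℕ), hir⟩ with hidef
      have hi0 : (i : ℕ) ≠ 0 := by
        simpa [hidef] using fun h => ha (Fin.ext (by simpa using h))
      have hca : i.castSucc = a := Fin.ext rfl
      have hcb : i.succ = b := Fin.ext (by simp [hidef]; omega)
      have : gperm (Equiv.swap a b) = reflect (root r i) := by
        rw [swap_reflect hi0, hca, hcb]
      rw [this]
      exact W_gen i
    | (m+2), hab =>
      have hbr : (b : ℕ) < r + 1 := b.isLt
      set c : Fin (r+1) := ⟨(a : ℕ) + 1, by omega⟩ with hcdef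
      have hc0 : c ≠ 0 := by
        apply Fin.ne_of_val_ne; simp [hcdef]
      have hac : a ≠ c := by apply Fin.ne_of_val_ne; simp [hcdef]
      have hcb : c ≠ b := by apply Fin.ne_of_val_ne; simp [hcdef]; omega
      have hab' : a ≠ b := by apply Fin.ne_of_val_ne; omega
      have h1 : InWeyl r (gperm (Equiv.swap a c)) :=
        IH 1 (by omega) a c ha hc0 (by simp [hcdef])
      have h2 : InWeyl r (gperm (Equiv.swap c b)) :=
        IH (m+1) (by omega) c b hc0 hb (by simp [hcdef]; omega)
      have hkey : Equiv.swap a b =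
          ((Equiv.swap a c).trans ((Equiv.swap c b).trans (Equiv.swap a c))) := by
        apply Equiv.ext
        intro u
        simp only [Equiv.trans_apply]
        rcases eq_or_ne u a with rfl|hua
        · rw [Equiv.swap_apply_left, Equiv.swap_apply_left, Equiv.swap_apply_left,
            Equiv.swap_apply_of_ne_of_ne hab'.symm hcb.symm]
        rcases eq_or_ne u b with rfl|hub
        · rw [Equiv.swap_apply_right, Equiv.swap_apply_of_ne_of_ne (Ne.symm hab') (Ne.symm hcb),
            Equiv.swap_apply_right, Equiv.swap_apply_right]
        rcases eq_or_ne u c with rfl|huc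
        · rw [Equiv.swap_apply_right, Equiv.swap_apply_of_ne_of_ne hac hab',
            Equiv.swap_apply_left, Equiv.swap_apply_of_ne_of_ne (Ne.symm hac) hcb]
        · rw [Equiv.swap_apply_of_ne_of_ne hua hub,
            Equiv.swap_apply_of_ne_of_ne hua huc,
            Equiv.swap_apply_of_ne_of_ne huc hub,
            Equiv.swap_apply_of_ne_of_ne hua huc]
      rw [hkey, ← Equiv.trans_assoc, ← gperm_mul, ← gperm_mul]
      exact W_mul (W_mul h1 h2) h1

lemma gperm_swap_mem (hr : 3 ≤ r) (a b : Fin (r+1)) (ha : a ≠ 0) (hb : b ≠ 0) :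
    InWeyl r (gperm (Equiv.swap a b)) := by
  rcases le_total (a : ℕ) (b : ℕ) with h|h
  · exact gperm_swap_mem_aux hr ((b : ℕ) - (a : ℕ)) a b ha hb (by omega)
  · rw [Equiv.swap_comm]
    exact gperm_swap_mem_aux hr ((a : ℕ) - (b : ℕ)) b a hb ha (by omega)

/-! ### Conjugated reflections -/

/-- coerce a plain function to `Function.End` -/
def toEnd {r : ℕ} (f : (Fin (r+1) → ℤ) → (Fin (r+1) → ℤ)) :
    Function.End (Fin (r+1) → ℤ) := f

lemma reflect_conj (hr : 3 ≤ r) {f f' : Function.End (Fin (r+1) → ℤ)}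
    (hf : InWeyl r f) (h1 : ∀ x, f (f' x) = x)
    (v : Fin (r+1) → ℤ) :
    toEnd (reflect (f v)) = f * toEnd (reflect v) * f' := by
  funext x
  have h2 : (f * toEnd (reflect v) * f') x
      = f (reflect v (f' x)) := rfl
  rw [h2]
  show x + inter x (f v) • f v = f (f' x + inter (f' x) v • v)
  have h3 : inter (f' x) v = inter x (f v) := by
    have h4 := (W_orth hr hf (f' x) v).symm
    rwa [h1 x] at h4
  rw [W_lin hf (f' x) v (inter (f' x) v), h1, h3]

lemma reflect_ev3_mem (hr : 3 ≤ r) {i j k : Fin (r+1)} (hi : i ≠ 0) (hj : j ≠ 0) (hk : k ≠ 0)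
    (hij : i ≠ j) (hik : i ≠ k) (hjk : j ≠ k) :
    InWeyl r (reflect (ev3 i j k)) := by
  classical
  set s1 := Equiv.swap i 1 with hs1
  set j1 := s1 j with hj1
  have hj1_0 : j1 ≠ 0 := swap_ne_zero hi (fne1 hr) hj
  have hj1_1 : j1 ≠ 1 := by
    intro h
    exact hij (s1.injective (by rw [← hj1, h, hs1, Equiv.swap_apply_left]))
  set s2 := Equiv.swap j1 2 with hs2
  set k1 := s1 k with hk1
  have hk1_0 : k1 ≠ 0 := swap_ne_zero hi (fne1 hr) hk
  have hk1_1 : k1 ≠ 1 := by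
    intro h
    exact hik (s1.injective (by rw [← hk1, h, hs1, Equiv.swap_apply_left]))
  have hk1_j1 : k1 ≠ j1 := fun h => hjk (s1.injective (by rw [← hj1, ← hk1, h]))
  set k2 := s2 k1 with hk2
  have hk2_0 : k2 ≠ 0 := swap_ne_zero hj1_0 (fne2 hr) hk1_0
  have hk2_1 : k2 ≠ 1 := by
    rw [hk2, hs2]
    rcases eq_or_ne k1 2 with h2|h2
    · rw [h2, Equiv.swap_apply_right]; exact hj1_1
    · rw [Equiv.swap_apply_of_ne_of_ne hk1_j1 h2]; exact hk1_1
  have hk2_2 : k2 ≠ 2 := by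
    intro h
    exact hk1_j1 (s2.injective (by rw [← hk2, h, hs2, Equiv.swap_apply_left]))
  set s3 := Equiv.swap k2 3 with hs3
  set π := (s1.trans s2).trans s3 with hπ
  have hπ_apply : ∀ u, π u = s3 (s2 (s1 u)) := fun u => rfl
  have hπ0 : π 0 = 0 := by
    rw [hπ_apply, hs1, hs2, hs3, swap_zero hi (fne1 hr), swap_zero hj1_0 (fne2 hr),
      swap_zero hk2_0 (fne3 hr)]
  have hπi : π i = 1 := by
    rw [hπ_apply, hs1, Equiv.swap_apply_left, hs2,
      Equiv.swap_apply_of_ne_of_ne (Ne.symm hj1_1) (fne12 hr), hs3,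
      Equiv.swap_apply_of_ne_of_ne (Ne.symm hk2_1) (fne13 hr)]
  have hπj : π j = 2 := by
    have e1 : s1 j = j1 := rfl
    rw [hπ_apply, e1, hs2, Equiv.swap_apply_left, hs3,
      Equiv.swap_apply_of_ne_of_ne (Ne.symm hk2_2) (fne23 hr)]
  have hπk : π k = 3 := by
    have e1 : s2 (s1 k) = k2 := rfl
    rw [hπ_apply, e1, hs3, Equiv.swap_apply_left]
  -- the W element
  have hmem1 : InWeyl r (gperm s1) := by rw [hs1]; exact gperm_swap_mem hr i 1 hi (fne1 hr)
  have hmem2 : InWeyl r (gperm s2) := by rw [hs2]; exact gperm_swap_mem hr j1 2 hj1_0 (fne2 hr)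
  have hmem3 : InWeyl r (gperm s3) := by rw [hs3]; exact gperm_swap_mem hr k2 3 hk2_0 (fne3 hr)
  have hmemπ : InWeyl r (gperm π) := by
    rw [hπ, ← gperm_mul, ← gperm_mul]
    exact W_mul (W_mul hmem1 hmem2) hmem3
  obtain ⟨f', hf', hinv1, hinv2⟩ := W_inv hr hmemπ
  -- the image of the root
  have i0r : (0 : ℕ) < r := by omega
  have hroot : gperm π (root r ⟨0, i0r⟩) = ev3 i j k := by
    rw [root_zero_eq hr (show ((⟨0, i0r⟩ : Fin r) : ℕ) = 0 from rfl)]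
    funext u
    rw [gperm_apply, ev3_apply, ev3_apply]
    have key : ∀ (a b : Fin (r+1)), π a = b → ((π u = b) ↔ (u = a)) := fun a b hab => by
      rw [← hab]; exact Equiv.apply_eq_iff_eq π
    have h0 := key 0 0 hπ0
    have h1 := key i 1 hπi
    have h2 := key j 2 hπj
    have h3 := key k 3 hπk
    rw [if_congr h0 rfl rfl, if_congr h1 rfl rfl, if_congr h2 rfl rfl, if_congr h3 rfl rfl]
  have final : toEnd (reflect (ev3 i j k)) = gperm π * toEnd (reflect (root r ⟨0, i0r⟩)) * f' := by
    rw [← hroot]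
    exact reflect_conj hr hmemπ hinv2 _
  show InWeyl r (toEnd (reflect (ev3 i j k)))
  rw [final]
  exact W_mul (W_mul hmemπ (W_gen ⟨0, i0r⟩)) hf'

/-! ### Sums -/

/-- the tail index set `{4,…,r}` -/
def tailS (r : ℕ) : Finset (Fin (r+1)) :=
  (((Finset.univ.erase 0).erase 1).erase 2).erase 3

lemma sum_univ_split (f : Fin (r+1) → ℤ) :
    ∑ u, f u = f 0 + ∑ u ∈ Finset.univ.erase 0, f u :=
  (Finset.add_sum_erase _ f (Finset.mem_univ 0)).symm

lemma inter_K_eq (y : Fin (r+1) → ℤ) :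
    inter y (Kc r) = -3 * y 0 - ∑ u ∈ Finset.univ.erase 0, y u := by
  unfold inter
  rw [sum_univ_split (fun u => y u * Kc r u)]
  have h2 : ∑ u ∈ Finset.univ.erase 0, y u * Kc r u = ∑ u ∈ Finset.univ.erase 0, y u :=
    Finset.sum_congr rfl (fun u hu => by rw [Kc_ne (Finset.ne_of_mem_erase hu), mul_one])
  rw [h2, Kc_zero]
  ring

lemma inter_self_eq (y : Fin (r+1) → ℤ) :
    inter y y = y 0 * y 0 - ∑ u ∈ Finset.univ.erase 0, y u * y u := by
  unfold inter
  rw [sum_univ_split (fun u => y u * y u)]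
  ring

lemma mem_e1 (hr : 3 ≤ r) : (1 : Fin (r+1)) ∈ Finset.univ.erase 0 :=
  Finset.mem_erase.2 ⟨fne1 hr, Finset.mem_univ _⟩

lemma mem_e2 (hr : 3 ≤ r) : (2 : Fin (r+1)) ∈ (Finset.univ.erase 0).erase 1 :=
  Finset.mem_erase.2 ⟨(fne12 hr).symm, Finset.mem_erase.2 ⟨fne2 hr, Finset.mem_univ _⟩⟩

lemma mem_e3 (hr : 3 ≤ r) : (3 : Fin (r+1)) ∈ ((Finset.univ.erase 0).erase 1).erase 2 :=
  Finset.mem_erase.2 ⟨(fne23 hr).symm, Finset.mem_erase.2 ⟨(fne13 hr).symm,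
    Finset.mem_erase.2 ⟨fne3 hr, Finset.mem_univ _⟩⟩⟩

lemma mem_tailS {t : Fin (r+1)} (h0 : t ≠ 0) (h1 : t ≠ 1) (h2 : t ≠ 2) (h3 : t ≠ 3) :
    t ∈ tailS r := by
  simp only [tailS, Finset.mem_erase]
  exact ⟨h3, h2, h1, h0, Finset.mem_univ _⟩

lemma of_mem_tailS {t : Fin (r+1)} (h : t ∈ tailS r) :
    t ≠ 0 ∧ t ≠ 1 ∧ t ≠ 2 ∧ t ≠ 3 := by
  simp only [tailS, Finset.mem_erase] at h
  exact ⟨h.2.2.2.1, h.2.2.1, h.2.1, h.1⟩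

lemma sum_tail_split (hr : 3 ≤ r) (g : Fin (r+1) → ℤ) :
    ∑ u ∈ Finset.univ.erase 0, g u = g 1 + g 2 + g 3 + ∑ u ∈ tailS r, g u := by
  rw [← Finset.add_sum_erase _ g (mem_e1 hr), ← Finset.add_sum_erase _ g (mem_e2 hr),
    ← Finset.add_sum_erase _ g (mem_e3 hr)]
  show _ = _ + _ + _ + ∑ u ∈ tailS r, g u
  rw [tailS]
  ring

lemma three_sq_le (hr : 3 ≤ r) (y : Fin (r+1) → ℤ) :
    y 1 * y 1 + y 2 * y 2 + y 3 * y 3 ≤ ∑ u ∈ Finset.univ.erase 0, y u * y u := by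
  rw [sum_tail_split hr (fun u => y u * y u)]
  have h : (0:ℤ) ≤ ∑ u ∈ tailS r, y u * y u :=
    Finset.sum_nonneg (fun u _ => mul_self_nonneg _)
  linarith

lemma four_sq_le (hr : 3 ≤ r) (y : Fin (r+1) → ℤ) {t : Fin (r+1)} (ht : t ∈ tailS r) :
    y 1 * y 1 + y 2 * y 2 + y 3 * y 3 + y t * y t
      ≤ ∑ u ∈ Finset.univ.erase 0, y u * y u := by
  rw [sum_tail_split hr (fun u => y u * y u)]
  have h : y t * y t ≤ ∑ u ∈ tailS r, y u * y u :=
    Finset.single_le_sum (f := fun u => y u * y u) (fun u _ => mul_self_nonneg _) ht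
  linarith

/-! ### root coordinates -/

lemma rz0 (hr : 3 ≤ r) : ev3 (1 : Fin (r+1)) 2 3 0 = 1 := by
  rw [ev3_apply, if_pos rfl, if_neg (fne1 hr).symm, if_neg (fne2 hr).symm,
    if_neg (fne3 hr).symm]
  ring

lemma rz1 (hr : 3 ≤ r) : ev3 (1 : Fin (r+1)) 2 3 1 = -1 := by
  rw [ev3_apply, if_neg (fne1 hr), if_pos rfl, if_neg (fne12 hr), if_neg (fne13 hr)]
  ring

lemma rz2 (hr : 3 ≤ r) : ev3 (1 : Fin (r+1)) 2 3 2 = -1 := by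
  rw [ev3_apply, if_neg (fne2 hr), if_neg (fne12 hr).symm, if_pos rfl, if_neg (fne23 hr)]
  ring

lemma rz3 (hr : 3 ≤ r) : ev3 (1 : Fin (r+1)) 2 3 3 = -1 := by
  rw [ev3_apply, if_neg (fne3 hr), if_neg (fne13 hr).symm, if_neg (fne23 hr).symm, if_pos rfl]
  ring

lemma rzt {t : Fin (r+1)} (h : t ∈ tailS r) : ev3 (1 : Fin (r+1)) 2 3 t = 0 := by
  obtain ⟨h0, h1, h2, h3⟩ := of_mem_tailS h
  rw [ev3_apply, if_neg h0, if_neg h1, if_neg h2, if_neg h3]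
  ring

/-! ### The exceptional-orbit invariant -/

/-- invariant satisfied by all exceptional-type classes used in the proof -/
def Pe {r : ℕ} (y : Fin (r+1) → ℤ) : Prop :=
  inter y y = -1 ∧ inter y (Kc r) = -1 ∧ 0 ≤ y 0 ∧
    ∀ t : Fin (r+1), t ≠ 0 → 0 ≤ y 0 + y t

lemma reflect_K (hr : 3 ≤ r) (i : Fin r) : reflect (root r i) (Kc r) = Kc r := by
  show Kc r + inter (Kc r) (root r i) • root r i = Kc r
  rw [inter_K_root hr i, zero_smul, add_zero]

set_option maxHeartbeats 1000000 in
lemma Pe_gen (hr : 3 ≤ r) (i : Fin r) (y : Fin (r+1) → ℤ) (hy : Pe y) :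
    Pe (reflect (root r i) y) := by
  obtain ⟨hq, hK, hd, hs⟩ := hy
  have hself := root_self hr i
  have hq' : inter (reflect (root r i) y) (reflect (root r i) y) = -1 := by
    rw [inter_reflect _ _ _ hself, hq]
  have hK' : inter (reflect (root r i) y) (Kc r) = -1 := by
    conv_lhs => rw [← reflect_K hr i]
    rw [inter_reflect _ _ _ hself, hK]
  by_cases hi : (i : ℕ) = 0
  · -- σ₀ case
    have hroot : root r i = ev3 1 2 3 := root_zero_eq hr hi
    have hc : inter y (root r i) = y 0 + y 1 + y 2 + y 3 := inter_root_zero hr hi y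
    have hsumq : ∑ u ∈ Finset.univ.erase 0, y u * y u = y 0 * y 0 + 1 := by
      have := inter_self_eq y; rw [hq] at this; linarith
    have hsuml : ∑ u ∈ Finset.univ.erase 0, y u = 1 - 3 * y 0 := by
      have := inter_K_eq y; rw [hK] at this; linarith
    have h3sq : y 1 * y 1 + y 2 * y 2 + y 3 * y 3 ≤ y 0 * y 0 + 1 := by
      have := three_sq_le hr y; rw [hsumq] at this; linarith
    have hcoord0 : reflect (root r i) y 0 = 2 * y 0 + y 1 + y 2 + y 3 := by
      rw [reflect_apply, hc, hroot, rz0 hr]; ring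
    have hzero : y 0 = 0 → ∀ u : Fin (r+1), u ≠ 0 → 0 ≤ y u := by
      intro h0 u hu
      have hkey : ∑ u ∈ Finset.univ.erase 0, (y u * y u - y u) = 0 := by
        rw [Finset.sum_sub_distrib, hsumq, hsuml, h0]; ring
      have hterm : ∀ v ∈ Finset.univ.erase 0, (0:ℤ) ≤ y v * y v - y v := by
        intro v _; nlinarith [sq_nonneg (2 * y v - 1)]
      have := (Finset.sum_eq_zero_iff_of_nonneg hterm).1 hkey u
        (Finset.mem_erase.2 ⟨hu, Finset.mem_univ _⟩)
      nlinarith [sq_nonneg (y u)]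
    refine ⟨hq', hK', ?_, ?_⟩
    · rw [hcoord0]
      rcases eq_or_lt_of_le hd with h0|h0
      · have h1 := hzero h0.symm 1 (fne1 hr)
        have h2 := hzero h0.symm 2 (fne2 hr)
        have h3 := hzero h0.symm 3 (fne3 hr)
        linarith
      · nlinarith [sq_nonneg (y 1 - y 2), sq_nonneg (y 1 - y 3), sq_nonneg (y 2 - y 3),
          sq_nonneg (y 1 + y 2 + y 3 + 2 * y 0)]
    · intro t ht
      have hcoordt : reflect (root r i) y t
          = y t + (y 0 + y 1 + y 2 + y 3) * ev3 1 2 3 t := by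
        rw [reflect_apply, hc, hroot]
      rcases eq_or_ne t 1 with rfl|ht1
      · rw [hcoord0, hcoordt, rz1 hr]
        have := hs 1 (fne1 hr); linarith
      rcases eq_or_ne t 2 with rfl|ht2
      · rw [hcoord0, hcoordt, rz2 hr]
        have := hs 2 (fne2 hr); linarith
      rcases eq_or_ne t 3 with rfl|ht3
      · rw [hcoord0, hcoordt, rz3 hr]
        have := hs 3 (fne3 hr); linarith
      · have htt : t ∈ tailS r := mem_tailS ht ht1 ht2 ht3
        rw [hcoord0, hcoordt, rzt htt, mul_zero, add_zero]
        have h4sq : y 1 * y 1 + y 2 * y 2 + y 3 * y 3 + y t * y t ≤ y 0 * y 0 + 1 := by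
          have := four_sq_le hr y htt; rw [hsumq] at this; linarith
        rcases eq_or_lt_of_le hd with h0|h0
        · have h1 := hzero h0.symm 1 (fne1 hr)
          have h2 := hzero h0.symm 2 (fne2 hr)
          have h3 := hzero h0.symm 3 (fne3 hr)
          have h4 := hzero h0.symm t ht
          linarith
        · by_contra hcon
          push_neg at hcon
          have hv : y 1 + y 2 + y 3 + y t ≤ -2 * y 0 - 1 := by linarith
          have hb : (0:ℤ) ≤ 2 * y 0 + 1 := by linarith
          have hsq1 : (2 * y 0 + 1) * (2 * y 0 + 1)
              ≤ (-(y 1 + y 2 + y 3 + y t)) * (-(y 1 + y 2 + y 3 + y t)) :=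
            mul_le_mul (by linarith) (by linarith) hb (by linarith)
          have hC : (y 1 + y 2 + y 3 + y t) * (y 1 + y 2 + y 3 + y t)
              ≤ 4 * (y 1 * y 1 + y 2 * y 2 + y 3 * y 3 + y t * y t) := by
            nlinarith [sq_nonneg (y 1 - y 2), sq_nonneg (y 1 - y 3), sq_nonneg (y 2 - y 3),
              sq_nonneg (y 1 - y t), sq_nonneg (y 2 - y t), sq_nonneg (y 3 - y t)]
          nlinarith [hsq1, hC, h4sq, h0]
  · -- transposition case
    refine ⟨hq', hK', ?_, ?_⟩
    · rw [swap_reflect hi, gperm_apply, swap_zero (castSucc_ne_zero hi) (Fin.succ_ne_zero i)]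
      exact hd
    · intro t ht
      rw [swap_reflect hi, gperm_apply, gperm_apply,
        swap_zero (castSucc_ne_zero hi) (Fin.succ_ne_zero i)]
      exact hs _ (swap_ne_zero (castSucc_ne_zero hi) (Fin.succ_ne_zero i) ht)

lemma Pe_W (hr : 3 ≤ r) {f : Function.End (Fin (r+1) → ℤ)} (hf : InWeyl r f) :
    ∀ y, Pe y → Pe (f y) := by
  induction hf using Submonoid.closure_induction with
  | mem g hg =>
    obtain ⟨i, rfl⟩ := hg
    exact fun y hy => Pe_gen hr i y hy
  | one => exact fun y hy => hy
  | mul g h hg hh ihg ihh =>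
    intro y hy
    exact ihg _ (ihh _ hy)

/-! ### The line/pencil-orbit invariant -/

def Pl {r : ℕ} (y : Fin (r+1) → ℤ) : Prop :=
  0 ≤ inter y y ∧ 1 ≤ y 0

lemma Pl_gen (hr : 3 ≤ r) (i : Fin r) (y : Fin (r+1) → ℤ) (hy : Pl y) :
    Pl (reflect (root r i) y) := by
  obtain ⟨hq, hd⟩ := hy
  have hself := root_self hr i
  refine ⟨by rw [inter_reflect _ _ _ hself]; exact hq, ?_⟩
  by_cases hi : (i : ℕ) = 0
  · have hroot : root r i = ev3 1 2 3 := root_zero_eq hr hi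
    have hc : inter y (root r i) = y 0 + y 1 + y 2 + y 3 := inter_root_zero hr hi y
    have hsumq : ∑ u ∈ Finset.univ.erase 0, y u * y u ≤ y 0 * y 0 := by
      have := inter_self_eq y; linarith
    have h3sq : y 1 * y 1 + y 2 * y 2 + y 3 * y 3 ≤ y 0 * y 0 := by
      have := three_sq_le hr y; linarith
    have hcoord0 : reflect (root r i) y 0 = 2 * y 0 + y 1 + y 2 + y 3 := by
      rw [reflect_apply, hc, hroot, rz0 hr]; ring
    rw [hcoord0]
    nlinarith [sq_nonneg (y 1 - y 2), sq_nonneg (y 1 - y 3), sq_nonneg (y 2 - y 3),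
      sq_nonneg (y 1 + y 2 + y 3 + 2 * y 0)]
  · rw [swap_reflect hi, gperm_apply, swap_zero (castSucc_ne_zero hi) (Fin.succ_ne_zero i)]
    exact hd

lemma Pl_W (hr : 3 ≤ r) {f : Function.End (Fin (r+1) → ℤ)} (hf : InWeyl r f) :
    ∀ y, Pl y → Pl (f y) := by
  induction hf using Submonoid.closure_induction with
  | mem g hg =>
    obtain ⟨i, rfl⟩ := hg
    exact fun y hy => Pl_gen hr i y hy
  | one => exact fun y hy => hy
  | mul g h hg hh ihg ihh =>
    intro y hy
    exact ihg _ (ihh _ hy)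

/-! ### Base classes -/

lemma Eb_nonneg (t u : Fin (r+1)) : 0 ≤ Eb r t u := by
  unfold Eb; split <;> norm_num

lemma Pe_Eb (hr : 3 ≤ r) {t : Fin (r+1)} (ht : t ≠ 0) : Pe (Eb r t) := by
  refine ⟨?_, ?_, ?_, ?_⟩
  · rw [inter_Eb_right, if_neg ht]
    show -(if (t : Fin (r+1)) = t then (1:ℤ) else 0) = -1
    rw [if_pos rfl]
  · rw [inter_comm, inter_Eb_right, if_neg ht, Kc_ne ht]
  · exact Eb_nonneg t 0
  · intro s _
    have h1 := Eb_nonneg t 0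
    have h2 := Eb_nonneg t s
    linarith

lemma Pl_base1 : Pl (Eb r 0) := by
  constructor
  · rw [inter_Eb_right, if_pos rfl]
    show (0:ℤ) ≤ (if (0 : Fin (r+1)) = 0 then (1:ℤ) else 0)
    rw [if_pos rfl]; norm_num
  · show (1:ℤ) ≤ (if (0 : Fin (r+1)) = 0 then (1:ℤ) else 0)
    rw [if_pos rfl]

lemma Eb00 : Eb r 0 0 = 1 := if_pos rfl

lemma Eb_ne {t u : Fin (r+1)} (h : u ≠ t) : Eb r t u = 0 := if_neg h

lemma inter_Eb00 : inter (Eb r 0) (Eb r 0 : Fin (r+1) → ℤ) = 1 := by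
  rw [inter_Eb_right, if_pos rfl, Eb00]

lemma inter_Eb10 (hr : 3 ≤ r) : inter (Eb r 1) (Eb r 0 : Fin (r+1) → ℤ) = 0 := by
  rw [inter_Eb_right, if_pos rfl, Eb_ne (fne1 hr).symm]

lemma inter_Eb01 (hr : 3 ≤ r) : inter (Eb r 0) (Eb r 1 : Fin (r+1) → ℤ) = 0 := by
  rw [inter_Eb_right, if_neg (fne1 hr), Eb_ne (fne1 hr), neg_zero]

lemma inter_Eb11 (hr : 3 ≤ r) : inter (Eb r 1) (Eb r 1 : Fin (r+1) → ℤ) = -1 := by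
  rw [inter_Eb_right, if_neg (fne1 hr)]
  show -(if (1 : Fin (r+1)) = 1 then (1:ℤ) else 0) = -1
  rw [if_pos rfl]

lemma Pl_base2 (hr : 3 ≤ r) : Pl (Eb r 0 - Eb r 1) := by
  constructor
  · rw [inter_sub_right, inter_sub_left, inter_sub_left, inter_Eb00, inter_Eb10 hr,
      inter_Eb01 hr, inter_Eb11 hr]
    norm_num
  · show (1:ℤ) ≤ (Eb r 0 - Eb r 1) 0
    show (1:ℤ) ≤ Eb r 0 0 - Eb r 1 0
    rw [Eb00, Eb_ne (fne1 hr).symm]; norm_num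

lemma K_base1 : inter (Eb r 0) (Kc r) = -3 := by
  rw [inter_comm, inter_Eb_right, if_pos rfl, Kc_zero]

lemma K_base2 (hr : 3 ≤ r) : inter (Eb r 0 - Eb r 1) (Kc r) = -2 := by
  rw [inter_sub_left, K_base1, inter_comm, inter_Eb_right, if_neg (fne1 hr),
    Kc_ne (fne1 hr)]
  ring

/-! ### Orbit facts -/

/-- membership in the union of the line and pencil orbits -/
def OrbitLP (r : ℕ) (y : Fin (r+1) → ℤ) : Prop :=
  ∃ f : Function.End (Fin (r+1) → ℤ),
    InWeyl r f ∧ (y = f (Eb r 0) ∨ y = f (Eb r 0 - Eb r 1))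

lemma orbit_facts (hr : 3 ≤ r) {y : Fin (r+1) → ℤ} (hy : OrbitLP r y) :
    1 ≤ y 0 ∧ inter y (Kc r) ≤ 0 ∧ (∀ t : Fin (r+1), t ≠ 0 → y t ≤ 0) := by
  obtain ⟨f, hf, hx⟩ := hy
  obtain ⟨f', hf', hinv1, hinv2⟩ := W_inv hr hf
  refine ⟨?_, ?_, ?_⟩
  · rcases hx with rfl|rfl
    · exact (Pl_W hr hf _ Pl_base1).2
    · exact (Pl_W hr hf _ (Pl_base2 hr)).2
  · have hKf : ∀ x, inter (f x) (Kc r) = inter x (Kc r) := by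
      intro x
      conv_lhs => rw [← W_K hr hf]
      rw [W_orth hr hf]
    rcases hx with rfl|rfl
    · rw [hKf, K_base1]; norm_num
    · rw [hKf, K_base2 hr]; norm_num
  · intro t ht
    have hPe : Pe (f' (Eb r t)) := Pe_W hr hf' _ (Pe_Eb hr ht)
    have htr : ∀ x, inter (f x) (Eb r t) = inter x (f' (Eb r t)) := fun x =>
      W_transport hr hf hf' hinv2 x (Eb r t)
    rcases hx with rfl|rfl
    · have h1 : inter (f (Eb r 0)) (Eb r t) = (f' (Eb r t)) 0 := by
        rw [htr, inter_comm, inter_Eb_right, if_pos rfl]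
      have h2 : inter (f (Eb r 0)) (Eb r t) = -(f (Eb r 0)) t := by
        rw [inter_Eb_right, if_neg ht]
      have := hPe.2.2.1
      linarith [h1 ▸ h2.symm]
    · have h1 : inter (f (Eb r 0 - Eb r 1)) (Eb r t)
          = (f' (Eb r t)) 0 + (f' (Eb r t)) 1 := by
        rw [htr, inter_comm, inter_sub_right, inter_Eb_right, inter_Eb_right,
          if_pos rfl, if_neg (fne1 hr)]
        ring
      have h2 : inter (f (Eb r 0 - Eb r 1)) (Eb r t) = -(f (Eb r 0 - Eb r 1)) t := by
        rw [inter_Eb_right, if_neg ht]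
      have := hPe.2.2.2 1 (fne1 hr)
      linarith [h1 ▸ h2.symm]

/-! ### value facts -/

lemma tail_val_ge (hr : 3 ≤ r) {u : Fin (r+1)} (h : u ∈ tailS r) : 4 ≤ (u : ℕ) := by
  obtain ⟨h0, h1, h2, h3⟩ := of_mem_tailS h
  have v0 : (u : ℕ) ≠ 0 := fun e => h0 (Fin.ext (by rw [e]; rfl))
  have v1 : (u : ℕ) ≠ 1 := fun e => h1 (Fin.ext (by rw [fv1 hr]; exact e))
  have v2 : (u : ℕ) ≠ 2 := fun e => h2 (Fin.ext (by rw [fv2 hr]; exact e))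
  have v3 : (u : ℕ) ≠ 3 := fun e => h3 (Fin.ext (by rw [fv3 hr]; exact e))
  omega

lemma zsorted (hz : ESemiStandard r z) {u v : Fin (r+1)} (hu : 1 ≤ (u : ℕ))
    (huv : (u : ℕ) ≤ (v : ℕ)) : -z v ≤ -z u :=
  hz.2.2.1 u v hu (by rwa [Fin.le_def])

/-! ### Descent: base case -/

set_option maxHeartbeats 2000000 in
lemma descent_base (hr : 3 ≤ r) {z y : Fin (r+1) → ℤ} (hz : ESemiStandard r z)
    (hd : 1 ≤ y 0) (hm : ∀ t : Fin (r+1), t ≠ 0 → y t ≤ 0) (hK : inter y (Kc r) ≤ 0)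
    (htrip : 0 ≤ y 0 + y 1 + y 2 + y 3) : 0 ≤ inter z y := by
  have ha := hz.1
  have hb1 := hz.2.1
  have h12 : -z 2 ≤ -z 1 := zsorted hz (by rw [fv1 hr]) (by rw [fv1 hr, fv2 hr]; omega)
  have h23 : -z 3 ≤ -z 2 := zsorted hz (by rw [fv2 hr]; omega) (by rw [fv2 hr, fv3 hr]; omega)
  have htrz := hz.2.2.2
  have hy1 := hm 1 (fne1 hr)
  have hy2 := hm 2 (fne2 hr)
  have hy3 := hm 3 (fne3 hr)
  have hsum : inter z y = z 0 * y 0 - (z 1 * y 1 + z 2 * y 2 + z 3 * y 3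
      + ∑ u ∈ tailS r, z u * y u) := by
    unfold inter
    rw [sum_univ_split (fun u => z u * y u), sum_tail_split hr (fun u => z u * y u)]
    ring
  have htailz : ∀ u ∈ tailS r, z 3 ≤ z u := by
    intro u hu
    have h4 := tail_val_ge hr hu
    have := zsorted hz (u := 3) (v := u) (by rw [fv3 hr]; omega) (by rw [fv3 hr]; omega)
    linarith
  have hSt : ∑ u ∈ tailS r, y u
      = -3 * y 0 - inter y (Kc r) - (y 1 + y 2 + y 3) := by
    have h1 := inter_K_eq y
    have h2 := sum_tail_split hr (fun u => y u)
    linarith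
  rcases le_or_gt (z 3) 0 with hz3|hz3
  · have hbd : ∑ u ∈ tailS r, z u * y u ≤ z 3 * ∑ u ∈ tailS r, y u := by
      rw [Finset.mul_sum]
      refine Finset.sum_le_sum ?_
      intro u hu
      have h1 : z 3 ≤ z u := htailz u hu
      have h2 : y u ≤ 0 := hm u (of_mem_tailS hu).1
      nlinarith
    have hbd2 : z 3 * ∑ u ∈ tailS r, y u ≤ z 3 * (-3 * y 0 - (y 1 + y 2 + y 3)) := by
      rw [hSt]
      have hq : -3 * y 0 - (y 1 + y 2 + y 3)
          ≤ -3 * y 0 - inter y (Kc r) - (y 1 + y 2 + y 3) := by linarith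
      exact mul_le_mul_of_nonpos_left hq hz3
    have hm1 : 0 ≤ y 0 + y 1 := by linarith
    have hm12 : 0 ≤ y 0 + y 1 + y 2 := by linarith
    have key : 0 ≤ z 0 * y 0 - (z 1 * y 1 + z 2 * y 2 + z 3 * y 3
        + z 3 * (-3 * y 0 - (y 1 + y 2 + y 3))) := by
      nlinarith [mul_nonneg (show (0:ℤ) ≤ z 0 + z 1 + z 2 + z 3 by linarith)
          (show (0:ℤ) ≤ y 0 by linarith),
        mul_nonneg (show (0:ℤ) ≤ z 2 - z 1 by linarith) hm1,
        mul_nonneg (show (0:ℤ) ≤ z 3 - z 2 by linarith) hm12,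
        mul_nonneg (show (0:ℤ) ≤ z 3 - z 2 by linarith) (show (0:ℤ) ≤ y 0 by linarith)]
    linarith
  · have hbd : ∑ u ∈ tailS r, z u * y u ≤ 0 := by
      refine Finset.sum_nonpos ?_
      intro u hu
      have h1 : 0 ≤ z u := le_trans (le_of_lt hz3) (htailz u hu)
      have h2 : y u ≤ 0 := hm u (of_mem_tailS hu).1
      exact mul_nonpos_of_nonneg_of_nonpos h1 h2
    have hm1 : 0 ≤ y 0 + y 1 := by linarith
    have hm12 : 0 ≤ y 0 + y 1 + y 2 := by linarith
    have t3 : 0 ≤ -(z 3 * y 3) := by nlinarith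
    rcases le_or_gt (z 2) 0 with hz2|hz2
    · have key : 0 ≤ z 0 * y 0 - (z 1 * y 1 + z 2 * y 2 + z 3 * y 3) := by
        nlinarith [mul_nonneg (show (0:ℤ) ≤ z 0 + z 1 by linarith)
            (show (0:ℤ) ≤ y 0 by linarith),
          mul_nonneg (show (0:ℤ) ≤ z 2 - z 1 by linarith) hm1,
          mul_nonneg (show (0:ℤ) ≤ -z 2 by linarith) hm12, t3]
      linarith
    rcases le_or_gt (z 1) 0 with hz1|hz1
    · have t2 : 0 ≤ -(z 2 * y 2) := by nlinarith
      have key : 0 ≤ z 0 * y 0 - (z 1 * y 1 + z 2 * y 2 + z 3 * y 3) := by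
        nlinarith [mul_nonneg (show (0:ℤ) ≤ z 0 + z 1 by linarith)
            (show (0:ℤ) ≤ y 0 by linarith),
          mul_nonneg (show (0:ℤ) ≤ -z 1 by linarith) hm1, t2, t3]
      linarith
    · have t2 : 0 ≤ -(z 2 * y 2) := by nlinarith
      have t1 : 0 ≤ -(z 1 * y 1) := by nlinarith
      have key : 0 ≤ z 0 * y 0 - (z 1 * y 1 + z 2 * y 2 + z 3 * y 3) := by
        nlinarith [mul_nonneg ha (show (0:ℤ) ≤ y 0 by linarith), t1, t2, t3]
      linarith

/-! ### Descent -/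

lemma ev30 {i j k : Fin (r+1)} (hi : i ≠ 0) (hj : j ≠ 0) (hk : k ≠ 0) :
    ev3 i j k 0 = 1 := by
  rw [ev3_apply, if_pos rfl, if_neg (Ne.symm hi), if_neg (Ne.symm hj), if_neg (Ne.symm hk)]
  ring

lemma z_triple (hr : 3 ≤ r) {z : Fin (r+1) → ℤ} (hz : ESemiStandard r z)
    {i j k : Fin (r+1)} (hi : 0 < (i:ℕ)) (hij : (i:ℕ) < (j:ℕ)) (hjk : (j:ℕ) < (k:ℕ)) :
    0 ≤ inter z (ev3 i j k) := by
  have hi0 : i ≠ 0 := by apply Fin.ne_of_val_ne; rw [Fin.val_zero]; omega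
  have hj0 : j ≠ 0 := by apply Fin.ne_of_val_ne; rw [Fin.val_zero]; omega
  have hk0 : k ≠ 0 := by apply Fin.ne_of_val_ne; rw [Fin.val_zero]; omega
  rw [inter_ev3 hi0 hj0 hk0]
  have hk3 : (3:ℕ) ≤ (k:ℕ) := by omega
  have e1 : -z i ≤ -z 1 := zsorted hz (by rw [fv1 hr]) (by rw [fv1 hr]; omega)
  have e2 : -z j ≤ -z 2 := zsorted hz (by rw [fv2 hr]; omega) (by rw [fv2 hr]; omega)
  have e3 : -z k ≤ -z 3 := zsorted hz (by rw [fv3 hr]; omega) (by rw [fv3 hr]; omega)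
  have := hz.2.2.2
  linarith

lemma descent (hr : 3 ≤ r) :
    ∀ n : ℕ, ∀ y : Fin (r+1) → ℤ, OrbitLP r y → (y 0).toNat ≤ n →
      ∀ z : Fin (r+1) → ℤ, ESemiStandard r z → 0 ≤ inter z y := by
  intro n
  induction n with
  | zero =>
    intro y hy h0 z hz
    have h1 := (orbit_facts hr hy).1
    omega
  | succ n IH =>
    intro y hy hn z hz
    obtain ⟨hd, hKy, hm⟩ := orbit_facts hr hy
    by_cases hcase : ∃ i j k : Fin (r+1), 0 < (i:ℕ) ∧ (i:ℕ) < (j:ℕ) ∧ (j:ℕ) < (k:ℕ) ∧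
        y 0 + y i + y j + y k < 0
    · obtain ⟨i, j, k, hi, hij, hjk, hneg⟩ := hcase
      have hi0 : i ≠ 0 := by apply Fin.ne_of_val_ne; rw [Fin.val_zero]; omega
      have hj0 : j ≠ 0 := by apply Fin.ne_of_val_ne; rw [Fin.val_zero]; omega
      have hk0 : k ≠ 0 := by apply Fin.ne_of_val_ne; rw [Fin.val_zero]; omega
      have hijne : i ≠ j := by apply Fin.ne_of_val_ne; omega
      have hikne : i ≠ k := by apply Fin.ne_of_val_ne; omega
      have hjkne : j ≠ k := by apply Fin.ne_of_val_ne; omega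
      have hye : inter y (ev3 i j k) = y 0 + y i + y j + y k := inter_ev3 hi0 hj0 hk0 y
      have hmem : InWeyl r (toEnd (reflect (ev3 i j k))) :=
        reflect_ev3_mem hr hi0 hj0 hk0 hijne hikne hjkne
      have hy' : OrbitLP r (reflect (ev3 i j k) y) := by
        obtain ⟨f, hf, hx⟩ := hy
        refine ⟨toEnd (reflect (ev3 i j k)) * f, W_mul hmem hf, ?_⟩
        rcases hx with h|h
        · left; rw [end_mul_apply, ← h]; rfl
        · right; rw [end_mul_apply, ← h]; rfl
      have hcoord : reflect (ev3 i j k) y 0 = y 0 + inter y (ev3 i j k) := by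
        rw [reflect_apply, ev30 hi0 hj0 hk0, mul_one]
      have hd' := (orbit_facts hr hy').1
      have hlt : reflect (ev3 i j k) y 0 < y 0 := by rw [hcoord, hye]; linarith
      have hrec : (reflect (ev3 i j k) y 0).toNat ≤ n := by omega
      have hIH := IH _ hy' hrec z hz
      have hze := z_triple hr hz hi hij hjk
      have hzy : inter z (reflect (ev3 i j k) y)
          = inter z y + inter y (ev3 i j k) * inter z (ev3 i j k) := by
        show inter z (y + inter y (ev3 i j k) • ev3 i j k) = _
        rw [inter_add_right, inter_smul_right]
      have hc : 0 ≤ -inter y (ev3 i j k) := by rw [hye]; linarith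
      nlinarith [mul_nonneg hc hze]
    · push_neg at hcase
      have htrip := hcase 1 2 3 (by rw [fv1 hr]; omega) (by rw [fv1 hr, fv2 hr]; omega)
        (by rw [fv2 hr, fv3 hr]; omega)
      exact descent_base hr hz hd hm hKy htrip

/-! ### Forward direction -/

lemma forward_dir (hr : 3 ≤ r) {H : Fin (r+1) → ℤ} (hS : SemiStandard r H) :
    ∀ Ex : Fin (r+1) → ℤ, LineClass r Ex ∨ PencilClass r Ex → 0 ≤ inter H Ex := by
  obtain ⟨f, hf, hz⟩ := hS
  intro Ex hEx
  have horth := W_orth hr hf H Ex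
  have horb : OrbitLP r (f Ex) := by
    rcases hEx with ⟨g, hg, rfl⟩|⟨g, hg, rfl⟩
    · exact ⟨toEnd f * toEnd g, W_mul hf hg, Or.inl rfl⟩
    · exact ⟨toEnd f * toEnd g, W_mul hf hg, Or.inr rfl⟩
  have hfin := descent hr ((f Ex) 0).toNat (f Ex) horb (le_refl _) (f H) hz
  linarith [horth ▸ hfin]

/-! ### Backward direction -/

/-- the permutation submonoid -/
def Wpsub (r : ℕ) : Submonoid (Function.End (Fin (r + 1) → ℤ)) :=
  Submonoid.closure
    { g : Function.End (Fin (r + 1) → ℤ) | ∃ i : Fin r, 0 < (i:ℕ) ∧ g = reflect (root r i) }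

lemma Wperm_le {f : Function.End (Fin (r+1) → ℤ)} (hf : f ∈ Wpsub r) : InWeyl r f := by
  rw [inweyl_iff]
  refine Submonoid.closure_le.2 ?_ hf
  rintro g ⟨i, _, rfl⟩
  exact Submonoid.subset_closure ⟨i, rfl⟩

lemma Wperm_struct {f : Function.End (Fin (r+1) → ℤ)} (hf : f ∈ Wpsub r) :
    ∃ π : Equiv.Perm (Fin (r+1)), π 0 = 0 ∧ f = gperm π := by
  induction hf using Submonoid.closure_induction with
  | mem g hg =>
    obtain ⟨i, hi, rfl⟩ := hg
    exact ⟨Equiv.swap i.castSucc i.succ,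
      swap_zero (castSucc_ne_zero (by omega)) (Fin.succ_ne_zero i),
      swap_reflect (by omega)⟩
  | one => exact ⟨Equiv.refl _, rfl, rfl⟩
  | mul g h hg hh ihg ihh =>
    obtain ⟨π, hπ0, rfl⟩ := ihg
    obtain ⟨τ, hτ0, rfl⟩ := ihh
    exact ⟨π.trans τ, by rw [Equiv.trans_apply, hπ0, hτ0], (gperm_mul π τ).symm⟩

/-- the secondary functional -/
def Tf {r : ℕ} (y : Fin (r+1) → ℤ) : ℤ := ∑ u : Fin (r+1), ((u : ℕ) : ℤ) * (-(y u))

lemma Tf_bound (x : Fin (r+1) → ℤ) (π : Equiv.Perm (Fin (r+1))) :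
    -(r : ℤ) * ∑ u, |x u| ≤ Tf (gperm π x) := by
  have h1 : ∀ u : Fin (r+1), -(r:ℤ) * |x (π u)| ≤ ((u:ℕ):ℤ) * (-(x (π u))) := by
    intro u
    have hu : ((u:ℕ):ℤ) ≤ (r:ℤ) := by
      have := u.isLt; exact_mod_cast Nat.le_of_lt_succ this
    have h0 : (0:ℤ) ≤ ((u:ℕ):ℤ) := Int.natCast_nonneg _
    have h2 : -(x (π u)) ≥ -|x (π u)| := by
      have := le_abs_self (x (π u)); linarith
    have h3 : (0:ℤ) ≤ |x (π u)| := abs_nonneg _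
    nlinarith
  have h2 : ∑ u : Fin (r+1), -(r:ℤ) * |x (π u)| ≤ Tf (gperm π x) :=
    Finset.sum_le_sum (fun u _ => h1 u)
  have h3 : ∑ u : Fin (r+1), -(r:ℤ) * |x (π u)| = -(r:ℤ) * ∑ u, |x u| := by
    rw [← Finset.mul_sum]
    congr 1
    exact Equiv.sum_comp π (fun v => |x v|)
  linarith

lemma Tf_swap (y : Fin (r+1) → ℤ) (i : Fin r) :
    Tf (y ∘ (Equiv.swap i.castSucc i.succ)) - Tf y = y i.succ - y i.castSucc := by
  set τ := Equiv.swap i.castSucc i.succ with hτ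
  have hττ : ∀ u, τ (τ u) = u := fun u => Equiv.swap_apply_self _ _ u
  have h1 : Tf (y ∘ τ) = ∑ v : Fin (r+1), ((τ v : ℕ) : ℤ) * (-(y v)) := by
    unfold Tf
    exact Fintype.sum_equiv τ _ _ (fun u => by rw [Function.comp_apply, hττ])
  have h2 : Tf (y ∘ τ) - Tf y
      = ∑ v : Fin (r+1), (((τ v : ℕ) : ℤ) - ((v : ℕ) : ℤ)) * (-(y v)) := by
    rw [h1]
    unfold Tf
    rw [← Finset.sum_sub_distrib]
    congr 1; funext v; ring
  rw [h2]
  have hzero : ∀ v ∈ Finset.univ, v ∉ ({i.castSucc, i.succ} : Finset (Fin (r+1))) →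
      (((τ v : ℕ) : ℤ) - ((v : ℕ) : ℤ)) * (-(y v)) = 0 := by
    intro v _ hv
    simp only [Finset.mem_insert, Finset.mem_singleton] at hv
    push_neg at hv
    rw [hτ, Equiv.swap_apply_of_ne_of_ne hv.1 hv.2]
    ring
  rw [← Finset.sum_subset (Finset.subset_univ _) hzero,
    Finset.sum_pair (cs_ne_succ i)]
  rw [hτ, Equiv.swap_apply_left, Equiv.swap_apply_right, Fin.val_succ, Fin.coe_castSucc]
  push_cast
  ring

lemma backward_dir (hr : 3 ≤ r) {H : Fin (r+1) → ℤ}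
    (hE : ∀ Ex : Fin (r+1) → ℤ, LineClass r Ex ∨ PencilClass r Ex → 0 ≤ inter H Ex) :
    SemiStandard r H := by
  classical
  -- every Weyl image has nonnegative degree
  have hP0 : ∀ f : Function.End (Fin (r+1) → ℤ), InWeyl r f → 0 ≤ (f H) 0 := by
    intro f hf
    obtain ⟨f', hf', _, hinv2⟩ := W_inv hr hf
    have h1 : inter (f H) (Eb r 0) = inter H (f' (Eb r 0)) := W_transport hr hf hf' hinv2 _ _
    have h2 : inter (f H) (Eb r 0) = (f H) 0 := by rw [inter_Eb_right, if_pos rfl]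
    have h3 : 0 ≤ inter H (f' (Eb r 0)) := hE _ (Or.inl ⟨f', hf', rfl⟩)
    linarith
  -- minimize the degree
  obtain ⟨d₀, ⟨f₀, hf₀, hd₀⟩, hmin⟩ := Int.exists_least_of_bdd
    (P := fun t => ∃ f : Function.End (Fin (r + 1) → ℤ), InWeyl r f ∧ (f H) 0 = t)
    ⟨0, fun t ⟨f, hf, ht⟩ => ht ▸ hP0 f hf⟩ ⟨H 0, id, W_one, rfl⟩
  set x₀ := f₀ H with hx₀
  -- minimize the secondary functional over permutations
  have hTbdd : ∃ b : ℤ, ∀ t : ℤ, (∃ g, g ∈ Wpsub r ∧ t = Tf (g x₀)) → b ≤ t := by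
    refine ⟨-(r:ℤ) * ∑ u, |x₀ u|, ?_⟩
    rintro t ⟨g, hg, rfl⟩
    obtain ⟨π, _, rfl⟩ := Wperm_struct hg
    exact Tf_bound x₀ π
  obtain ⟨T₀, ⟨g₀, hg₀, hT₀⟩, hTmin⟩ := Int.exists_least_of_bdd
    (P := fun t => ∃ g, g ∈ Wpsub r ∧ t = Tf (g x₀)) hTbdd
    ⟨Tf x₀, id, (Wpsub r).one_mem, rfl⟩
  obtain ⟨π₀, hπ₀0, hg₀eq⟩ := Wperm_struct hg₀
  set y := g₀ x₀ with hy
  have hy0 : y 0 = d₀ := by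
    rw [hy, hg₀eq]
    show x₀ (π₀ 0) = d₀
    rw [hπ₀0]
    exact hd₀
  have hgW : InWeyl r g₀ := Wperm_le hg₀
  have hGmem : InWeyl r (g₀ * f₀) := W_mul hgW hf₀
  have hyG : y = (g₀ * f₀) H := rfl
  -- (1) degree nonneg
  have h1 : 0 ≤ y 0 := by rw [hy0, ← hd₀]; exact hP0 f₀ hf₀
  -- (2) pencil condition
  have h2 : 0 ≤ y 0 + y 1 := by
    obtain ⟨G', hG', _, hi2⟩ := W_inv hr hGmem
    have e1 : inter ((g₀ * f₀) H) (Eb r 0 - Eb r 1) = inter H (G' (Eb r 0 - Eb r 1)) :=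
      W_transport hr hGmem hG' hi2 _ _
    have e2 : inter y (Eb r 0 - Eb r 1) = y 0 + y 1 := by
      rw [inter_sub_right, inter_Eb_right, inter_Eb_right, if_pos rfl, if_neg (fne1 hr)]
      ring
    have e3 : 0 ≤ inter H (G' (Eb r 0 - Eb r 1)) := hE _ (Or.inr ⟨G', hG', rfl⟩)
    rw [← hyG] at e1
    linarith [e1 ▸ e3]
  -- (3) adjacent sortedness
  have hadj : ∀ i : Fin r, 0 < (i:ℕ) → y i.castSucc ≤ y i.succ := by
    intro i hi
    have hmemσ : toEnd (reflect (root r i)) * g₀ ∈ Wpsub r :=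
      (Wpsub r).mul_mem (Submonoid.subset_closure ⟨i, hi, rfl⟩) hg₀
    have hTle := hTmin (Tf ((toEnd (reflect (root r i)) * g₀) x₀)) ⟨_, hmemσ, rfl⟩
    have e1 : (toEnd (reflect (root r i)) * g₀) x₀ = y ∘ (Equiv.swap i.castSucc i.succ) := by
      show reflect (root r i) (g₀ x₀) = _
      rw [swap_reflect (by omega)]
      rfl
    rw [e1] at hTle
    have e2 := Tf_swap y i
    have e3 : T₀ = Tf y := hT₀
    linarith
  -- (4) full sortedness
  have hstep : ∀ m : ℕ, ∀ i j : Fin (r+1), 1 ≤ (i:ℕ) → (i:ℕ) + m = (j:ℕ) → y i ≤ y j := by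
    intro m
    induction m with
    | zero =>
      intro i j h1' h2'
      have : i = j := Fin.ext (by omega)
      rw [this]
    | succ m ih =>
      intro i j h1' h2'
      have hjr : (j:ℕ) < r + 1 := j.isLt
      set j' : Fin (r+1) := ⟨(i:ℕ) + m, by omega⟩ with hj'
      have e1 : y i ≤ y j' := ih i j' h1' rfl
      set t : Fin r := ⟨(i:ℕ) + m, by omega⟩ with ht
      have e2 : t.castSucc = j' := Fin.ext rfl
      have e3 : t.succ = j := Fin.ext (by rw [Fin.val_succ]; show (i:ℕ) + m + 1 = (j:ℕ); omega)
      have e4 := hadj t (by show 0 < (i:ℕ) + m; omega)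
      rw [e2, e3] at e4
      linarith
  have hsort : ∀ i j : Fin (r+1), 1 ≤ (i:ℕ) → i ≤ j → -(y j) ≤ -(y i) := by
    intro i j hi hij
    have hij' : (i:ℕ) ≤ (j:ℕ) := Fin.le_def.mp hij
    have := hstep ((j:ℕ) - (i:ℕ)) i j hi (by omega)
    linarith
  -- (5) triple condition
  have i0r : (0:ℕ) < r := by omega
  have h5 : 0 ≤ y 0 + y 1 + y 2 + y 3 := by
    have hσ0 : InWeyl r (toEnd (reflect (root r ⟨0, i0r⟩))) := W_gen _
    have hmem2 : InWeyl r (toEnd (reflect (root r ⟨0, i0r⟩)) * (g₀ * f₀)) := W_mul hσ0 hGmem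
    have hval : ((toEnd (reflect (root r ⟨0, i0r⟩)) * (g₀ * f₀)) H) 0
        = y 0 + inter y (root r ⟨0, i0r⟩) := by
      show (reflect (root r ⟨0, i0r⟩) y) 0 = _
      have hcoordroot : root r ⟨0, i0r⟩ 0 = 1 := by
        rw [root_zero_eq hr rfl]
        exact rz0 hr
      rw [reflect_apply, hcoordroot, mul_one]
    have hge := hmin (((toEnd (reflect (root r ⟨0, i0r⟩)) * (g₀ * f₀)) H) 0) ⟨_, hmem2, rfl⟩
    have hc : inter y (root r ⟨0, i0r⟩) = y 0 + y 1 + y 2 + y 3 := inter_root_zero hr rfl y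
    rw [hval, hc, hy0] at hge
    linarith
  refine ⟨g₀ * f₀, hGmem, ?_, ?_, ?_, ?_⟩
  · show (0:ℤ) ≤ y 0
    exact h1
  · show -(y 1) ≤ y 0
    linarith
  · show ∀ i j : Fin (r+1), 1 ≤ (i:ℕ) → i ≤ j → -(y j) ≤ -(y i)
    exact hsort
  · show -(y 1) + -(y 2) + -(y 3) ≤ y 0
    linarith

end Toolkit

/-- A class `H` in `Pic_r` is semi-standard if and only if `H·E ≥ 0` for every line
class `E` and every pencil class `E`. -/
theorem semistandard_iff_nonneg_on_line_and_pencil (r : ℕ) (hr : 3 ≤ r)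
    (H : Fin (r + 1) → ℤ) :
    SemiStandard r H ↔
      ∀ Ex : Fin (r + 1) → ℤ, LineClass r Ex ∨ PencilClass r Ex → 0 ≤ inter H Ex := by
  constructor
  · exact fun hS => forward_dir hr hS
  · exact fun h => backward_dir hr h
end
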